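/- arXiv:2511.04645 — 15 statements merged into one kernel-verified Lean document; each statement's English description precedes it below -/
import Mathlib

section
/- Let E be a finite-dimensional real normed vector space and let D ⊆ E be an open, bounded, convex subset with 0 ∈ D. Then closure(D) is strictly convex (i.e., for any two distinct points of closure(D), the open segment joining them is contained in the interior of closure(D)) if and only if for all nonzero v, w ∈ E such that w is not a positive scalar multiple of v one has the strict triangle inequality gauge D (v + w) < gauge D v + gauge D w. -/
open Set

/-- For an open convex set, the interior of the closure is the set itself. -/
lemma aux_interior_closure_subset {E : Type*} [NormedAddCommGroup E] [NormedSpace ℝ E]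
    (D : Set E) (hDo : IsOpen D) (hDc : Convex ℝ D) (hD0 : (0 : E) ∈ D) {z : E}
    (hz : z ∈ interior (closure D)) : z ∈ D := by
  have hc : ContinuousAt (fun t : ℝ => t • z) 1 :=
    (continuous_id.smul continuous_const).continuousAt
  have hev : ∀ᶠ t : ℝ in nhds 1, t • z ∈ closure D := by
    have h1 : (fun t : ℝ => t • z) 1 = z := one_smul ℝ z
    have := hc.eventually_mem (show interior (closure D) ∈ nhds ((1:ℝ) • z) by
      rw [one_smul]; exact isOpen_interior.mem_nhds hz)
    exact this.mono fun t ht => interior_subset ht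
  obtain ⟨t, ht, ht1⟩ : ∃ t : ℝ, t • z ∈ closure D ∧ 1 < t := by
    have h2 : ∀ᶠ t : ℝ in nhdsWithin 1 (Set.Ioi 1), t • z ∈ closure D :=
      hev.filter_mono nhdsWithin_le_nhds
    have h3 : ∀ᶠ t : ℝ in nhdsWithin 1 (Set.Ioi 1), 1 < t :=
      eventually_mem_nhdsWithin
    exact (h2.and h3).exists
  have ht0 : (0:ℝ) < t := lt_trans one_pos ht1
  have h0 : (0:E) ∈ interior D := by rwa [hDo.interior_eq]
  have hcomb := hDc.combo_closure_interior_mem_interior ht h0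
    (a := t⁻¹) (b := 1 - t⁻¹) (by positivity)
    (by rw [sub_pos]; exact inv_lt_one_of_one_lt₀ ht1) (by ring)
  have heq : t⁻¹ • (t • z) + (1 - t⁻¹) • (0:E) = z := by
    rw [smul_smul, inv_mul_cancel₀ ht0.ne', one_smul, smul_zero, add_zero]
  rw [heq, hDo.interior_eq] at hcomb
  exact hcomb

/-- For an open, bounded, convex set `D` containing `0` in a finite-dimensional real
normed space, the closure of `D` is strictly convex if and only if the gauge of `D`
satisfies the strict triangle inequality for nonzero vectors `v, w` with `w` not a
positive scalar multiple of `v`. -/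
theorem stmt2 {E : Type*} [NormedAddCommGroup E] [NormedSpace ℝ E] [FiniteDimensional ℝ E]
    (D : Set E) (hDo : IsOpen D) (hDb : Bornology.IsBounded D) (hDc : Convex ℝ D)
    (hD0 : (0 : E) ∈ D) :
    StrictConvex ℝ (closure D) ↔
      ∀ v w : E, v ≠ 0 → w ≠ 0 → (∀ c : ℝ, 0 < c → w ≠ c • v) →
        gauge D (v + w) < gauge D v + gauge D w := by
  have hnhds : D ∈ nhds (0 : E) := hDo.mem_nhds hD0
  have habs : Absorbent ℝ D := absorbent_nhds_zero hnhds
  have hvb : Bornology.IsVonNBounded ℝ D := (NormedSpace.isVonNBounded_iff ℝ).mpr hDb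
  have hpos : ∀ x : E, x ≠ 0 → 0 < gauge D x := fun x hx => (gauge_pos habs hvb).mpr hx
  constructor
  · intro h v w hv hw hcw
    set gv := gauge D v with hgv
    set gw := gauge D w with hgw
    have hgvpos : 0 < gv := hpos v hv
    have hgwpos : 0 < gw := hpos w hw
    set x := gv⁻¹ • v with hx
    set y := gw⁻¹ • w with hy
    have hxc : x ∈ closure D := by
      rw [← gauge_le_one_iff_mem_closure hDc hnhds, hx,
        gauge_smul_of_nonneg (inv_nonneg.mpr hgvpos.le), smul_eq_mul,
        inv_mul_cancel₀ hgvpos.ne']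
    have hyc : y ∈ closure D := by
      rw [← gauge_le_one_iff_mem_closure hDc hnhds, hy,
        gauge_smul_of_nonneg (inv_nonneg.mpr hgwpos.le), smul_eq_mul,
        inv_mul_cancel₀ hgwpos.ne']
    have hne : x ≠ y := by
      intro heq
      apply hcw (gw * gv⁻¹) (by positivity)
      have hw' : w = gw • (gv⁻¹ • v) := by
        rw [← hx, heq, hy, smul_smul, mul_inv_cancel₀ hgwpos.ne', one_smul]
      rw [smul_smul] at hw'
      exact hw'
    have ha : (0:ℝ) < gv / (gv + gw) := by positivity
    have hb : (0:ℝ) < gw / (gv + gw) := by positivity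
    have hab : gv / (gv + gw) + gw / (gv + gw) = 1 := by
      field_simp
    have hcomb := h hxc hyc hne ha hb hab
    have heq : (gv / (gv + gw)) • x + (gw / (gv + gw)) • y = (gv + gw)⁻¹ • (v + w) := by
      rw [hx, hy, smul_smul, smul_smul, smul_add]
      congr 1
      · congr 1
        field_simp
      · congr 1
        field_simp
    rw [heq] at hcomb
    have hmem : (gv + gw)⁻¹ • (v + w) ∈ D :=
      aux_interior_closure_subset D hDo hDc hD0 hcomb
    have hlt : gauge D ((gv + gw)⁻¹ • (v + w)) < 1 :=
      gauge_lt_one_of_mem_of_isOpen hDo hmem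
    rw [gauge_smul_of_nonneg (by positivity), smul_eq_mul] at hlt
    have hsum : (0:ℝ) < gv + gw := by positivity
    calc gauge D (v + w) = (gv + gw) * ((gv + gw)⁻¹ * gauge D (v + w)) := by
          rw [← mul_assoc, mul_inv_cancel₀ hsum.ne', one_mul]
      _ < (gv + gw) * 1 := by exact mul_lt_mul_of_pos_left hlt hsum
      _ = gv + gw := mul_one _
  · intro h x hx y hy hne a b ha hb hab
    -- suffices to show a • x + b • y ∈ D
    suffices hmem : a • x + b • y ∈ D by
      exact hDo.subset_interior_iff.mpr subset_closure hmem
    have hgx : gauge D x ≤ 1 := (gauge_le_one_iff_mem_closure hDc hnhds).mpr hx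
    have hgy : gauge D y ≤ 1 := (gauge_le_one_iff_mem_closure hDc hnhds).mpr hy
    have hDeq : {z : E | gauge D z < 1} = D := gauge_lt_one_eq_self_of_isOpen hDc hD0 hDo
    suffices hlt : gauge D (a • x + b • y) < 1 by
      rw [← hDeq]; exact hlt
    rcases eq_or_ne x 0 with rfl | hx0
    · rw [smul_zero, zero_add, gauge_smul_of_nonneg hb.le, smul_eq_mul]
      calc b * gauge D y ≤ b * 1 := by
            exact mul_le_mul_of_nonneg_left hgy hb.le
        _ = b := mul_one b
        _ < 1 := by linarith
    rcases eq_or_ne y 0 with rfl | hy0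
    · rw [smul_zero, add_zero, gauge_smul_of_nonneg ha.le, smul_eq_mul]
      calc a * gauge D x ≤ a * 1 := mul_le_mul_of_nonneg_left hgx ha.le
        _ = a := mul_one a
        _ < 1 := by linarith
    by_cases hcol : ∃ c : ℝ, 0 < c ∧ b • y = c • (a • x)
    · obtain ⟨c, hc, hcy⟩ := hcol
      -- y = (c * a / b) • x
      have hyx : y = (c * a / b) • x := by
        have := congrArg (fun z => b⁻¹ • z) hcy
        simp only [smul_smul, inv_mul_cancel₀ hb.ne', one_smul] at this
        rw [this]
        congr 1
        field_simp
      set t := c * a / b with htdef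
      have ht : 0 < t := by positivity
      have htne1 : t ≠ 1 := by
        intro h1
        apply hne
        rw [hyx, h1, one_smul]
      have hgyx : gauge D y = t * gauge D x := by
        rw [hyx, gauge_smul_of_nonneg ht.le, smul_eq_mul]
      have hkey : a • x + b • y = (a + b * t) • x := by
        rw [hyx, smul_smul, ← add_smul]
      rw [hkey, gauge_smul_of_nonneg (by positivity), smul_eq_mul]
      have hexp : (a + b * t) * gauge D x = a * gauge D x + b * gauge D y := by
        rw [hgyx]; ring
      rw [hexp]
      -- not both gauge x = 1 and gauge y = 1
      have hnb : gauge D x < 1 ∨ gauge D y < 1 := by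
        by_contra hcon
        push_neg at hcon
        have h1 : gauge D x = 1 := le_antisymm hgx hcon.1
        have h2 : gauge D y = 1 := le_antisymm hgy hcon.2
        rw [hgyx, h1, mul_one] at h2
        exact htne1 h2
      rcases hnb with h1 | h1
      · have hgx0 : 0 ≤ gauge D y := gauge_nonneg _
        nlinarith
      · have hgx0 : 0 ≤ gauge D x := gauge_nonneg _
        nlinarith
    · push_neg at hcol
      have hax : a • x ≠ 0 := smul_ne_zero ha.ne' hx0
      have hby : b • y ≠ 0 := smul_ne_zero hb.ne' hy0
      have := h (a • x) (b • y) hax hby fun c hc => hcol c hc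
      rw [gauge_smul_of_nonneg ha.le, gauge_smul_of_nonneg hb.le, smul_eq_mul,
        smul_eq_mul] at this
      calc gauge D (a • x + b • y) < a * gauge D x + b * gauge D y := this
        _ ≤ a * 1 + b * 1 := by
            apply add_le_add
            · exact mul_le_mul_of_nonneg_left hgx ha.le
            · exact mul_le_mul_of_nonneg_left hgy hb.le
        _ = 1 := by linarith
end

section
/- Let E be a finite-dimensional real normed vector space and let F : E → ℝ be a non-symmetric norm. Then the function v ↦ F(v)² is C² on some neighborhood of 0 if and only if F comes from a Euclidean scalar product, i.e., there exists a symmetric positive-definite bilinear form B : E × E → ℝ such that F(v)² = B(v, v) for all v ∈ E. -/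
/-- A non-symmetric norm `F` on a finite-dimensional real normed space has `F²` of
class `C²` on a neighborhood of `0` if and only if `F` comes from a Euclidean scalar
product, i.e. `F(v)² = B(v, v)` for a symmetric positive-definite bilinear form `B`. -/
theorem stmt3 {E : Type*} [NormedAddCommGroup E] [NormedSpace ℝ E] [FiniteDimensional ℝ E]
    (F : E → ℝ)
    (hF0 : ∀ v : E, 0 ≤ F v) (hFeq : ∀ v : E, F v = 0 ↔ v = 0)
    (hFhom : ∀ c : ℝ, 0 ≤ c → ∀ v : E, F (c • v) = c * F v)
    (hFtri : ∀ v w : E, F (v + w) ≤ F v + F w) :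
    (∃ U ∈ nhds (0 : E), ContDiffOn ℝ 2 (fun v => (F v) ^ 2) U) ↔
      (∃ B : E →ₗ[ℝ] E →ₗ[ℝ] ℝ, (∀ v w : E, B v w = B w v) ∧
        (∀ v : E, v ≠ 0 → 0 < B v v) ∧ (∀ v : E, (F v) ^ 2 = B v v)) := by
  have hF00 : F 0 = 0 := (hFeq 0).mpr rfl
  constructor
  · rintro ⟨U, hU, hC⟩
    obtain ⟨V, hVU, hV, h0V⟩ := mem_nhds_iff.mp hU
    set g : E → ℝ := fun v => F v ^ 2 with hg
    have hCg : ContDiffOn ℝ 2 g V := hC.mono hVU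
    have hdiff : ∀ x ∈ V, DifferentiableAt ℝ g x := fun x hx =>
      (hCg.differentiableOn two_ne_zero).differentiableAt (hV.mem_nhds hx)
    have hfd : ContDiffOn ℝ 1 (fderiv ℝ g) V := hCg.fderiv_of_isOpen hV (by norm_num)
    have hfd0 : DifferentiableAt ℝ (fderiv ℝ g) 0 :=
      (hfd.contDiffAt (hV.mem_nhds h0V)).differentiableAt one_ne_zero
    set f'' := fderiv ℝ (fderiv ℝ g) 0 with hf''def
    have hsym : ∀ v w, f'' v w = f'' w v := by
      intro v w
      exact second_derivative_symmetric_of_eventually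
        (Filter.eventually_of_mem (hV.mem_nhds h0V) fun y hy => (hdiff y hy).hasFDerivAt)
        hfd0.hasFDerivAt v w
    have hmin : IsLocalMin g 0 := Filter.Eventually.of_forall fun y => by
      simpa [hg, hF00] using sq_nonneg (F y)
    have hder0 : fderiv ℝ g 0 = 0 := hmin.fderiv_eq_zero
    -- key identity
    have key : ∀ v : E, f'' v v = 2 * g v := by
      intro v
      set a := g v with ha
      set ψ : ℝ → ℝ := fun t => fderiv ℝ g (t • v) v with hψ
      have h1 : HasDerivAt (fun t : ℝ => t • v) v 0 := by
        simpa using (hasDerivAt_id (0 : ℝ)).smul_const v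
      have h2 : HasDerivAt (fun t : ℝ => fderiv ℝ g (t • v)) (f'' v) 0 := by
        have hl : HasFDerivAt (fderiv ℝ g) f'' ((fun t : ℝ => t • v) 0) := by
          simpa using hfd0.hasFDerivAt
        exact hl.comp_hasDerivAt 0 h1
      have h3 : HasDerivAt ψ (f'' v v) 0 := by
        have := h2.clm_apply (hasDerivAt_const (0 : ℝ) v)
        simpa using this
      have hVev : ∀ᶠ t : ℝ in nhds 0, t • v ∈ V := by
        have hts : Filter.Tendsto (fun t : ℝ => t • v) (nhds 0) (nhds 0) := by
          have := (show Continuous fun t : ℝ => t • v by fun_prop).tendsto (0 : ℝ)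
          simpa only [zero_smul] using this
        exact hts.eventually_mem (hV.mem_nhds h0V)
      have hψt : ∀ᶠ t : ℝ in nhdsWithin 0 (Set.Ioi 0), ψ t = 2 * t * a := by
        filter_upwards [hVev.filter_mono nhdsWithin_le_nhds, self_mem_nhdsWithin]
          with t htV ht
        have hφt : HasDerivAt (fun s : ℝ => g (s • v)) (ψ t) t := by
          have h1' : HasDerivAt (fun s : ℝ => s • v) v t := by
            simpa using (hasDerivAt_id t).smul_const v
          exact (hdiff _ htV).hasFDerivAt.comp_hasDerivAt t h1'
        have hφt' : HasDerivAt (fun s : ℝ => g (s • v)) (2 * t * a) t := by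
          have hbase : HasDerivAt (fun s : ℝ => s ^ 2 * a) (2 * t * a) t := by
            simpa using (hasDerivAt_pow 2 t).mul_const a
          have hEq : (fun s : ℝ => s ^ 2 * a) =ᶠ[nhds t] fun s : ℝ => g (s • v) := by
            filter_upwards [eventually_gt_nhds ht] with s hs
            have : F (s • v) = s * F v := hFhom s hs.le v
            simp only [hg, this, ha]
            ring
          exact hbase.congr_of_eventuallyEq hEq.symm
        rw [hφt'.unique hφt]
      have hψ0 : ψ 0 = 0 := by simp [hψ, hder0]
      have hslope : Filter.Tendsto (slope ψ 0) (nhdsWithin 0 (Set.Ioi 0))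
          (nhds (f'' v v)) :=
        (hasDerivAt_iff_tendsto_slope.mp h3).mono_left
          (nhdsWithin_mono 0 fun t ht => ne_of_gt ht)
      have hconst : Filter.Tendsto (fun _ : ℝ => 2 * a) (nhdsWithin 0 (Set.Ioi 0))
          (nhds (f'' v v)) := by
        apply hslope.congr'
        filter_upwards [hψt, self_mem_nhdsWithin] with t hψt' ht
        have ht0 : t ≠ 0 := ne_of_gt ht
        rw [slope_def_field, hψt', hψ0]
        field_simp
        ring
      have := tendsto_nhds_unique hconst tendsto_const_nhds
      linarith [this]
    set B₀ : E →ₗ[ℝ] E →ₗ[ℝ] ℝ :=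
      (2⁻¹ : ℝ) • ((ContinuousLinearMap.coeLM ℝ).comp f''.toLinearMap) with hB₀
    have happ : ∀ w u : E, B₀ w u = 2⁻¹ * f'' w u := fun _ _ => rfl
    refine ⟨B₀, ?_, ?_, ?_⟩
    · intro v w
      rw [happ, happ, hsym v w]
    · intro v hv
      have hFv : 0 < F v := lt_of_le_of_ne (hF0 v) fun h => hv ((hFeq v).mp h.symm)
      have h2' : f'' v v = 2 * F v ^ 2 := key v
      rw [happ, h2']
      nlinarith
    · intro v
      have h2' : f'' v v = 2 * F v ^ 2 := key v
      rw [happ, h2']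
      ring
  · rintro ⟨B, hBsym, hBpos, hBeq⟩
    refine ⟨Set.univ, Filter.univ_mem, ?_⟩
    have hC : ContDiff ℝ 2 fun v => F v ^ 2 := by
      let C : E →ₗ[ℝ] E →L[ℝ] ℝ :=
        (LinearMap.toContinuousLinearMap : (E →ₗ[ℝ] ℝ) ≃ₗ[ℝ] (E →L[ℝ] ℝ)).toLinearMap.comp B
      let c : E →L[ℝ] E →L[ℝ] ℝ := LinearMap.toContinuousLinearMap C
      have hc : ContDiff ℝ 2 fun v => (c v) v :=
        (c.contDiff).clm_apply contDiff_id
      have heq : (fun v => F v ^ 2) = fun v => (c v) v := by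
        funext v
        simp [c, C, hBeq v]
      rw [heq]
      exact hc
    exact hC.contDiffOn
end

section
/- Let E be a finite-dimensional real normed vector space and let A ⊆ E be an open convex salient cone. Then A admits a timelike linear functional: there exists a linear functional ω : E → ℝ such that ω(v) > 0 for every v ∈ closure(A) with v ≠ 0. (Equivalently, the hyperplane ker ω is spacelike: it meets closure(A) only at 0.) -/
/-- Every open convex salient cone in a finite-dimensional real normed space admits a
timelike linear functional: one which is positive on all nonzero vectors of the
closure of the cone. -/
theorem stmt5 {E : Type*} [NormedAddCommGroup E] [NormedSpace ℝ E] [FiniteDimensional ℝ E]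
    (A : Set E) (hne : A.Nonempty) (hAo : IsOpen A) (hAc : Convex ℝ A)
    (hcone : ∀ v ∈ A, ∀ c : ℝ, 0 < c → c • v ∈ A)
    (hsal : closure A ∩ (-(closure A)) ⊆ {0}) :
    ∃ ω : E →ₗ[ℝ] ℝ, ∀ v ∈ closure A, v ≠ 0 → 0 < ω v := by
  classical
  set B := closure A with hB
  have hBconv : Convex ℝ B := hAc.closure
  have hBclosed : IsClosed B := isClosed_closure
  have h0B : (0 : E) ∈ B := by
    obtain ⟨a, ha⟩ := hne
    have h2 : Filter.Tendsto (fun n : ℕ => ((n : ℝ) + 1)⁻¹ • a) Filter.atTop (nhds 0) := by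
      simpa [one_div] using (tendsto_one_div_add_atTop_nhds_zero_nat (𝕜 := ℝ)).smul_const a
    refine mem_closure_of_tendsto h2 (Filter.Eventually.of_forall fun n => ?_)
    exact hcone a ha _ (by positivity)
  have hBcone : ∀ b ∈ B, ∀ c : ℝ, 0 < c → c • b ∈ B := fun b hb c hc =>
    map_mem_closure (continuous_const_smul c) hb (fun x hx => hcone x hx c hc)
  have key : ∀ v : E, v ∈ B → v ≠ 0 → ∃ f : E →L[ℝ] ℝ, 0 < f v ∧ ∀ b ∈ B, 0 ≤ f b := by
    intro v hv hv0
    have hnv : -v ∉ B := by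
      intro h
      have hmem : v ∈ closure A ∩ (-(closure A)) := ⟨hv, by simpa using h⟩
      exact hv0 (hsal hmem)
    obtain ⟨f, u, hfu, hfb⟩ := geometric_hahn_banach_point_closed hBconv hBclosed hnv
    have hu0 : u < 0 := by simpa using hfb 0 h0B
    have hfv : 0 < f v := by
      have : -(f v) < u := by simpa using hfu
      linarith
    refine ⟨f, hfv, fun b hb => ?_⟩
    by_contra hneg
    push_neg at hneg
    have hfb0 : f b < 0 := hneg
    have hc : 0 < 2 * u / f b := div_pos_of_neg_of_neg (by linarith) hfb0
    have := hfb _ (hBcone b hb _ hc)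
    rw [map_smul, smul_eq_mul, div_mul_cancel₀ _ (ne_of_lt hfb0)] at this
    linarith
  choose! f hf1 hf2 using key
  set K := B ∩ Metric.sphere (0 : E) 1 with hKdef
  have hKc : IsCompact K := (isCompact_sphere 0 1).inter_left hBclosed
  have hKprop : ∀ v ∈ K, v ∈ B ∧ v ≠ 0 := by
    rintro v ⟨hvB, hvs⟩
    refine ⟨hvB, fun h => ?_⟩
    rw [Metric.mem_sphere, dist_zero_right, h] at hvs
    simp at hvs
  have hcover : K ⊆ ⋃ v ∈ K, {x : E | 0 < f v x} := by
    intro v hv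
    obtain ⟨hvB, hv0⟩ := hKprop v hv
    exact Set.mem_biUnion hv (hf1 v hvB hv0)
  obtain ⟨t, htK, htfin, htcov⟩ := hKc.elim_finite_subcover_image
    (fun v _ => isOpen_lt continuous_const (f v).continuous) hcover
  refine ⟨∑ v ∈ htfin.toFinset, (f v : E →ₗ[ℝ] ℝ), fun v hvB hv0 => ?_⟩
  have hnv : (0 : ℝ) < ‖v‖ := norm_pos_iff.mpr hv0
  set w : E := ‖v‖⁻¹ • v with hw
  have hwB : w ∈ B := hBcone v hvB _ (inv_pos.mpr hnv)
  have hwK : w ∈ K := by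
    refine ⟨hwB, ?_⟩
    rw [Metric.mem_sphere, dist_zero_right, hw, norm_smul, norm_inv, norm_norm]
    field_simp
  obtain ⟨i, hit, hiw⟩ : ∃ i ∈ t, 0 < f i w := by
    have := htcov hwK
    simpa using this
  have hpos : 0 < ∑ u ∈ htfin.toFinset, f u w := by
    refine Finset.sum_pos' (fun j hj => ?_) ⟨i, htfin.mem_toFinset.mpr hit, hiw⟩
    have hjK : j ∈ K := htK (htfin.mem_toFinset.mp hj)
    obtain ⟨hjB, hj0⟩ := hKprop j hjK
    exact hf2 j hjB hj0 w hwB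
  have hvw : v = ‖v‖ • w := by rw [hw, smul_inv_smul₀ (ne_of_gt hnv)]
  rw [hvw, map_smul, smul_eq_mul]
  have h4 : (∑ u ∈ htfin.toFinset, (f u : E →ₗ[ℝ] ℝ)) w = ∑ u ∈ htfin.toFinset, f u w := by
    simp [LinearMap.sum_apply]
  rw [h4]
  exact mul_pos hnv hpos
end

section
/- Let E be a finite-dimensional real normed vector space, let A ⊆ E be an open convex salient cone, and let ω : E → ℝ be a linear functional whose kernel is spacelike, i.e., ker ω ∩ (closure(A) ∖ {0}) = ∅. Then either ω(v) > 0 for all v ∈ closure(A) ∖ {0}, or ω(v) < 0 for all v ∈ closure(A) ∖ {0}. -/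
/-- If the kernel of a linear functional `ω` is spacelike for an open convex salient
cone `A` (it meets the closure of `A` only at `0`), then `ω` has a constant sign on
the nonzero vectors of the closure of `A`. -/
theorem stmt6 {E : Type*} [NormedAddCommGroup E] [NormedSpace ℝ E] [FiniteDimensional ℝ E]
    (A : Set E) (hne : A.Nonempty) (hAo : IsOpen A) (hAc : Convex ℝ A)
    (hcone : ∀ v ∈ A, ∀ c : ℝ, 0 < c → c • v ∈ A)
    (hsal : closure A ∩ (-(closure A)) ⊆ {0})
    (ω : E →ₗ[ℝ] ℝ)
    (hker : ∀ v ∈ closure A, v ≠ 0 → ω v ≠ 0) :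
    (∀ v ∈ closure A, v ≠ 0 → 0 < ω v) ∨ (∀ v ∈ closure A, v ≠ 0 → ω v < 0) := by
  by_cases htriv : ∀ v ∈ closure A, v = 0
  · exact Or.inl fun v hv hv0 => absurd (htriv v hv) hv0
  push_neg at htriv
  obtain ⟨a, ha⟩ := hne
  -- 0 is not in A
  have h0 : (0 : E) ∉ A := by
    intro h0
    obtain ⟨w, hw, hw0⟩ := htriv
    obtain ⟨ε, hε, hball⟩ := Metric.isOpen_iff.mp hAo 0 h0
    set u : E := (ε / (2 * ‖w‖)) • w with hu
    have hwn : 0 < ‖w‖ := norm_pos_iff.mpr hw0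
    have hc : 0 < ε / (2 * ‖w‖) := by positivity
    have hun : ‖u‖ < ε := by
      rw [hu, norm_smul, Real.norm_eq_abs, abs_of_pos hc]
      have heq : ε / (2 * ‖w‖) * ‖w‖ = ε / 2 := by field_simp
      rw [heq]; linarith
    have huA : u ∈ Metric.ball (0 : E) ε := by simpa [Metric.mem_ball] using hun
    have hnuA : -u ∈ Metric.ball (0 : E) ε := by
      simpa [Metric.mem_ball] using hun
    have hu0 : u ≠ 0 := smul_ne_zero (ne_of_gt hc) hw0
    have : u ∈ closure A ∩ (-(closure A)) :=
      ⟨subset_closure (hball huA), by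
        simpa using subset_closure (hball hnuA)⟩
    exact hu0 (hsal this)
  have ha0 : a ≠ 0 := fun h => h0 (h ▸ ha)
  have haω : ω a ≠ 0 := hker a (subset_closure ha) ha0
  -- key: ω a * ω x > 0 for all nonzero x in closure A
  have key : ∀ x ∈ closure A, x ≠ 0 → 0 < ω a * ω x := by
    intro x hx hx0
    have hxω : ω x ≠ 0 := hker x hx hx0
    by_contra hcon
    have hneg : ω a * ω x < 0 := lt_of_le_of_ne (not_lt.mp hcon) (mul_ne_zero haω hxω)
    set t : ℝ := ω a / (ω a - ω x) with htdef
    have hd : ω a - ω x ≠ 0 := by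
      intro h
      have h2 : ω a = ω x := by linarith
      rw [← h2] at hneg
      nlinarith [mul_self_nonneg (ω a)]
    have ht : 0 < t ∧ t < 1 := by
      rcases lt_or_gt_of_ne haω with h1 | h1
      · have h2 : 0 < ω x := by nlinarith
        constructor
        · apply div_pos_of_neg_of_neg h1; linarith
        · rw [div_lt_one_of_neg (by linarith)]; linarith
      · have h2 : ω x < 0 := by nlinarith
        constructor
        · apply div_pos h1; linarith
        · rw [div_lt_one (by linarith)]; linarith
    have hz : (1 - t) • a + t • x ∈ A := by
      have := hAc.openSegment_interior_closure_subset_interior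
        (by rwa [hAo.interior_eq]) hx
        (⟨1 - t, t, by linarith [ht.2], ht.1, by ring, rfl⟩ :
          (1 - t) • a + t • x ∈ openSegment ℝ a x)
      rwa [hAo.interior_eq] at this
    have hz0 : (1 - t) • a + t • x ≠ 0 := fun h => h0 (h ▸ hz)
    have hωz : ω ((1 - t) • a + t • x) ≠ 0 := hker _ (subset_closure hz) hz0
    apply hωz
    rw [map_add, map_smul, map_smul, smul_eq_mul, smul_eq_mul, htdef]
    field_simp
    ring
  rcases lt_or_gt_of_ne haω with h1 | h1
  · right
    intro v hv hv0
    nlinarith [key v hv hv0]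
  · left
    intro v hv hv0
    nlinarith [key v hv hv0]
end

section
/- Let E be a finite-dimensional real normed vector space and let A ⊆ E be a nonempty open convex subset with c • v ∈ A for all v ∈ A and all c > 0 (an open convex cone). If f : ℕ → E satisfies f(n) ∈ A for every n and the series Σₙ f(n) converges with sum s, then s ∈ A (a converging sum of timelike vectors is timelike). -/
/-!
An open convex cone `A` is closed under addition, since `x + y = 2 • (x / 2 + y / 2)`, and
openness upgrades this to `A + closure A = A + A ⊆ A`. Splitting off the first term,
`s = f 0 + t` where `t` is the sum of the tail; the partial sums of the tail lie in `A`, so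
`t ∈ closure A`, hence `s ∈ A`.
-/

open Finset Filter Pointwise

theorem Convex.add_mem_of_smul_mem {𝕜 E : Type*} [Field 𝕜] [LinearOrder 𝕜]
    [IsStrictOrderedRing 𝕜] [AddCommGroup E] [Module 𝕜 E] {A : Set E} (hAc : Convex 𝕜 A)
    (hcone : ∀ v ∈ A, ∀ c : 𝕜, 0 < c → c • v ∈ A) {x y : E} (hx : x ∈ A) (hy : y ∈ A) :
    x + y ∈ A := by
  have hmid : (1 / 2 : 𝕜) • x + (1 / 2 : 𝕜) • y ∈ A :=
    hAc hx hy (by positivity) (by positivity) (add_halves (1 : 𝕜))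
  simpa [smul_add, smul_smul] using hcone _ hmid 2 two_pos

theorem sum_range_succ_mem_of_add_mem {M : Type*} [AddCommMonoid M] {A : Set M}
    (hadd : ∀ x ∈ A, ∀ y ∈ A, x + y ∈ A) {f : ℕ → M} (hf : ∀ n, f n ∈ A) (n : ℕ) : ∑ i ∈ range (n + 1), f i ∈ A := by
  induction n with
  | zero => simpa using hf 0
  | succ k ih => simpa only [sum_range_succ _ (k + 1)] using hadd _ ih _ (hf _)

theorem HasSum.mem_of_isOpen_of_add_mem {G : Type*} [AddCommGroup G] [TopologicalSpace G]
    [IsTopologicalAddGroup G] {A : Set G} (hAo : IsOpen A)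
    (hadd : ∀ x ∈ A, ∀ y ∈ A, x + y ∈ A) {f : ℕ → G} (hf : ∀ n, f n ∈ A) {s : G}
    (hs : HasSum f s) : s ∈ A := by
  have htail : HasSum (fun n ↦ f (n + 1)) (s - f 0) := by
    simpa using (hasSum_nat_add_iff' 1).2 hs
  have htail_mem : s - f 0 ∈ closure A :=
    mem_closure_of_tendsto (htail.tendsto_sum_nat.comp (tendsto_add_atTop_nat 1))
      (Eventually.of_forall (sum_range_succ_mem_of_add_mem hadd (fun n ↦ hf (n + 1))))
  have hs_mem : s ∈ A + closure A := ⟨f 0, hf 0, s - f 0, htail_mem, add_sub_cancel _ _⟩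
  rw [hAo.add_closure] at hs_mem
  obtain ⟨x, hx, y, hy, rfl⟩ := hs_mem
  exact hadd x hx y hy

theorem stmt7_general {E : Type*} [NormedAddCommGroup E] [NormedSpace ℝ E]
    (A : Set E) (hAo : IsOpen A) (hAc : Convex ℝ A)
    (hcone : ∀ v ∈ A, ∀ c : ℝ, 0 < c → c • v ∈ A)
    (f : ℕ → E) (hf : ∀ n : ℕ, f n ∈ A) (s : E) (hs : HasSum f s) :
    s ∈ A :=
  hs.mem_of_isOpen_of_add_mem hAo (fun _ hx _ hy ↦ hAc.add_mem_of_smul_mem hcone hx hy) hf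

/-- In an open convex cone `A` of a finite-dimensional real normed space, a converging
sum of vectors of `A` (timelike vectors) again belongs to `A`. -/
theorem stmt7 {E : Type*} [NormedAddCommGroup E] [NormedSpace ℝ E] [FiniteDimensional ℝ E]
    (A : Set E) (hne : A.Nonempty) (hAo : IsOpen A) (hAc : Convex ℝ A)
    (hcone : ∀ v ∈ A, ∀ c : ℝ, 0 < c → c • v ∈ A)
    (f : ℕ → E) (hf : ∀ n : ℕ, f n ∈ A) (s : E) (hs : HasSum f s) :
    s ∈ A :=
  stmt7_general A hAo hAc hcone f hf s hs
end

section
/- Let E be a finite-dimensional real normed vector space and let F : E → ℝ be a non-symmetric norm that is C¹ on E ∖ {0}. Define the Legendre (flat) map ♭ : E → E* by ♭(v) = derivative of L₀ = F²/2 at v for v ≠ 0, and ♭(0) = 0. Then the closed unit ball {v ∈ E | F(v) ≤ 1} is strictly convex if and only if ♭ is injective. -/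
open Filter Set Topology

set_option maxHeartbeats 1000000 in
open scoped Classical in
/-- For a non-symmetric norm `F` of class `C¹` away from `0`, the closed unit ball
`{F ≤ 1}` is strictly convex if and only if the Legendre (flat) map
`v ↦ d(F²/2)ᵥ` (extended by `0` at `0`) is injective. -/
theorem stmt8 {E : Type*} [NormedAddCommGroup E] [NormedSpace ℝ E] [FiniteDimensional ℝ E]
    (F : E → ℝ)
    (hF0 : ∀ v : E, 0 ≤ F v) (hFeq : ∀ v : E, F v = 0 ↔ v = 0)
    (hFhom : ∀ c : ℝ, 0 ≤ c → ∀ v : E, F (c • v) = c * F v)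
    (hFtri : ∀ v w : E, F (v + w) ≤ F v + F w)
    (hC1 : ContDiffOn ℝ 1 F {(0 : E)}ᶜ) :
    StrictConvex ℝ {v : E | F v ≤ 1} ↔
      Function.Injective (fun v : E =>
        if v = 0 then (0 : E →L[ℝ] ℝ) else fderiv ℝ (fun x => (F x) ^ 2 / 2) v) := by
  have hFpos : ∀ v : E, v ≠ 0 → 0 < F v := by
    intro v hv
    rcases lt_or_eq_of_le (hF0 v) with h | h
    · exact h
    · exact absurd ((hFeq v).mp h.symm) hv
  have hop : IsOpen ({(0 : E)}ᶜ) := isOpen_compl_singleton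
  have hdiffF : ∀ v : E, v ≠ 0 → DifferentiableAt ℝ F v := fun v hv =>
    ((hC1.contDiffAt (hop.mem_nhds hv)).differentiableAt one_ne_zero)
  have hder : ∀ v : E, v ≠ 0 →
      HasFDerivAt (fun x => F x ^ 2 / 2) (fderiv ℝ (fun x => F x ^ 2 / 2) v) v := by
    intro v hv
    have hd2 : DifferentiableAt ℝ (fun x => F x ^ 2) v := (hdiffF v hv).pow 2
    have hd : DifferentiableAt ℝ (fun x => F x ^ 2 / 2) v := by
      simp only [div_eq_mul_inv]
      exact hd2.mul_const _
    exact hd.hasFDerivAt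
  set b : E → E →L[ℝ] ℝ := fun v => fderiv ℝ (fun x => F x ^ 2 / 2) v with hbdef
  -- Euler's relation : b v v = F v ^ 2
  have euler : ∀ v : E, v ≠ 0 → b v v = F v ^ 2 := by
    intro v hv
    have hc : HasDerivAt (fun t : ℝ => (1 + t) • v) v 0 := by
      simpa using (((hasDerivAt_id (0 : ℝ)).const_add 1).smul_const v)
    have hLv : HasFDerivAt (fun x => F x ^ 2 / 2) (b v) ((1 + (0:ℝ)) • v) := by
      simpa using hder v hv
    have h1 : HasDerivAt (fun t : ℝ => F ((1 + t) • v) ^ 2 / 2) (b v v) 0 :=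
      hLv.comp_hasDerivAt (f := fun t : ℝ => (1 + t) • v) 0 hc
    have h2 : HasDerivAt (fun t : ℝ => (1 + t) ^ 2 * (F v ^ 2 / 2)) (F v ^ 2) 0 := by
      have h : HasDerivAt (fun t : ℝ => (1 + t) ^ 2 * (F v ^ 2 / 2))
          (((2 : ℕ) : ℝ) * (1 + 0) ^ (2 - 1) * 1 * (F v ^ 2 / 2)) 0 :=
        (((hasDerivAt_id' (0 : ℝ)).const_add 1).pow 2).mul_const (F v ^ 2 / 2)
      convert h using 1
      push_cast
      ring
    have heq : (fun t : ℝ => F ((1 + t) • v) ^ 2 / 2) =ᶠ[nhds (0 : ℝ)]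
        (fun t : ℝ => (1 + t) ^ 2 * (F v ^ 2 / 2)) := by
      filter_upwards [Metric.ball_mem_nhds (0 : ℝ) one_pos] with t ht
      have ht1 : (0 : ℝ) ≤ 1 + t := by
        rw [Metric.mem_ball, Real.dist_eq, sub_zero] at ht
        have := abs_lt.mp ht
        linarith [this.1]
      rw [hFhom (1 + t) ht1 v]
      ring
    exact h1.unique (h2.congr_of_eventuallyEq heq)
  -- Fundamental inequality : b v w ≤ F v * F w
  have bound : ∀ v : E, v ≠ 0 → ∀ w : E, b v w ≤ F v * F w := by
    intro v hv w
    have hc : HasDerivAt (fun t : ℝ => v + t • w) w 0 := by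
      simpa using ((hasDerivAt_id (0 : ℝ)).smul_const w).const_add v
    have hLv : HasFDerivAt (fun x => F x ^ 2 / 2) (b v) (v + (0:ℝ) • w) := by
      simpa using hder v hv
    have h1 : HasDerivAt (fun t : ℝ => F (v + t • w) ^ 2 / 2) (b v w) 0 :=
      hLv.comp_hasDerivAt (f := fun t : ℝ => v + t • w) 0 hc
    have hs : Tendsto (slope (fun t : ℝ => F (v + t • w) ^ 2 / 2) 0)
        (nhdsWithin 0 (Ioi 0)) (nhds (b v w)) :=
      (hasDerivAt_iff_tendsto_slope.mp h1).mono_left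
        (nhdsWithin_mono _ (fun t ht => ne_of_gt ht))
    have hg : Tendsto (fun t : ℝ => F v * F w + t * (F w ^ 2 / 2))
        (nhdsWithin 0 (Ioi 0)) (nhds (F v * F w)) := by
      have h : Tendsto (fun t : ℝ => F v * F w + t * (F w ^ 2 / 2)) (nhds 0)
          (nhds (F v * F w + 0 * (F w ^ 2 / 2))) :=
        (tendsto_id.mul_const _).const_add _
      simpa using h.mono_left nhdsWithin_le_nhds
    refine le_of_tendsto_of_tendsto hs hg ?_
    filter_upwards [self_mem_nhdsWithin] with t ht
    have ht : (0 : ℝ) < t := ht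
    have htri : F (v + t • w) ≤ F v + t * F w := by
      calc F (v + t • w) ≤ F v + F (t • w) := hFtri v (t • w)
        _ = F v + t * F w := by rw [hFhom t ht.le w]
    have hsq : F (v + t • w) ^ 2 ≤ (F v + t * F w) ^ 2 :=
      pow_le_pow_left₀ (hF0 _) htri 2
    rw [slope_def_field, sub_zero, div_le_iff₀ ht]
    have h0 : F (v + (0:ℝ) • w) = F v := by rw [zero_smul, add_zero]
    rw [h0]
    nlinarith [hsq]
  -- key : equality case forces equal derivatives
  have keymin : ∀ m x : E, m ≠ 0 → x ≠ 0 → F m = 1 → F x = 1 → b m x = 1 → b x = b m := by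
    intro m x hm hx hFm hFx hbmx
    have hmin : IsLocalMin (fun w => F w ^ 2 / 2 - b m w) x := by
      apply Filter.Eventually.of_forall
      intro w
      show F x ^ 2 / 2 - b m x ≤ F w ^ 2 / 2 - b m w
      have h1 : b m w ≤ F w := by
        have := bound m hm w
        rwa [hFm, one_mul] at this
      rw [hFx, hbmx]
      nlinarith [sq_nonneg (F w - 1)]
    have hψd : HasFDerivAt (fun w => F w ^ 2 / 2 - b m w) (b x - b m) x :=
      (hder x hx).sub (b m).hasFDerivAt
    have h0 : b x - b m = 0 := hmin.hasFDerivAt_eq_zero hψd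
    exact sub_eq_zero.mp h0
  -- continuity of F
  have hconv : ConvexOn ℝ univ F := by
    refine ⟨convex_univ, ?_⟩
    intro x _ y _ a c ha hc hac
    calc F (a • x + c • y) ≤ F (a • x) + F (c • y) := hFtri _ _
      _ = a * F x + c * F y := by rw [hFhom a ha, hFhom c hc]
      _ = a • F x + c • F y := by simp [smul_eq_mul]
  have hFcont : Continuous F :=
    continuousOn_univ.mp (hconv.continuousOn isOpen_univ)
  constructor
  · -- strict convexity → injective
    intro hsc
    intro v w hvw
    simp only at hvw
    by_cases hv : v = 0 <;> by_cases hw : w = 0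
    · rw [hv, hw]
    · exfalso
      rw [if_pos hv, if_neg hw] at hvw
      have hbw : b w = 0 := hvw.symm
      have : b w w = 0 := by rw [hbw]; rfl
      rw [euler w hw] at this
      exact (pow_ne_zero 2 (ne_of_gt (hFpos w hw))) this
    · exfalso
      rw [if_neg hv, if_pos hw] at hvw
      have hbv : b v = 0 := hvw
      have : b v v = 0 := by rw [hbv]; rfl
      rw [euler v hv] at this
      exact (pow_ne_zero 2 (ne_of_gt (hFpos v hv))) this
    · rw [if_neg hv, if_neg hw] at hvw
      have hvw' : b v = b w := hvw
      have hvw1 : ∀ u : E, b v u = b w u := fun u => by rw [hvw']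
      have hFvw : F v = F w := by
        have h1 : F v ^ 2 = b w v := by rw [← hvw1 v, euler v hv]
        have h2 : F w ^ 2 = b v w := by rw [hvw1 w, euler w hw]
        have h3 : b w v ≤ F w * F v := bound w hw v
        have h4 : b v w ≤ F v * F w := bound v hv w
        nlinarith [hFpos v hv, hFpos w hw]
      by_contra hne
      have hrpos : 0 < F v := hFpos v hv
      have hFm : F ((1 / 2 : ℝ) • v + (1 / 2 : ℝ) • w) = F v := by
        have hle : F ((1 / 2 : ℝ) • v + (1 / 2 : ℝ) • w) ≤ F v := by
          calc F ((1 / 2 : ℝ) • v + (1 / 2 : ℝ) • w)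
              ≤ F ((1 / 2 : ℝ) • v) + F ((1 / 2 : ℝ) • w) := hFtri _ _
            _ = (1 / 2) * F v + (1 / 2) * F w := by
                rw [hFhom _ (by norm_num) v, hFhom _ (by norm_num) w]
            _ = F v := by rw [← hFvw]; ring
        have hge : F v ≤ F ((1 / 2 : ℝ) • v + (1 / 2 : ℝ) • w) := by
          have h1 : b v ((1 / 2 : ℝ) • v + (1 / 2 : ℝ) • w) = F v ^ 2 := by
            rw [map_add, map_smul, map_smul, smul_eq_mul, smul_eq_mul,
              euler v hv, hvw1 w, euler w hw, ← hFvw]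
            ring
          have h2 : b v ((1 / 2 : ℝ) • v + (1 / 2 : ℝ) • w)
              ≤ F v * F ((1 / 2 : ℝ) • v + (1 / 2 : ℝ) • w) := bound v hv _
          nlinarith
        linarith
      -- the scaled points
      have hinv : (0:ℝ) ≤ (F v)⁻¹ := inv_nonneg.mpr hrpos.le
      have hx : ((F v)⁻¹ • v) ∈ {u : E | F u ≤ 1} := by
        simp only [mem_setOf_eq, hFhom (F v)⁻¹ hinv v]
        rw [inv_mul_cancel₀ (ne_of_gt hrpos)]
      have hy : ((F v)⁻¹ • w) ∈ {u : E | F u ≤ 1} := by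
        simp only [mem_setOf_eq, hFhom (F v)⁻¹ hinv w]
        rw [← hFvw, inv_mul_cancel₀ (ne_of_gt hrpos)]
      have hne' : (F v)⁻¹ • v ≠ (F v)⁻¹ • w := by
        intro h
        exact hne (smul_right_injective E (inv_ne_zero (ne_of_gt hrpos)) h)
      have hint := hsc hx hy hne' (by norm_num : (0:ℝ) < 1/2) (by norm_num : (0:ℝ) < 1/2)
        (by norm_num)
      have hzeq : (1/2 : ℝ) • ((F v)⁻¹ • v) + (1/2 : ℝ) • ((F v)⁻¹ • w)
          = (F v)⁻¹ • ((1 / 2 : ℝ) • v + (1 / 2 : ℝ) • w) := by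
        module
      rw [hzeq] at hint
      have hFz : F ((F v)⁻¹ • ((1 / 2 : ℝ) • v + (1 / 2 : ℝ) • w)) = 1 := by
        rw [hFhom (F v)⁻¹ hinv _, hFm, inv_mul_cancel₀ (ne_of_gt hrpos)]
      -- contradiction : a point of F-value 1 cannot be interior
      set z : E := (F v)⁻¹ • ((1 / 2 : ℝ) • v + (1 / 2 : ℝ) • w) with hzdef
      obtain ⟨ε, hε, hball⟩ := Metric.mem_nhds_iff.mp (mem_interior_iff_mem_nhds.mp hint)
      have hz0 : z ≠ 0 := by
        intro h
        rw [h, (hFeq 0).mpr rfl] at hFz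
        norm_num at hFz
      have hnz : 0 < ‖z‖ := norm_pos_iff.mpr hz0
      have hδpos : 0 < ε / (2 * ‖z‖) := div_pos hε (by positivity)
      have hmem : (1 + ε / (2 * ‖z‖)) • z ∈ Metric.ball z ε := by
        rw [Metric.mem_ball, dist_eq_norm]
        have hzz : (1 + ε / (2 * ‖z‖)) • z - z = (ε / (2 * ‖z‖)) • z := by module
        rw [hzz, norm_smul, Real.norm_eq_abs, abs_of_pos hδpos]
        have heq2 : ε / (2 * ‖z‖) * ‖z‖ = ε / 2 := by field_simp
        rw [heq2]
        linarith
      have hle := hball hmem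
      simp only [mem_setOf_eq] at hle
      rw [hFhom (1 + ε / (2 * ‖z‖)) (by linarith) z, hFz, mul_one] at hle
      linarith
  · -- injective → strict convexity
    intro hinj
    intro x hx y hy hxy a c ha hc hac
    have hsub : {u : E | F u < 1} ⊆ interior {u : E | F u ≤ 1} :=
      interior_maximal (setOf_subset_setOf.mpr (fun u => le_of_lt))
        (isOpen_lt hFcont continuous_const)
    apply hsub
    show F (a • x + c • y) < 1
    have htri : F (a • x + c • y) ≤ a * F x + c * F y := by
      calc F (a • x + c • y) ≤ F (a • x) + F (c • y) := hFtri _ _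
        _ = a * F x + c * F y := by rw [hFhom a ha.le, hFhom c hc.le]
    by_contra h
    push_neg at h
    simp only [mem_setOf_eq] at hx hy
    have hm1 : F (a • x + c • y) = 1 := le_antisymm (by nlinarith) h
    have hFx : F x = 1 := by nlinarith
    have hFy : F y = 1 := by nlinarith
    have hm0 : a • x + c • y ≠ 0 := by
      intro h0
      rw [h0, (hFeq 0).mpr rfl] at hm1
      norm_num at hm1
    have hx0 : x ≠ 0 := by
      intro h0; rw [h0, (hFeq 0).mpr rfl] at hFx; norm_num at hFx
    have hy0 : y ≠ 0 := by
      intro h0; rw [h0, (hFeq 0).mpr rfl] at hFy; norm_num at hFy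
    have h1 : b (a • x + c • y) (a • x + c • y) = 1 := by
      rw [euler _ hm0, hm1]; norm_num
    have h2 : b (a • x + c • y) x ≤ 1 := by
      have := bound _ hm0 x; rwa [hm1, hFx, one_mul] at this
    have h3 : b (a • x + c • y) y ≤ 1 := by
      have := bound _ hm0 y; rwa [hm1, hFy, one_mul] at this
    have h4 : b (a • x + c • y) (a • x + c • y)
        = a * b (a • x + c • y) x + c * b (a • x + c • y) y := by
      rw [map_add, map_smul, map_smul, smul_eq_mul, smul_eq_mul]
    have hbx : b (a • x + c • y) x = 1 := by nlinarith
    have hby : b (a • x + c • y) y = 1 := by nlinarith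
    have hbxm : b x = b (a • x + c • y) := keymin _ x hm0 hx0 hm1 hFx hbx
    have hbym : b y = b (a • x + c • y) := keymin _ y hm0 hy0 hm1 hFy hby
    have hxey : x = y := by
      apply hinj
      simp only [if_neg hx0, if_neg hy0]
      show b x = b y
      rw [hbxm, hbym]
    exact hxy hxey
end

section
/- Let E be a finite-dimensional real normed vector space and let F : E → ℝ be a non-symmetric norm that is C² on E ∖ {0}. Then the following are equivalent: (a) for every v ≠ 0 the fundamental tensor g_v (the second Fréchet derivative of L₀ = F²/2 at v) is positive definite, i.e., F is a Minkowski norm; (b) the Legendre (flat) map ♭ restricts to a bijection from E ∖ {0} onto the set of nonzero continuous linear functionals on E, ♭ is C¹ on E ∖ {0}, and its inverse is C¹ on E* ∖ {0}. -/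
set_option maxHeartbeats 1000000

open Set Filter Topology

section Stmt9Aux

variable {E : Type*} [NormedAddCommGroup E] [NormedSpace ℝ E] [FiniteDimensional ℝ E]

private theorem stmt9_hdiff (L₀ : E → ℝ) (hC2L : ContDiffOn ℝ 2 L₀ {(0 : E)}ᶜ) :
    ∀ v : E, v ≠ 0 → HasFDerivAt L₀ (fderiv ℝ L₀ v) v := fun v hv =>
  ((hC2L.differentiableOn (by norm_num)).differentiableAt
    (isOpen_compl_singleton.mem_nhds hv)).hasFDerivAt

private theorem stmt9_euler (F : E → ℝ) (L₀ : E → ℝ) (hLdef : L₀ = fun x => F x ^ 2 / 2)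
    (hFhom : ∀ c : ℝ, 0 ≤ c → ∀ v : E, F (c • v) = c * F v)
    (hdiff : ∀ v : E, v ≠ 0 → HasFDerivAt L₀ (fderiv ℝ L₀ v) v)
    (v : E) (hv : v ≠ 0) : fderiv ℝ L₀ v v = F v ^ 2 := by
  have hline : HasDerivAt (fun c : ℝ => c • v) v 1 := by
    simpa using (hasDerivAt_id (1 : ℝ)).smul_const v
  have hd : HasFDerivAt L₀ (fderiv ℝ L₀ v) ((1:ℝ) • v) := by
    rw [one_smul]; exact hdiff v hv
  have h1 : HasDerivAt (fun c : ℝ => L₀ (c • v)) (fderiv ℝ L₀ v v) 1 := by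
    exact (hd.comp_hasDerivAt 1 hline)
  have h2 : HasDerivAt (fun c : ℝ => c ^ 2 * L₀ v) (2 * L₀ v) 1 := by
    simpa using (hasDerivAt_pow 2 (1 : ℝ)).mul_const (L₀ v)
  have heq : (fun c : ℝ => L₀ (c • v)) =ᶠ[𝓝 (1 : ℝ)] fun c => c ^ 2 * L₀ v := by
    filter_upwards [eventually_gt_nhds (by norm_num : (0:ℝ) < 1)] with c hc
    simp only [hLdef, hFhom c hc.le v]; ring
  have h3 : HasDerivAt (fun c : ℝ => L₀ (c • v)) (2 * L₀ v) 1 := h2.congr_of_eventuallyEq heq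
  have h4 := h1.unique h3
  rw [h4, hLdef]; ring

private theorem stmt9_bhom (F : E → ℝ) (L₀ : E → ℝ) (hLdef : L₀ = fun x => F x ^ 2 / 2)
    (hFhom : ∀ c : ℝ, 0 ≤ c → ∀ v : E, F (c • v) = c * F v)
    (hdiff : ∀ v : E, v ≠ 0 → HasFDerivAt L₀ (fderiv ℝ L₀ v) v)
    (c : ℝ) (hc : 0 < c) (v : E) (hv : v ≠ 0) :
    fderiv ℝ L₀ (c • v) = c • fderiv ℝ L₀ v := by
  have hcv : c • v ≠ 0 := smul_ne_zero hc.ne' hv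
  have hsc : HasFDerivAt (fun x : E => c • x) (c • ContinuousLinearMap.id ℝ E) v :=
    (c • ContinuousLinearMap.id ℝ E).hasFDerivAt
  have h1 : HasFDerivAt (fun x : E => L₀ (c • x))
      ((fderiv ℝ L₀ (c • v)).comp (c • ContinuousLinearMap.id ℝ E)) v :=
    (hdiff _ hcv).comp v hsc
  have h2 : HasFDerivAt (fun x : E => L₀ (c • x)) (c ^ 2 • fderiv ℝ L₀ v) v := by
    have heq2 : (fun x : E => L₀ (c • x)) = fun x : E => c ^ 2 • L₀ x := by
      funext x; simp only [hLdef, hFhom c hc.le x, smul_eq_mul]; ring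
    rw [heq2]
    exact (hdiff v hv).const_smul (c ^ 2)
  have h3 := h1.unique h2
  ext u
  have h4 := congrFun (congrArg (fun (f : E →L[ℝ] ℝ) => (f : E → ℝ)) h3) u
  simp only [ContinuousLinearMap.coe_comp', Function.comp_apply,
    ContinuousLinearMap.coe_smul', Pi.smul_apply, ContinuousLinearMap.smul_apply,
    ContinuousLinearMap.coe_id', id_eq, smul_eq_mul] at h4 ⊢
  rw [map_smul, smul_eq_mul] at h4
  exact mul_left_cancel₀ hc.ne' (by linear_combination h4)

private theorem stmt9_convex (F : E → ℝ) (hF0 : ∀ v : E, 0 ≤ F v)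
    (hFhom : ∀ c : ℝ, 0 ≤ c → ∀ v : E, F (c • v) = c * F v)
    (hFtri : ∀ v w : E, F (v + w) ≤ F v + F w) :
    ConvexOn ℝ univ (fun x => F x ^ 2 / 2) := by
  refine ⟨convex_univ, fun x _ y _ a b ha hb hab => ?_⟩
  have h1 : F (a • x + b • y) ≤ a * F x + b * F y := by
    calc F (a • x + b • y) ≤ F (a • x) + F (b • y) := hFtri _ _
    _ = a * F x + b * F y := by rw [hFhom a ha, hFhom b hb]
  have h2 : 0 ≤ F (a • x + b • y) := hF0 _
  have h3 := hF0 x; have h4 := hF0 y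
  simp only [smul_eq_mul]
  nlinarith [mul_self_le_mul_self h2 h1, mul_nonneg (mul_nonneg ha hb) (sq_nonneg (F x - F y))]

private theorem stmt9_psd (L₀ : E → ℝ)
    (hconv : ConvexOn ℝ univ L₀)
    (hdiff : ∀ v : E, v ≠ 0 → HasFDerivAt L₀ (fderiv ℝ L₀ v) v)
    (hb1 : ContDiffOn ℝ 1 (fderiv ℝ L₀) {(0 : E)}ᶜ)
    (v : E) (hv : v ≠ 0) (u : E) :
    0 ≤ fderiv ℝ (fderiv ℝ L₀) v u u := by
  set b := fderiv ℝ L₀ with hbdef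
  set B := fderiv ℝ b with hBdef
  set ψ : ℝ → ℝ := fun t => L₀ (v + t • u) with hψdef
  have hε : (0:ℝ) < ‖v‖ / (‖u‖ + 1) := by
    apply div_pos (norm_pos_iff.mpr hv); positivity
  set ε : ℝ := ‖v‖ / (‖u‖ + 1) with hεdef
  have hne : ∀ t : ℝ, |t| < ε → v + t • u ≠ 0 := by
    intro t ht hzero
    have h1 : ‖t • u‖ < ‖v‖ := by
      rw [norm_smul]
      calc ‖t‖ * ‖u‖ ≤ |t| * (‖u‖ + 1) := by
            rw [Real.norm_eq_abs]; nlinarith [abs_nonneg t, norm_nonneg u]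
      _ < ε * (‖u‖ + 1) := by
            apply mul_lt_mul_of_pos_right ht; positivity
      _ = ‖v‖ := by rw [hεdef, div_mul_cancel₀ _ (by positivity)]
    have : v = -(t • u) := by linear_combination (norm := module) hzero
    rw [this, norm_neg] at h1; exact lt_irrefl _ h1
  have hψd : ∀ t : ℝ, |t| < ε → HasDerivAt ψ (b (v + t • u) u) t := by
    intro t ht
    have hline : HasDerivAt (fun s : ℝ => v + s • u) u t := by
      simpa using ((hasDerivAt_id t).smul_const u).const_add v
    exact (hdiff _ (hne t ht)).comp_hasDerivAt t hline
  have hψconv : ConvexOn ℝ (Ioo (-ε) ε) ψ := by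
    have := hconv.comp_affineMap (AffineMap.lineMap v (v + u) : ℝ →ᵃ[ℝ] E)
    have heq : ψ = L₀ ∘ (AffineMap.lineMap v (v + u) : ℝ →ᵃ[ℝ] E) := by
      funext t; simp [hψdef, AffineMap.lineMap_apply, add_comm]
    rw [heq]
    exact (this.subset (subset_univ _) (convex_Ioo _ _))
  have hmono : MonotoneOn (deriv ψ) (Ioo (-ε) ε) := by
    apply hψconv.monotoneOn_deriv
    intro t ht
    exact (hψd t (abs_lt.mpr ⟨ht.1, ht.2⟩)).differentiableAt
  set χ : ℝ → ℝ := fun t => b (v + t • u) u with hχdef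
  have hχeq : ∀ t : ℝ, |t| < ε → deriv ψ t = χ t := fun t ht =>
    (hψd t ht).deriv
  have hbd : HasFDerivAt b (B v) v := by
    have : DifferentiableAt ℝ b v :=
      ((hb1.differentiableOn one_ne_zero).differentiableAt
        (isOpen_compl_singleton.mem_nhds hv))
    exact this.hasFDerivAt
  have hχd : HasDerivAt χ (B v u u) 0 := by
    have hline : HasDerivAt (fun s : ℝ => v + s • u) u 0 := by
      simpa using ((hasDerivAt_id (0:ℝ)).smul_const u).const_add v
    have hbd0 : HasFDerivAt b (B v) (v + (0:ℝ) • u) := by simpa using hbd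
    have h1 : HasDerivAt (fun t : ℝ => b (v + t • u)) (B v u) 0 :=
      hbd0.comp_hasDerivAt 0 hline
    have h2 := ((ContinuousLinearMap.apply ℝ ℝ u).hasFDerivAt.comp_hasDerivAt 0 h1)
    exact h2
  have hslope := hasDerivAt_iff_tendsto_slope.mp hχd
  have hev : ∀ᶠ t in 𝓝[≠] (0:ℝ), 0 ≤ slope χ 0 t := by
    have hmem : Ioo (-ε) ε ∈ 𝓝 (0:ℝ) := Ioo_mem_nhds (by linarith) hε
    filter_upwards [self_mem_nhdsWithin,
      nhdsWithin_le_nhds hmem] with t ht0 htε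
    have h0mem : (0:ℝ) ∈ Ioo (-ε) ε := by constructor <;> linarith
    have hχψ : ∀ s ∈ Ioo (-ε) ε, deriv ψ s = χ s := fun s hs =>
      hχeq s (abs_lt.mpr ⟨hs.1, hs.2⟩)
    rcases lt_or_gt_of_ne (Set.mem_compl_singleton_iff.mp ht0) with h | h
    · have hm := hmono htε h0mem (le_of_lt h)
      rw [hχψ t htε, hχψ 0 h0mem] at hm
      rw [slope_def_field]
      apply div_nonneg_of_nonpos <;> linarith
    · have hm := hmono h0mem htε (le_of_lt h)
      rw [hχψ t htε, hχψ 0 h0mem] at hm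
      rw [slope_def_field]
      apply div_nonneg <;> linarith
  exact ge_of_tendsto hslope hev

private theorem stmt9_backward (L₀ : E → ℝ)
    (hdiff : ∀ v : E, v ≠ 0 → HasFDerivAt L₀ (fderiv ℝ L₀ v) v)
    (hpsd : ∀ v : E, v ≠ 0 → ∀ p : E, 0 ≤ fderiv ℝ (fderiv ℝ L₀) v p p)
    (hb1 : ContDiffOn ℝ 1 (fderiv ℝ L₀) {(0 : E)}ᶜ)
    (hmaps : MapsTo (fderiv ℝ L₀) {(0 : E)}ᶜ {ω : E →L[ℝ] ℝ | ω ≠ 0})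
    (g : (E →L[ℝ] ℝ) → E)
    (hg : ∀ v : E, v ≠ 0 → g (fderiv ℝ L₀ v) = v)
    (hg1 : ContDiffOn ℝ 1 g {ω : E →L[ℝ] ℝ | ω ≠ 0})
    (v : E) (hv : v ≠ 0) (u : E) (hu : u ≠ 0) :
    0 < fderiv ℝ (fderiv ℝ L₀) v u u := by
  set b := fderiv ℝ L₀ with hbdef
  set B := fderiv ℝ b with hBdef
  have hbv : b v ≠ 0 := hmaps hv
  have hbd : HasFDerivAt b (B v) v :=
    ((hb1.differentiableOn one_ne_zero).differentiableAt
      (isOpen_compl_singleton.mem_nhds hv)).hasFDerivAt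
  have hsymm : ∀ p q : E, B v p q = B v q p := by
    intro p q
    apply second_derivative_symmetric_of_eventually (f := L₀) (f' := b) (x := v)
    · filter_upwards [isOpen_compl_singleton.mem_nhds hv] with y hy
      exact hdiff y hy
    · exact hbd
  have hginv : Function.Injective (B v) := by
    have hopen : IsOpen {ω : E →L[ℝ] ℝ | ω ≠ 0} := isOpen_compl_singleton
    have hgd : DifferentiableAt ℝ g (b v) :=
      (hg1.differentiableOn one_ne_zero).differentiableAt (hopen.mem_nhds hbv)
    have hcomp : fderiv ℝ (g ∘ b) v = (fderiv ℝ g (b v)).comp (B v) :=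
      fderiv_comp v hgd hbd.differentiableAt
    have hid : fderiv ℝ (g ∘ b) v = ContinuousLinearMap.id ℝ E := by
      have hev : (g ∘ b) =ᶠ[𝓝 v] id := by
        filter_upwards [isOpen_compl_singleton.mem_nhds hv] with y hy
        exact hg y hy
      rw [hev.fderiv_eq, fderiv_id]
    intro p q hpq
    have h1 : (fderiv ℝ g (b v)) (B v p) = (fderiv ℝ g (b v)) (B v q) := by rw [hpq]
    have h2 := hid ▸ hcomp
    have hp : (fderiv ℝ g (b v)).comp (B v) = ContinuousLinearMap.id ℝ E := h2.symm
    calc p = ((fderiv ℝ g (b v)).comp (B v)) p := by rw [hp]; rfl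
    _ = ((fderiv ℝ g (b v)).comp (B v)) q := by
        simp only [ContinuousLinearMap.coe_comp', Function.comp_apply]; exact h1
    _ = q := by rw [hp]; rfl
  rcases lt_or_eq_of_le (hpsd v hv u) with h | h
  · exact h
  · exfalso
    have hBu : B v u = 0 := by
      ext w
      by_contra hw
      set q := B v u w with hq
      set r := B v w w with hr
      have hq0 : q ≠ 0 := by simpa using hw
      have hr0 : 0 ≤ r := hpsd v hv w
      set t : ℝ := -q / (r + 1) with ht
      have key : 0 ≤ B v (u + t • w) (u + t • w) := hpsd v hv _
      have expand : B v (u + t • w) (u + t • w)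
          = B v u u + t * (B v u w) + t * (B v w u) + t * t * r := by
        simp only [map_add, map_smul, ContinuousLinearMap.add_apply,
          ContinuousLinearMap.smul_apply, smul_eq_mul, hr]
        ring
      have hwu : B v w u = q := hsymm w u
      have huu : B v u u = 0 := h.symm
      rw [expand, huu, hwu, ht] at key
      have hrpos : (0:ℝ) < r + 1 := by linarith
      have key2 : 0 ≤ -(q * q) * (r + 2) / ((r+1)*(r+1)) := by
        calc (0:ℝ) ≤ 0 + -q / (r + 1) * q + -q / (r + 1) * q + -q / (r + 1) * (-q / (r + 1)) * r := key
        _ = -(q * q) * (r + 2) / ((r+1)*(r+1)) := by field_simp; ring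
      rcases div_nonneg_iff.mp key2 with ⟨hnum, -⟩ | ⟨-, hden⟩
      · have h5 : (0:ℝ) < q * q * (r + 2) :=
          mul_pos (mul_self_pos.mpr hq0) (by linarith)
        linarith
      · have h5 : (0:ℝ) < (r + 1) * (r + 1) := mul_pos hrpos hrpos
        linarith
    exact hu (hginv (by simpa using hBu))

private theorem stmt9_inj (F : E → ℝ) (L₀ : E → ℝ)
    (hFpos : ∀ v : E, v ≠ 0 → 0 < F v)
    (heuler : ∀ v : E, v ≠ 0 → fderiv ℝ L₀ v v = F v ^ 2)
    (hbhom : ∀ c : ℝ, 0 < c → ∀ v : E, v ≠ 0 →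
      fderiv ℝ L₀ (c • v) = c • fderiv ℝ L₀ v)
    (hb1 : ContDiffOn ℝ 1 (fderiv ℝ L₀) {(0 : E)}ᶜ)
    (hpos : ∀ v : E, v ≠ 0 → ∀ u : E, u ≠ 0 →
      0 < fderiv ℝ (fderiv ℝ L₀) v u u) :
    InjOn (fderiv ℝ L₀) {(0 : E)}ᶜ := by
  set b := fderiv ℝ L₀ with hbdef
  set B := fderiv ℝ b with hBdef
  intro v hv w hw hbvw
  by_contra hvw
  have hv' : v ≠ 0 := hv
  have hw' : w ≠ 0 := hw
  by_cases hcase : ∃ t ∈ Ioo (0:ℝ) 1, v + t • (w - v) = 0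
  · obtain ⟨t, ht, hzero⟩ := hcase
    have ht0 : t ≠ 0 := ne_of_gt ht.1
    have hwv : w = (-((1 - t) / t)) • v := by
      have h1 : t • w = -((1 - t) • v) := by
        linear_combination (norm := module) hzero
      have h2 := congrArg (fun x => t⁻¹ • x) h1
      simp only [smul_smul, inv_mul_cancel₀ ht0, one_smul, smul_neg] at h2
      rw [h2, ← neg_smul]; congr 1; field_simp
    set c : ℝ := (1 - t) / t with hc
    have hcpos : 0 < c := div_pos (by linarith [ht.2]) ht.1
    have hwv' : w = c • (-v) := by rw [hwv, neg_smul, smul_neg]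
    have hbw : b w = c • b (-v) := by
      rw [hwv']; exact hbhom c hcpos (-v) (neg_ne_zero.mpr hv')
    have h1 : b v v = F v ^ 2 := heuler v hv'
    have h2 : b (-v) (-v) = F (-v) ^ 2 := heuler (-v) (neg_ne_zero.mpr hv')
    have h3 : b w v = -(c * F (-v) ^ 2) := by
      rw [hbw]
      have hneg : b (-v) v = -(b (-v) (-v)) := by simp
      simp only [ContinuousLinearMap.coe_smul', Pi.smul_apply, smul_eq_mul]
      rw [hneg, h2]; ring
    have h4 : 0 < F v ^ 2 := pow_pos (hFpos v hv') 2
    have h5 : b v v = b w v := by rw [hbvw]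
    rw [h1, h3] at h5
    have h6 : 0 < c * F (-v) ^ 2 :=
      mul_pos hcpos (pow_pos (hFpos _ (neg_ne_zero.mpr hv')) 2)
    linarith
  · push_neg at hcase
    have hγ : ∀ t ∈ Icc (0:ℝ) 1, v + t • (w - v) ≠ 0 := by
      intro t ht
      rcases eq_or_lt_of_le ht.1 with h0 | h0
      · simpa [← h0] using hv'
      rcases eq_or_lt_of_le ht.2 with h1 | h1
      · rw [h1]; simpa using hw'
      · exact hcase t ⟨h0, h1⟩
    set χ : ℝ → ℝ := fun t => b (v + t • (w - v)) (w - v) with hχdef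
    have hχd : ∀ t ∈ Icc (0:ℝ) 1,
        HasDerivAt χ (B (v + t • (w - v)) (w - v) (w - v)) t := by
      intro t ht
      have hline : HasDerivAt (fun s : ℝ => v + s • (w - v)) (w - v) t := by
        simpa using ((hasDerivAt_id t).smul_const (w - v)).const_add v
      have hbd : HasFDerivAt b (B (v + t • (w - v))) (v + t • (w - v)) :=
        ((hb1.differentiableOn one_ne_zero).differentiableAt
          (isOpen_compl_singleton.mem_nhds (hγ t ht))).hasFDerivAt
      have h1 : HasDerivAt (fun s : ℝ => b (v + s • (w - v)))
          (B (v + t • (w - v)) (w - v)) t := hbd.comp_hasDerivAt t hline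
      exact ((ContinuousLinearMap.apply ℝ ℝ (w - v)).hasFDerivAt.comp_hasDerivAt t h1)
    have hwvne : w - v ≠ 0 := sub_ne_zero.mpr (Ne.symm hvw)
    have hmono : StrictMonoOn χ (Icc (0:ℝ) 1) := by
      apply strictMonoOn_of_deriv_pos (convex_Icc 0 1)
      · intro t ht
        exact (hχd t ht).continuousAt.continuousWithinAt
      · intro t ht
        rw [interior_Icc] at ht
        rw [(hχd t (Ioo_subset_Icc_self ht)).deriv]
        exact hpos _ (hγ t (Ioo_subset_Icc_self ht)) _ hwvne
    have h01 := hmono (left_mem_Icc.mpr zero_le_one) (right_mem_Icc.mpr zero_le_one)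
      zero_lt_one
    have hχ0 : χ 0 = b v (w - v) := by simp [hχdef]
    have hχ1 : χ 1 = b w (w - v) := by simp [hχdef]
    rw [hχ0, hχ1, hbvw] at h01
    exact lt_irrefl _ h01

private theorem stmt9_surj [Nontrivial E] (F : E → ℝ) (L₀ : E → ℝ)
    (hLdef : L₀ = fun x => F x ^ 2 / 2)
    (hF0 : ∀ v : E, 0 ≤ F v) (hFeq : ∀ v : E, F v = 0 ↔ v = 0)
    (hFhom : ∀ c : ℝ, 0 ≤ c → ∀ v : E, F (c • v) = c * F v)
    (hC2 : ContDiffOn ℝ 2 F {(0 : E)}ᶜ)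
    (hdiff : ∀ v : E, v ≠ 0 → HasFDerivAt L₀ (fderiv ℝ L₀ v) v)
    (ω : E →L[ℝ] ℝ) (hω : ω ≠ 0) :
    ∃ x : E, x ≠ 0 ∧ fderiv ℝ L₀ x = ω := by
  set b := fderiv ℝ L₀ with hbdef
  have hFpos : ∀ v : E, v ≠ 0 → 0 < F v := fun v hv =>
    lt_of_le_of_ne (hF0 v) (fun h => hv ((hFeq v).mp h.symm))
  have hFcontOn : ContinuousOn F {(0:E)}ᶜ := hC2.continuousOn
  have hsph : (Metric.sphere (0:E) 1).Nonempty :=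
    NormedSpace.sphere_nonempty.mpr zero_le_one
  have hsphsub : Metric.sphere (0:E) 1 ⊆ {(0:E)}ᶜ := by
    intro x hx h0
    simp only [Set.mem_singleton_iff] at h0
    rw [h0] at hx
    simp at hx
  have hcomp : IsCompact (Metric.sphere (0:E) 1) := isCompact_sphere 0 1
  obtain ⟨u₀, hu₀, hmin⟩ := hcomp.exists_isMinOn hsph (hFcontOn.mono hsphsub)
  obtain ⟨u₁, hu₁, hmax⟩ := hcomp.exists_isMaxOn hsph (hFcontOn.mono hsphsub)
  set c₀ : ℝ := F u₀ with hc₀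
  have hc₀pos : 0 < c₀ := hFpos u₀ (hsphsub hu₀)
  have hlow : ∀ x : E, c₀ * ‖x‖ ≤ F x := by
    intro x
    rcases eq_or_ne x 0 with rfl | hx
    · simp [(hFeq 0).mpr rfl]
    · have hxn : (0:ℝ) < ‖x‖ := norm_pos_iff.mpr hx
      have hunit : ‖x‖⁻¹ • x ∈ Metric.sphere (0:E) 1 := by
        simp [norm_smul, abs_of_pos (inv_pos.mpr hxn), inv_mul_cancel₀ hxn.ne']
      have h1 : c₀ ≤ F (‖x‖⁻¹ • x) := hmin hunit
      have h2 : F x = ‖x‖ * F (‖x‖⁻¹ • x) := by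
        rw [← hFhom ‖x‖ hxn.le, smul_smul, mul_inv_cancel₀ hxn.ne', one_smul]
      rw [h2]
      calc c₀ * ‖x‖ = ‖x‖ * c₀ := mul_comm _ _
      _ ≤ ‖x‖ * F (‖x‖⁻¹ • x) := by apply mul_le_mul_of_nonneg_left h1 hxn.le
  set C : ℝ := F u₁ with hC
  have hhigh : ∀ x : E, F x ≤ C * ‖x‖ := by
    intro x
    rcases eq_or_ne x 0 with rfl | hx
    · simp [(hFeq 0).mpr rfl]
    · have hxn : (0:ℝ) < ‖x‖ := norm_pos_iff.mpr hx
      have hunit : ‖x‖⁻¹ • x ∈ Metric.sphere (0:E) 1 := by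
        simp [norm_smul, abs_of_pos (inv_pos.mpr hxn), inv_mul_cancel₀ hxn.ne']
      have h1 : F (‖x‖⁻¹ • x) ≤ C := hmax hunit
      have h2 : F x = ‖x‖ * F (‖x‖⁻¹ • x) := by
        rw [← hFhom ‖x‖ hxn.le, smul_smul, mul_inv_cancel₀ hxn.ne', one_smul]
      rw [h2, mul_comm C ‖x‖]
      exact mul_le_mul_of_nonneg_left h1 hxn.le
  have hFcont : Continuous F := by
    rw [continuous_iff_continuousAt]
    intro x
    rcases eq_or_ne x 0 with rfl | hx
    · have h0 : F 0 = 0 := (hFeq 0).mpr rfl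
      rw [ContinuousAt, h0]
      have htd : Tendsto (fun x : E => C * ‖x‖) (𝓝 0) (𝓝 0) := by
        simpa using (continuous_norm.tendsto (0:E)).const_mul C
      exact squeeze_zero (fun t => hF0 t) (fun t => hhigh t) htd
    · exact hFcontOn.continuousAt (isOpen_compl_singleton.mem_nhds hx)
  have hL₀cont : Continuous L₀ := by
    rw [hLdef]; exact (hFcont.pow 2).div_const 2
  set h : E → ℝ := fun x => L₀ x - ω x with hhdef
  have hhcont : Continuous h := hL₀cont.sub ω.continuous
  set R : ℝ := 2 * ‖ω‖ / c₀ ^ 2 + 1 with hR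
  have hRpos : 0 < R := by positivity
  have houtside : ∀ x : E, R ≤ ‖x‖ → 0 < h x := by
    intro x hx
    have h1 : c₀ ^ 2 * ‖x‖ ^ 2 / 2 ≤ L₀ x := by
      rw [hLdef]
      have hl := hlow x
      have h2 : (c₀ * ‖x‖) ^ 2 ≤ F x ^ 2 := by
        apply sq_le_sq' <;> nlinarith [norm_nonneg x, hc₀pos.le, hF0 x]
      simp only []
      nlinarith
    have h2 : ω x ≤ ‖ω‖ * ‖x‖ := le_trans (le_abs_self _) (ω.le_opNorm x)
    have h3 : 2 * ‖ω‖ / c₀ ^ 2 < ‖x‖ :=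
      lt_of_lt_of_le (by rw [hR] at hx ⊢; linarith) hx
    have h4 : 2 * ‖ω‖ < c₀ ^ 2 * ‖x‖ := by
      rw [div_lt_iff₀ (by positivity)] at h3; linarith
    have h5 : (0:ℝ) < ‖x‖ := lt_of_lt_of_le hRpos hx
    simp only [hhdef]
    nlinarith
  have hball : IsCompact (Metric.closedBall (0:E) R) := isCompact_closedBall 0 R
  obtain ⟨x₀, hx₀mem, hx₀min⟩ := hball.exists_isMinOn
    ⟨0, by simp [hRpos.le]⟩ hhcont.continuousOn
  obtain ⟨u, hu⟩ : ∃ u : E, ω u ≠ 0 := by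
    by_contra hc; push_neg at hc
    exact hω (ContinuousLinearMap.ext fun u => by simp [hc u])
  obtain ⟨u', hu'⟩ : ∃ u' : E, 0 < ω u' := by
    rcases lt_or_gt_of_ne hu with hlt | hgt
    · exact ⟨-u, by simpa using hlt⟩
    · exact ⟨u, hgt⟩
  have hL₀nonneg : ∀ x : E, 0 ≤ L₀ x := by
    intro x; rw [hLdef]; positivity
  set t : ℝ := min (ω u' / (2 * L₀ u' + 1)) (R / (‖u'‖ + 1)) with htdef
  have hLu' : 0 ≤ L₀ u' := hL₀nonneg u'
  have htpos : 0 < t := by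
    apply lt_min
    · apply div_pos hu'; linarith
    · apply div_pos hRpos; positivity
  have htball : t • u' ∈ Metric.closedBall (0:E) R := by
    simp only [Metric.mem_closedBall, dist_zero_right, norm_smul,
      Real.norm_eq_abs, abs_of_pos htpos]
    have h1 : t ≤ R / (‖u'‖ + 1) := min_le_right _ _
    calc t * ‖u'‖ ≤ R / (‖u'‖ + 1) * ‖u'‖ := by
          apply mul_le_mul_of_nonneg_right h1 (norm_nonneg _)
    _ ≤ R := by
          rw [div_mul_eq_mul_div, div_le_iff₀ (by positivity)]
          have := norm_nonneg u'
          nlinarith [hRpos]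
  have hhtu : h (t • u') < 0 := by
    have h1 : L₀ (t • u') = t ^ 2 * L₀ u' := by
      rw [hLdef]; simp only []
      rw [hFhom t htpos.le]; ring
    have h2 : t ≤ ω u' / (2 * L₀ u' + 1) := min_le_left _ _
    have h3 : t * L₀ u' ≤ ω u' / (2 * L₀ u' + 1) * L₀ u' :=
      mul_le_mul_of_nonneg_right h2 hLu'
    have h4 : ω u' / (2 * L₀ u' + 1) * L₀ u' < ω u' := by
      rw [div_mul_eq_mul_div, div_lt_iff₀ (by linarith)]
      nlinarith
    simp only [hhdef, map_smul, smul_eq_mul, h1]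
    nlinarith
  have hx₀neg : h x₀ < 0 := lt_of_le_of_lt (hx₀min htball) hhtu
  have hx₀ne : x₀ ≠ 0 := by
    intro h0
    rw [h0] at hx₀neg
    simp [hhdef, hLdef, (hFeq 0).mpr rfl] at hx₀neg
  have hx₀lt : ‖x₀‖ < R := by
    rcases lt_or_ge ‖x₀‖ R with hlt | hle
    · exact hlt
    · exact absurd hx₀neg (not_lt.mpr (houtside x₀ hle).le)
  have hlocal : IsLocalMin h x₀ := by
    apply hx₀min.isLocalMin
    exact Filter.mem_of_superset
      ((Metric.isOpen_ball).mem_nhds (by simpa [Metric.mem_ball, dist_zero_right] using hx₀lt))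
      Metric.ball_subset_closedBall
  have hder : HasFDerivAt h (b x₀ - ω) x₀ := (hdiff x₀ hx₀ne).sub ω.hasFDerivAt
  have hzero := hlocal.hasFDerivAt_eq_zero hder
  exact ⟨x₀, hx₀ne, by rwa [sub_eq_zero] at hzero⟩

private theorem stmt9_inv (L₀ : E → ℝ)
    (hb1 : ContDiffOn ℝ 1 (fderiv ℝ L₀) {(0 : E)}ᶜ)
    (hinj : InjOn (fderiv ℝ L₀) {(0 : E)}ᶜ)
    (hsurj : ∀ ω : E →L[ℝ] ℝ, ω ≠ 0 → ∃ x : E, x ≠ 0 ∧ fderiv ℝ L₀ x = ω)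
    (hpos : ∀ v : E, v ≠ 0 → ∀ u : E, u ≠ 0 →
      0 < fderiv ℝ (fderiv ℝ L₀) v u u) :
    ∃ g : (E →L[ℝ] ℝ) → E,
      (∀ v : E, v ≠ 0 → g (fderiv ℝ L₀ v) = v) ∧
      ContDiffOn ℝ 1 g {ω : E →L[ℝ] ℝ | ω ≠ 0} := by
  classical
  set b := fderiv ℝ L₀ with hbdef
  set B := fderiv ℝ b with hBdef
  set g : (E →L[ℝ] ℝ) → E := fun ω =>
    if h : ∃ x : E, x ≠ 0 ∧ b x = ω then h.choose else 0 with hgdef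
  have hg : ∀ v : E, v ≠ 0 → g (b v) = v := by
    intro v hv
    have hex : ∃ x : E, x ≠ 0 ∧ b x = b v := ⟨v, hv, rfl⟩
    simp only [hgdef, dif_pos hex]
    exact hinj hex.choose_spec.1 hv hex.choose_spec.2
  refine ⟨g, hg, ?_⟩
  intro ω₀ hω₀
  obtain ⟨v₀, hv₀, hbv₀⟩ := hsurj ω₀ hω₀
  subst hbv₀
  have hBinj : Function.Injective (B v₀) := by
    intro p q hpq
    by_contra hne
    have hpq0 : p - q ≠ 0 := sub_ne_zero.mpr hne
    have h0 : B v₀ (p - q) = 0 := by rw [map_sub, hpq, sub_self]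
    have h1 := hpos v₀ hv₀ (p - q) hpq0
    rw [h0] at h1
    simp at h1
  have hrank : Module.finrank ℝ E = Module.finrank ℝ (E →L[ℝ] ℝ) := by
    rw [← (LinearMap.toContinuousLinearMap :
      (E →ₗ[ℝ] ℝ) ≃ₗ[ℝ] (E →L[ℝ] ℝ)).finrank_eq]
    exact (Module.finrank_linearMap_self ℝ ℝ E).symm
  set eL : E ≃L[ℝ] (E →L[ℝ] ℝ) :=
    ((B v₀).toLinearMap.linearEquivOfInjective hBinj hrank).toContinuousLinearEquiv
    with heLdef
  have heL : (eL : E →L[ℝ] (E →L[ℝ] ℝ)) = B v₀ := by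
    ext u; rfl
  have hcd : ContDiffAt ℝ 1 b v₀ :=
    hb1.contDiffAt (isOpen_compl_singleton.mem_nhds hv₀)
  have hbd : HasFDerivAt b (eL : E →L[ℝ] (E →L[ℝ] ℝ)) v₀ := by
    rw [heL]
    exact ((hb1.differentiableOn one_ne_zero).differentiableAt
      (isOpen_compl_singleton.mem_nhds hv₀)).hasFDerivAt
  have hstrict : HasStrictFDerivAt b (eL : E →L[ℝ] (E →L[ℝ] ℝ)) v₀ :=
    hcd.hasStrictFDerivAt' hbd one_ne_zero
  have hlocal_cd : ContDiffAt ℝ 1 (hcd.localInverse hbd one_ne_zero) (b v₀) :=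
    hcd.to_localInverse hbd one_ne_zero
  have hlocdef : hcd.localInverse hbd one_ne_zero = hstrict.localInverse b eL v₀ := rfl
  have hright := hstrict.eventually_right_inverse
  have htend := hstrict.localInverse_tendsto
  have hne0 : ∀ᶠ ω in 𝓝 (b v₀), hstrict.localInverse b eL v₀ ω ≠ 0 :=
    htend (isOpen_compl_singleton.mem_nhds hv₀)
  have heqv : g =ᶠ[𝓝 (b v₀)] hstrict.localInverse b eL v₀ := by
    filter_upwards [hright, hne0] with ω h1 h2
    have hex : ∃ x : E, x ≠ 0 ∧ b x = ω := ⟨_, h2, h1⟩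
    simp only [hgdef, dif_pos hex]
    exact hinj hex.choose_spec.1 h2 (hex.choose_spec.2.trans h1.symm)
  have hgcd : ContDiffAt ℝ 1 g (b v₀) := by
    rw [hlocdef] at hlocal_cd
    exact hlocal_cd.congr_of_eventuallyEq heqv
  exact hgcd.contDiffWithinAt

end Stmt9Aux

/-- For a non-symmetric norm `F` of class `C²` away from `0`, the fundamental tensor
`g_v = D²(F²/2)(v)` is positive definite at every `v ≠ 0` (i.e. `F` is a Minkowski
norm) if and only if the Legendre map `♭ = d(F²/2)` restricts to a bijection from
`E ∖ {0}` onto the nonzero continuous functionals, is `C¹` on `E ∖ {0}`, and has a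
`C¹` inverse on `E* ∖ {0}`. -/
theorem stmt9 {E : Type*} [NormedAddCommGroup E] [NormedSpace ℝ E] [FiniteDimensional ℝ E]
    (F : E → ℝ)
    (hF0 : ∀ v : E, 0 ≤ F v) (hFeq : ∀ v : E, F v = 0 ↔ v = 0)
    (hFhom : ∀ c : ℝ, 0 ≤ c → ∀ v : E, F (c • v) = c * F v)
    (hFtri : ∀ v w : E, F (v + w) ≤ F v + F w)
    (hC2 : ContDiffOn ℝ 2 F {(0 : E)}ᶜ) :
    (∀ v : E, v ≠ 0 → ∀ u : E, u ≠ 0 →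
        0 < fderiv ℝ (fderiv ℝ (fun x => (F x) ^ 2 / 2)) v u u) ↔
      (Set.BijOn (fderiv ℝ (fun x => (F x) ^ 2 / 2)) {(0 : E)}ᶜ
          {ω : E →L[ℝ] ℝ | ω ≠ 0} ∧
        ContDiffOn ℝ 1 (fderiv ℝ (fun x => (F x) ^ 2 / 2)) {(0 : E)}ᶜ ∧
        ∃ g : (E →L[ℝ] ℝ) → E,
          (∀ v : E, v ≠ 0 → g (fderiv ℝ (fun x => (F x) ^ 2 / 2) v) = v) ∧
          ContDiffOn ℝ 1 g {ω : E →L[ℝ] ℝ | ω ≠ 0}) := by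
  classical
  set L₀ : E → ℝ := fun x => F x ^ 2 / 2 with hLdef
  rcases subsingleton_or_nontrivial E with hE | hE
  · have hv0 : ∀ v : E, v = 0 := fun v => Subsingleton.elim v 0
    have hω0 : ∀ ω : E →L[ℝ] ℝ, ω = 0 := fun ω =>
      ContinuousLinearMap.ext fun u => by rw [hv0 u]; simp
    constructor
    · intro _
      exact ⟨⟨fun v hv => absurd (hv0 v) hv, fun v hv => absurd (hv0 v) hv,
          fun ω hω => absurd (hω0 ω) hω⟩,
        fun v hv => absurd (hv0 v) hv,
        fun _ => 0, fun v hv => absurd (hv0 v) hv,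
        fun ω hω => absurd (hω0 ω) hω⟩
    · intro _ v hv
      exact absurd (hv0 v) hv
  have hC2L : ContDiffOn ℝ 2 L₀ {(0 : E)}ᶜ := by
    rw [hLdef]; exact (hC2.pow 2).div_const 2
  have hdiff : ∀ v : E, v ≠ 0 → HasFDerivAt L₀ (fderiv ℝ L₀ v) v :=
    stmt9_hdiff L₀ hC2L
  have hFpos : ∀ v : E, v ≠ 0 → 0 < F v := fun v hv =>
    lt_of_le_of_ne (hF0 v) (fun h => hv ((hFeq v).mp h.symm))
  have heuler : ∀ v : E, v ≠ 0 → fderiv ℝ L₀ v v = F v ^ 2 :=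
    stmt9_euler F L₀ hLdef hFhom hdiff
  constructor
  · intro hpos
    have hb1 : ContDiffOn ℝ 1 (fderiv ℝ L₀) {(0 : E)}ᶜ :=
      ((contDiffOn_succ_iff_fderiv_of_isOpen isOpen_compl_singleton).mp
        (by exact_mod_cast hC2L)).2.2
    have hbhom : ∀ c : ℝ, 0 < c → ∀ v : E, v ≠ 0 →
        fderiv ℝ L₀ (c • v) = c • fderiv ℝ L₀ v :=
      stmt9_bhom F L₀ hLdef hFhom hdiff
    have hinj : InjOn (fderiv ℝ L₀) {(0 : E)}ᶜ :=
      stmt9_inj F L₀ hFpos heuler hbhom hb1 hpos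
    have hsurj : ∀ ω : E →L[ℝ] ℝ, ω ≠ 0 → ∃ x : E, x ≠ 0 ∧ fderiv ℝ L₀ x = ω :=
      stmt9_surj F L₀ hLdef hF0 hFeq hFhom hC2 hdiff
    have hmaps : MapsTo (fderiv ℝ L₀) {(0 : E)}ᶜ {ω : E →L[ℝ] ℝ | ω ≠ 0} := by
      intro v hv
      simp only [Set.mem_setOf_eq]
      intro h0
      have h1 := heuler v hv
      rw [h0] at h1
      simp only [ContinuousLinearMap.zero_apply] at h1
      exact (pow_pos (hFpos v hv) 2).ne' h1.symm
    refine ⟨⟨hmaps, hinj, ?_⟩, hb1, stmt9_inv L₀ hb1 hinj hsurj hpos⟩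
    intro ω hω
    obtain ⟨x, hx, hbx⟩ := hsurj ω hω
    exact ⟨x, hx, hbx⟩
  · rintro ⟨hbij, hb1, g, hg, hg1⟩
    have hconv : ConvexOn ℝ univ L₀ := by
      rw [hLdef]; exact stmt9_convex F hF0 hFhom hFtri
    have hpsd : ∀ v : E, v ≠ 0 → ∀ p : E, 0 ≤ fderiv ℝ (fderiv ℝ L₀) v p p :=
      fun v hv p => stmt9_psd L₀ hconv hdiff hb1 v hv p
    exact stmt9_backward L₀ hdiff hpsd hb1 hbij.mapsTo g hg hg1
end

section
/- Let E be a finite-dimensional real normed vector space, let F : E → ℝ be a Minkowski norm, and let ω : E → ℝ be a nonzero continuous linear functional. Then there exists a unique u ∈ E with F(u) = 1 that maximizes ω over the indicatrix {x ∈ E | F(x) = 1}; moreover ω(u) > 0 and ω = ω(u) • ♭(u), where ♭(u) denotes the Fréchet derivative of L₀ = F²/2 at u. -/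
section Aux

variable {E : Type*} [NormedAddCommGroup E] [NormedSpace ℝ E]

lemma stmt10_cont [FiniteDimensional ℝ E] (F : E → ℝ)
    (hFhom : ∀ c : ℝ, 0 ≤ c → ∀ v : E, F (c • v) = c * F v)
    (hFtri : ∀ v w : E, F (v + w) ≤ F v + F w) : Continuous F := by
  have hconv : ConvexOn ℝ Set.univ F := by
    refine ⟨convex_univ, fun x _ y _ a b ha hb hab => ?_⟩
    calc F (a • x + b • y) ≤ F (a • x) + F (b • y) := hFtri _ _
    _ = a * F x + b * F y := by rw [hFhom a ha, hFhom b hb]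
  exact continuousOn_univ.1 (hconv.continuousOn isOpen_univ)

lemma stmt10_euler (F : E → ℝ)
    (hFhom : ∀ c : ℝ, 0 ≤ c → ∀ v : E, F (c • v) = c * F v)
    (hC2 : ContDiffOn ℝ 2 F {(0 : E)}ᶜ) (v : E) (hv : v ≠ 0) :
    fderiv ℝ F v v = F v := by
  have hvmem : {(0:E)}ᶜ ∈ nhds v := isOpen_compl_singleton.mem_nhds (by simpa using hv)
  have hdiff : DifferentiableAt ℝ F v :=
    ((hC2.contDiffAt hvmem).differentiableAt (by norm_num))
  have h1 : HasDerivAt (fun t : ℝ => F (t • v)) (fderiv ℝ F v v) 1 := by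
    have hline : HasDerivAt (fun t : ℝ => t • v) v 1 := by
      simpa using (hasDerivAt_id (1:ℝ)).smul_const v
    have h := ((show HasFDerivAt F (fderiv ℝ F v) ((1:ℝ)•v) by
      rw [one_smul]; exact hdiff.hasFDerivAt).comp_hasDerivAt 1
      (by simpa using hline : HasDerivAt (fun t : ℝ => t • v) v 1) :
      HasDerivAt (fun t : ℝ => F (t • v)) _ 1)
    exact h
  have h2 : HasDerivAt (fun t : ℝ => F (t • v)) (F v) 1 := by
    have : HasDerivAt (fun t : ℝ => t * F v) (F v) 1 := by
      simpa using (hasDerivAt_id (1:ℝ)).mul_const (F v)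
    refine this.congr_of_eventuallyEq ?_
    filter_upwards [eventually_gt_nhds (by norm_num : (0:ℝ) < 1)] with t ht
    exact (hFhom t ht.le v)
  exact h1.unique h2

lemma stmt10_flat (F : E → ℝ)
    (hC2 : ContDiffOn ℝ 2 F {(0 : E)}ᶜ) (v : E) (hv : v ≠ 0) :
    fderiv ℝ (fun x => F x ^ 2 / 2) v = F v • fderiv ℝ F v := by
  have hvmem : {(0:E)}ᶜ ∈ nhds v := isOpen_compl_singleton.mem_nhds (by simpa using hv)
  have hdiff : DifferentiableAt ℝ F v :=
    ((hC2.contDiffAt hvmem).differentiableAt (by norm_num))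
  have h : HasFDerivAt (fun x => F x ^ 2 / 2) (F v • fderiv ℝ F v) v := by
    have h1 : HasFDerivAt (fun x => F x * F x)
        (F v • fderiv ℝ F v + F v • fderiv ℝ F v) v :=
      hdiff.hasFDerivAt.mul hdiff.hasFDerivAt
    have h2 := h1.const_smul (1/2 : ℝ)
    have hfun : (fun x => (1/2 : ℝ) • (F x * F x)) = fun x => F x ^ 2 / 2 := by
      funext x; simp [smul_eq_mul]; ring
    have h2 : HasFDerivAt (fun x => (1/2 : ℝ) • (F x * F x))
      ((1/2 : ℝ) • (F v • fderiv ℝ F v + F v • fderiv ℝ F v)) v := h2; rw [hfun] at h2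
    convert h2 using 1
    ext w
    simp [smul_eq_mul]
    ring
  exact h.fderiv

lemma stmt10_strict (F : E → ℝ)
    (hC2 : ContDiffOn ℝ 2 F {(0 : E)}ᶜ)
    (hpos : ∀ v : E, v ≠ 0 → ∀ u : E, u ≠ 0 →
      0 < fderiv ℝ (fderiv ℝ (fun x => (F x) ^ 2 / 2)) v u u)
    (u v : E) (hvu : v ≠ u) (hline : ∀ t : ℝ, u + t • (v - u) ≠ 0) :
    F (u + (1/2 : ℝ) • (v - u)) ^ 2 / 2 < 1/2 * (F u ^ 2 / 2) + 1/2 * (F v ^ 2 / 2) := by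
  set L₀ : E → ℝ := fun x => F x ^ 2 / 2 with hL₀
  have hL2 : ContDiffOn ℝ 2 L₀ {(0 : E)}ᶜ := by
    have := (hC2.pow 2).div_const 2
    exact this
  set ℓ : ℝ → E := fun t => u + t • (v - u) with hℓ
  have hLat : ∀ t : ℝ, ContDiffAt ℝ 2 L₀ (ℓ t) := fun t =>
    hL2.contDiffAt (isOpen_compl_singleton.mem_nhds (by simpa using hline t))
  have hdl : ∀ t : ℝ, HasDerivAt ℓ (v - u) t := fun t => by
    have h := ((hasDerivAt_id t).smul_const (v - u)).const_add u; rw [one_smul] at h; exact h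
  have hg' : ∀ t : ℝ, HasDerivAt (fun s => L₀ (ℓ s)) (fderiv ℝ L₀ (ℓ t) (v - u)) t := by
    intro t
    exact ((hLat t).differentiableAt (by norm_num)).hasFDerivAt.comp_hasDerivAt t (hdl t)
  have hg'' : ∀ t : ℝ, HasDerivAt (fun s => fderiv ℝ L₀ (ℓ s) (v - u))
      (fderiv ℝ (fderiv ℝ L₀) (ℓ t) (v - u) (v - u)) t := by
    intro t
    have hD1 : ContDiffAt ℝ 1 (fderiv ℝ L₀) (ℓ t) := (hLat t).fderiv_right (by norm_num)
    have hD2 : HasFDerivAt (fderiv ℝ L₀) (fderiv ℝ (fderiv ℝ L₀) (ℓ t)) (ℓ t) :=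
      (hD1.differentiableAt one_ne_zero).hasFDerivAt
    have hcomp : HasDerivAt (fun s => fderiv ℝ L₀ (ℓ s))
        (fderiv ℝ (fderiv ℝ L₀) (ℓ t) (v - u)) t :=
      hD2.comp_hasDerivAt t (hdl t)
    have := hcomp.clm_apply (hasDerivAt_const t (v - u))
    simpa using this
  have hsc : StrictConvexOn ℝ Set.univ (fun s => L₀ (ℓ s)) := by
    apply strictConvexOn_of_deriv2_pos convex_univ
    · exact fun t _ => ((hg' t).continuousAt).continuousWithinAt
    · intro t _
      have hd1 : deriv (fun s => L₀ (ℓ s)) = fun s => fderiv ℝ L₀ (ℓ s) (v - u) := by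
        funext s; exact (hg' s).deriv
      have : deriv^[2] (fun s => L₀ (ℓ s)) t = deriv (deriv (fun s => L₀ (ℓ s))) t := by
        simp [Function.iterate_succ, Function.comp]
      rw [this, hd1, (hg'' t).deriv]
      exact hpos (ℓ t) (hline t) (v - u) (sub_ne_zero.2 hvu)
  have key := hsc.2 (Set.mem_univ (0:ℝ)) (Set.mem_univ (1:ℝ)) (by norm_num)
    (by norm_num : (0:ℝ) < 1/2) (by norm_num : (0:ℝ) < 1/2) (by norm_num)
  simp only [smul_eq_mul, mul_zero, mul_one, zero_add] at key
  have h0 : ℓ 0 = u := by simp [hℓ]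
  have h1 : ℓ 1 = v := by simp [hℓ]
  have h2 : ℓ (1/2) = u + (1/2:ℝ) • (v - u) := rfl
  calc F (u + (1/2 : ℝ) • (v - u)) ^ 2 / 2 = L₀ (ℓ (1/2)) := by rw [h2]
  _ < 1/2 * L₀ (ℓ 0) + 1/2 * L₀ (ℓ 1) := key
  _ = 1/2 * (F u ^ 2 / 2) + 1/2 * (F v ^ 2 / 2) := by rw [h0, h1]

/-- Midpoint strict inequality on the indicatrix. -/
lemma stmt10_mid (F : E → ℝ)
    (hF0 : ∀ v : E, 0 ≤ F v) (hFeq : ∀ v : E, F v = 0 ↔ v = 0)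
    (hFhom : ∀ c : ℝ, 0 ≤ c → ∀ v : E, F (c • v) = c * F v)
    (hC2 : ContDiffOn ℝ 2 F {(0 : E)}ᶜ)
    (hpos : ∀ v : E, v ≠ 0 → ∀ u : E, u ≠ 0 →
      0 < fderiv ℝ (fderiv ℝ (fun x => (F x) ^ 2 / 2)) v u u)
    (u v : E) (hu : F u = 1) (hv : F v = 1) (hvu : v ≠ u) :
    F ((1/2 : ℝ) • (u + v)) < 1 := by
  have hu0 : u ≠ 0 := fun h => by simp [h, (hFeq 0).2 rfl] at hu
  have hmeq : (1/2 : ℝ) • (u + v) = u + (1/2 : ℝ) • (v - u) := by module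
  by_cases hcol : ∃ c : ℝ, v = c • u
  · obtain ⟨c, rfl⟩ := hcol
    have hc : c < 0 := by
      by_contra h
      push_neg at h
      rw [hFhom c h u, hu, mul_one] at hv
      exact hvu (by rw [hv, one_smul])
    have hFnu : F (-u) = 1 / (-c) := by
      have h1 : c • u = (-c) • (-u) := by module
      rw [h1, hFhom (-c) (by linarith) (-u)] at hv
      rw [eq_div_iff (show (-c) ≠ 0 by linarith)]
      linear_combination hv
    have hm : (1/2 : ℝ) • (u + c • u) = ((1+c)/2) • u := by module
    rw [hm]
    rcases le_or_gt 0 ((1+c)/2) with h1c | h1c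
    · rw [hFhom _ h1c u, hu, mul_one]
      linarith
    · have : ((1+c)/2) • u = (-(1+c)/2) • (-u) := by module
      rw [this, hFhom _ (by linarith) (-u), hFnu]
      have h2 : -(1+c)/2 * (1/(-c)) = (1+c)/(2*c) := by
        field_simp
      rw [h2, div_lt_iff_of_neg (by linarith : 2*c < 0)]
      linarith
  · have hline : ∀ t : ℝ, u + t • (v - u) ≠ 0 := by
      intro t h
      rcases eq_or_ne t 0 with rfl | ht
      · simp at h; exact hu0 h
      · apply hcol
        refine ⟨(t-1)/t, ?_⟩
        have h' : (1 - t) • u + t • v = 0 := by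
          rw [← h]; module
        have : t • v = (t - 1) • u := by
          rw [add_comm, add_eq_zero_iff_eq_neg] at h'
          rw [h']; module
        calc v = t⁻¹ • (t • v) := by rw [smul_smul, inv_mul_cancel₀ ht, one_smul]
        _ = t⁻¹ • ((t-1) • u) := by rw [this]
        _ = ((t-1)/t) • u := by rw [smul_smul]; ring_nf
    have key := stmt10_strict F hC2 hpos u v hvu hline
    rw [hu, hv] at key
    rw [hmeq]
    nlinarith [hF0 (u + (1/2 : ℝ) • (v - u))]

end Aux

/-- For a Minkowski norm `F` and a nonzero continuous linear functional `ω`, there is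
a unique maximizer `u` of `ω` on the indicatrix `{F = 1}`; moreover any such
maximizer satisfies `ω(u) > 0` and `ω = ω(u) • ♭(u)`, where `♭(u)` is the Fréchet
derivative of `L₀ = F²/2` at `u`. -/
theorem stmt10 {E : Type*} [NormedAddCommGroup E] [NormedSpace ℝ E] [FiniteDimensional ℝ E]
    (F : E → ℝ)
    (hF0 : ∀ v : E, 0 ≤ F v) (hFeq : ∀ v : E, F v = 0 ↔ v = 0)
    (hFhom : ∀ c : ℝ, 0 ≤ c → ∀ v : E, F (c • v) = c * F v)
    (hFtri : ∀ v w : E, F (v + w) ≤ F v + F w)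
    (hC2 : ContDiffOn ℝ 2 F {(0 : E)}ᶜ)
    (hpos : ∀ v : E, v ≠ 0 → ∀ u : E, u ≠ 0 →
      0 < fderiv ℝ (fderiv ℝ (fun x => (F x) ^ 2 / 2)) v u u)
    (ω : E →L[ℝ] ℝ) (hω : ω ≠ 0) :
    (∃! u : E, F u = 1 ∧ ∀ x : E, F x = 1 → ω x ≤ ω u) ∧
      ∀ u : E, (F u = 1 ∧ ∀ x : E, F x = 1 → ω x ≤ ω u) →
        0 < ω u ∧ ω = ω u • fderiv ℝ (fun x => (F x) ^ 2 / 2) u := by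
  have hcont : Continuous F := stmt10_cont F hFhom hFtri
  -- a nonzero vector exists
  obtain ⟨w, hw⟩ : ∃ w : E, ω w ≠ 0 := by
    by_contra h
    push_neg at h
    exact hω (ContinuousLinearMap.ext fun x => by simp [h x])
  have hw0 : w ≠ 0 := fun h => hw (by simp [h])
  have : Nontrivial E := nontrivial_of_ne w 0 hw0
  -- a point on the indicatrix with positive ω
  obtain ⟨y, hy0, hyω⟩ : ∃ y : E, y ≠ 0 ∧ 0 < ω y := by
    rcases hw.lt_or_gt with h | h
    · exact ⟨-w, neg_ne_zero.2 hw0, by simpa using h⟩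
    · exact ⟨w, hw0, h⟩
  have hFy : 0 < F y := lt_of_le_of_ne (hF0 y) (fun h => hy0 ((hFeq y).1 h.symm))
  set z : E := (F y)⁻¹ • y with hz
  have hFz : F z = 1 := by
    rw [hz, hFhom _ (inv_nonneg.2 (hF0 y)) y, inv_mul_cancel₀ hFy.ne']
  have hωz : 0 < ω z := by
    rw [hz, map_smul]
    exact smul_pos (inv_pos.2 hFy) hyω
  -- lower bound m ‖x‖ ≤ F x
  obtain ⟨x₀, hx₀S, hmin⟩ : ∃ x₀ ∈ Metric.sphere (0:E) 1,
      IsMinOn F (Metric.sphere (0:E) 1) x₀ :=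
    (isCompact_sphere (0:E) 1).exists_isMinOn
      (NormedSpace.sphere_nonempty.2 zero_le_one) hcont.continuousOn
  have hx₀0 : x₀ ≠ 0 := by
    intro h
    rw [mem_sphere_iff_norm, h] at hx₀S
    simp at hx₀S
  set m : ℝ := F x₀ with hm
  have hm0 : 0 < m := lt_of_le_of_ne (hF0 x₀) (fun h => hx₀0 ((hFeq x₀).1 h.symm))
  have hlow : ∀ x : E, m * ‖x‖ ≤ F x := by
    intro x
    rcases eq_or_ne x 0 with rfl | hx
    · simp [(hFeq 0).2 rfl]
    · have hnx : 0 < ‖x‖ := norm_pos_iff.2 hx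
      have hxs : ‖x‖⁻¹ • x ∈ Metric.sphere (0:E) 1 := by
        simp [norm_smul, inv_mul_cancel₀ hnx.ne']
      have := hmin hxs
      have heq : F x = ‖x‖ * F (‖x‖⁻¹ • x) := by
        rw [← hFhom ‖x‖ hnx.le, smul_smul, mul_inv_cancel₀ hnx.ne', one_smul]
      rw [heq]
      calc m * ‖x‖ = ‖x‖ * m := mul_comm _ _
      _ ≤ ‖x‖ * F (‖x‖⁻¹ • x) := by
          exact mul_le_mul_of_nonneg_left this hnx.le
  -- the indicatrix is compact
  set K : Set E := {x | F x = 1} with hK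
  have hKclosed : IsClosed K := isClosed_eq hcont continuous_const
  have hKsub : K ⊆ Metric.closedBall 0 m⁻¹ := by
    intro x hx
    rw [Metric.mem_closedBall, dist_zero_right]
    have := hlow x
    rw [hx] at this
    rw [← inv_mul_cancel₀ hm0.ne'] at this
    exact le_of_mul_le_mul_left (by linarith [mul_comm m ‖x‖]) hm0
  have hKcompact : IsCompact K :=
    (isCompact_closedBall (0:E) m⁻¹).of_isClosed_subset hKclosed hKsub
  have hKne : K.Nonempty := ⟨z, hFz⟩
  -- part 2: every maximizer is positive and satisfies the Lagrange identity
  have part2 : ∀ u : E, (F u = 1 ∧ ∀ x : E, F x = 1 → ω x ≤ ω u) →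
      0 < ω u ∧ ω = ω u • fderiv ℝ (fun x => (F x) ^ 2 / 2) u := by
    rintro u ⟨hu1, hmax⟩
    have hωu : 0 < ω u := lt_of_lt_of_le hωz (hmax z hFz)
    refine ⟨hωu, ?_⟩
    have hu0 : u ≠ 0 := fun h => by simp [h, (hFeq 0).2 rfl] at hu1
    have humem : {(0:E)}ᶜ ∈ nhds u := isOpen_compl_singleton.mem_nhds (by simpa using hu0)
    have hFstrict : HasStrictFDerivAt F (fderiv ℝ F u) u :=
      (hC2.contDiffAt humem).hasStrictFDerivAt (by norm_num)
    have hextr : IsLocalExtrOn (⇑ω) {x | F x = F u} u := by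
      refine Or.inr (IsMaxOn.localize ?_)
      intro x hx
      exact hmax x (by rw [← hu1]; exact hx)
    obtain ⟨a, b, hab, heq⟩ :=
      hextr.exists_multipliers_of_hasStrictFDerivAt_1d hFstrict ω.hasStrictFDerivAt
    have heu : fderiv ℝ F u u = 1 := by
      rw [stmt10_euler F hFhom hC2 u hu0, hu1]
    have hequ : a * (fderiv ℝ F u u) + b * ω u = 0 := by
      have := congrArg (fun L : E →L[ℝ] ℝ => L u) heq
      simpa [smul_eq_mul] using this
    rw [heu, mul_one] at hequ
    have hb : b ≠ 0 := by
      intro h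
      rw [h, zero_mul, add_zero] at hequ
      exact hab (by simp [h, hequ])
    have hflat : fderiv ℝ (fun x => F x ^ 2 / 2) u = fderiv ℝ F u := by
      rw [stmt10_flat F hC2 u hu0, hu1, one_smul]
    rw [hflat]
    ext x
    have hx : a * (fderiv ℝ F u x) + b * ω x = 0 := by
      have := congrArg (fun L : E →L[ℝ] ℝ => L x) heq
      simpa [smul_eq_mul] using this
    have ha : a = -b * ω u := by linarith
    rw [ha] at hx
    simp only [ContinuousLinearMap.coe_smul', Pi.smul_apply, smul_eq_mul]
    have : b * (ω x - ω u * fderiv ℝ F u x) = 0 := by ring_nf; ring_nf at hx; linarith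
    rcases mul_eq_zero.1 this with h | h
    · exact absurd h hb
    · linarith
  -- existence of a maximizer
  obtain ⟨u, huK, humax⟩ := hKcompact.exists_isMaxOn hKne ω.continuous.continuousOn
  have huprop : F u = 1 ∧ ∀ x : E, F x = 1 → ω x ≤ ω u :=
    ⟨huK, fun x hx => humax hx⟩
  refine ⟨⟨u, huprop, ?_⟩, part2⟩
  -- uniqueness
  rintro v ⟨hv1, hvmax⟩
  by_contra hne
  have hωu : 0 < ω u := (part2 u huprop).1
  have hωuv : ω v = ω u := le_antisymm (huprop.2 v hv1) (hvmax u huprop.1)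
  have hmid : F ((1/2 : ℝ) • (u + v)) < 1 :=
    stmt10_mid F hF0 hFeq hFhom hC2 hpos u v huprop.1 hv1 hne
  set p : E := (1/2 : ℝ) • (u + v) with hp
  have hωp : ω p = ω u := by
    rw [hp, map_smul, map_add, hωuv]
    simp [smul_eq_mul]; ring
  have hFp : 0 < F p := by
    rcases (hF0 p).lt_or_eq with h | h
    · exact h
    · exfalso
      have hp0 : p = 0 := (hFeq p).1 h.symm
      rw [hp0] at hωp
      simp at hωp
      linarith
  set q : E := (F p)⁻¹ • p with hq
  have hFq : F q = 1 := by
    rw [hq, hFhom _ (inv_nonneg.2 (hF0 p)) p, inv_mul_cancel₀ hFp.ne']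
  have hωq : ω u < ω q := by
    rw [hq, map_smul, smul_eq_mul, hωp]
    have h1 : 1 < (F p)⁻¹ := (one_lt_inv₀ hFp).2 hmid
    nlinarith
  exact absurd (huprop.2 q hFq) (not_le.2 hωq)
end

section
/- Let E be a finite-dimensional real normed vector space and let (Ω, T, F) be cone-triple data on E. Then the set A := {v ∈ E | Ω(v) > F(π(v))} is a nonempty open convex set with c • v ∈ A for all v ∈ A and c > 0, it is salient, i.e., closure(A) ∩ (−closure(A)) = {0}, and its topological frontier with 0 removed equals the cone {v ∈ E | v ≠ 0 ∧ Ω(v) = F(π(v))}. -/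
open scoped Pointwise

/-- Given cone-triple data `(Ω, T, F)` on a finite-dimensional real normed space, the
set `A = {v | Ω(v) > F(π(v))}` is a nonempty open convex salient cone whose frontier
minus `0` is the cone `{v ≠ 0 | Ω(v) = F(π(v))}`. -/
theorem stmt11 {E : Type*} [NormedAddCommGroup E] [NormedSpace ℝ E] [FiniteDimensional ℝ E]
    (Ω : E →L[ℝ] ℝ) (hΩ : Ω ≠ 0) (T : E) (hT : Ω T = 1)
    (π : E → ↥(LinearMap.ker (Ω : E →ₗ[ℝ] ℝ))) (hπ : ∀ v : E, (π v : E) = v - Ω v • T)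
    (F : ↥(LinearMap.ker (Ω : E →ₗ[ℝ] ℝ)) → ℝ)
    (hF0 : ∀ w, 0 ≤ F w) (hFeq : ∀ w, F w = 0 ↔ w = 0)
    (hFhom : ∀ c : ℝ, 0 ≤ c → ∀ w, F (c • w) = c * F w)
    (hFtri : ∀ w w', F (w + w') ≤ F w + F w')
    (A : Set E) (hA : A = {v : E | F (π v) < Ω v}) :
    A.Nonempty ∧ IsOpen A ∧ Convex ℝ A ∧
      (∀ v ∈ A, ∀ c : ℝ, 0 < c → c • v ∈ A) ∧
      closure A ∩ (-(closure A)) = {0} ∧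
      frontier A \ {0} = {v : E | v ≠ 0 ∧ Ω v = F (π v)} := by
  have hF0' : F 0 = 0 := (hFeq 0).mpr rfl
  -- F is convex, hence continuous
  have hFconv : ConvexOn ℝ Set.univ F := by
    refine ⟨convex_univ, fun w _ w' _ a b ha hb hab => ?_⟩
    calc F (a • w + b • w') ≤ F (a • w) + F (b • w') := hFtri _ _
      _ = a * F w + b * F w' := by rw [hFhom a ha, hFhom b hb]
      _ = a • F w + b • F w' := rfl
  have hFcont : Continuous F := by
    have := hFconv.continuousOn isOpen_univ
    rwa [← continuousOn_univ]
  -- π is continuous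
  have hπcont : Continuous π := by
    rw [continuous_induced_rng]
    have : (fun v => (π v : E)) = fun v => v - Ω v • T := funext hπ
    rw [show (Subtype.val ∘ π) = fun v => (π v : E) from rfl, this]
    exact continuous_id.sub (Ω.continuous.smul continuous_const)
  -- g := Ω v - F (π v)
  have hgcont : Continuous (fun v => Ω v - F (π v)) :=
    Ω.continuous.sub (hFcont.comp hπcont)
  -- π of linear combos
  have hπadd : ∀ (a b : ℝ) (v w : E), π (a • v + b • w) = a • π v + b • π w := by
    intro a b v w
    apply Subtype.ext
    push_cast
    rw [hπ, hπ, hπ]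
    simp only [map_add, map_smul, smul_eq_mul]
    module
  have hπsmul : ∀ (c : ℝ) (v : E), π (c • v) = c • π v := by
    intro c v
    have := hπadd c 0 v 0
    simpa using this
  -- A open
  have hopen : IsOpen A := by
    rw [hA]
    have : {v : E | F (π v) < Ω v} = (fun v => Ω v - F (π v)) ⁻¹' Set.Ioi 0 := by
      ext v; simp [sub_pos]
    rw [this]
    exact isOpen_Ioi.preimage hgcont
  -- closure A
  have hπT : π T = 0 := by
    apply Subtype.ext; rw [hπ, hT]; simp
  have hclo : closure A = {v : E | F (π v) ≤ Ω v} := by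
    apply subset_antisymm
    · have hcl : IsClosed {v : E | F (π v) ≤ Ω v} := by
        have : {v : E | F (π v) ≤ Ω v} = (fun v => Ω v - F (π v)) ⁻¹' Set.Ici 0 := by
          ext v; simp [sub_nonneg]
        rw [this]; exact isClosed_Ici.preimage hgcont
      refine closure_minimal ?_ hcl
      rw [hA]; intro v hv
      have hv' : F (π v) < Ω v := hv
      exact hv'.le
    · intro v hv
      have htend : Filter.Tendsto (fun ε : ℝ => v + ε • T) (nhdsWithin 0 (Set.Ioi 0)) (nhds v) := by
        have : Filter.Tendsto (fun ε : ℝ => v + ε • T) (nhds 0) (nhds v) := by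
          have := (continuous_id.smul (continuous_const (y := T))).tendsto (0 : ℝ)
          simpa using (tendsto_const_nhds (x := v)).add this
        exact this.mono_left nhdsWithin_le_nhds
      refine mem_closure_of_tendsto htend ?_
      filter_upwards [self_mem_nhdsWithin] with ε (hε : 0 < ε)
      rw [hA]
      show F (π (v + ε • T)) < Ω (v + ε • T)
      have : π (v + ε • T) = π v := by
        have := hπadd 1 ε v T
        simpa [hπT] using this
      rw [this]
      have hv' : F (π v) ≤ Ω v := hv
      simp only [map_add, map_smul, hT, smul_eq_mul, mul_one]
      linarith
  refine ⟨⟨T, ?_⟩, hopen, ?_, ?_, ?_, ?_⟩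
  · rw [hA]; show F (π T) < Ω T; rw [hπT, hF0', hT]; norm_num
  · -- convex
    rw [hA]
    intro v hv w hw a b ha hb hab
    have hv' : F (π v) < Ω v := hv
    have hw' : F (π w) < Ω w := hw
    show F (π (a • v + b • w)) < Ω (a • v + b • w)
    rw [hπadd]
    calc F (a • π v + b • π w) ≤ F (a • π v) + F (b • π w) := hFtri _ _
      _ = a * F (π v) + b * F (π w) := by rw [hFhom a ha, hFhom b hb]
      _ < a * Ω v + b * Ω w := by
          rcases eq_or_lt_of_le ha with rfl | ha'
          · simp at hab; subst hab
            simpa using mul_lt_mul_of_pos_left hw' one_pos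
          · rcases eq_or_lt_of_le hb with rfl | hb'
            · simp at hab; subst hab
              simpa using mul_lt_mul_of_pos_left hv' one_pos
            · exact add_lt_add (mul_lt_mul_of_pos_left hv' ha')
                (mul_lt_mul_of_pos_left hw' hb')
      _ = Ω (a • v + b • w) := by simp [mul_comm]
  · -- cone
    intro v hv c hc
    rw [hA] at hv ⊢
    show F (π (c • v)) < Ω (c • v)
    rw [hπsmul, hFhom c hc.le, map_smul, smul_eq_mul]
    exact mul_lt_mul_of_pos_left hv hc
  · -- salient
    ext v
    simp only [Set.mem_inter_iff, Set.mem_neg, Set.mem_singleton_iff, hclo, Set.mem_setOf_eq]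
    constructor
    · rintro ⟨h1, h2⟩
      have hsum : F (π v) + F (π (-v)) ≤ 0 := by
        have := map_neg Ω v
        linarith
      have hπneg : π (-v) = -π v := by
        have := hπsmul (-1) v
        simpa using this
      have h0 : F (π v) = 0 := le_antisymm (by linarith [hF0 (π (-v))]) (hF0 _)
      have hπv0 : π v = 0 := (hFeq _).mp h0
      have hΩv : Ω v = 0 := by
        rw [hπneg] at hsum
        have h0' : F (-π v) = 0 := by rw [hπv0] at h0 ⊢; simpa using h0
        rw [hπneg, h0'] at h2
        rw [h0] at h1
        have hneg := map_neg Ω v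
        linarith
      have := hπ v
      rw [hπv0, hΩv] at this
      simp at this
      first | exact this | exact this.symm
    · rintro rfl
      have hπ0 : π 0 = 0 := by apply Subtype.ext; rw [hπ]; simp
      constructor
      · show F (π 0) ≤ Ω 0
        rw [hπ0, hF0']; simp
      · show F (π (-0 : E)) ≤ Ω (-0 : E)
        rw [neg_zero, hπ0, hF0']; simp
  · -- frontier
    rw [frontier, hopen.interior_eq, hclo, hA]
    ext v
    simp only [Set.mem_diff, Set.mem_setOf_eq, Set.mem_singleton_iff, not_lt]
    constructor
    · rintro ⟨⟨h1, h2⟩, h3⟩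
      exact ⟨h3, le_antisymm h2 h1⟩
    · rintro ⟨h1, h2⟩
      exact ⟨⟨h2.ge, h2.le⟩, h1⟩
end

section
/- Let E be a finite-dimensional real normed vector space of dimension at least 2 and let (Ω, T, F) be cone-triple data on E in which F is moreover a Minkowski norm on ker Ω. Define 𝒢 : E → ℝ by 𝒢(v) = Ω(v)² − F(π(v))². Then 𝒢 is C² on the complement of the line span{T}, and for every v ∉ span{T} the fundamental tensor g_v := ½ · (second Fréchet derivative of 𝒢 at v) has Lorentzian signature. -/
set_option maxHeartbeats 2000000 in
set_option synthInstance.maxHeartbeats 400000 in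
/-- Given cone-triple data `(Ω, T, F)` on a finite-dimensional real normed space of
dimension at least `2`, where `F` is a Minkowski norm on `ker Ω`, the function
`𝒢(v) = Ω(v)² − F(π(v))²` is `C²` off the line spanned by `T`, and at every such `v`
its fundamental tensor `g_v = ½ D²𝒢(v)` has Lorentzian signature: some vector has
positive square and some codimension-one subspace is negative definite. -/
theorem stmt12 {E : Type*} [NormedAddCommGroup E] [NormedSpace ℝ E] [FiniteDimensional ℝ E]
    (hdim : 2 ≤ Module.finrank ℝ E)
    (Ω : E →L[ℝ] ℝ) (hΩ : Ω ≠ 0) (T : E) (hT : Ω T = 1)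
    (π : E → ↥(LinearMap.ker (Ω : E →ₗ[ℝ] ℝ))) (hπ : ∀ v : E, (π v : E) = v - Ω v • T)
    (F : ↥(LinearMap.ker (Ω : E →ₗ[ℝ] ℝ)) → ℝ)
    (hF0 : ∀ w, 0 ≤ F w) (hFeq : ∀ w, F w = 0 ↔ w = 0)
    (hFhom : ∀ c : ℝ, 0 ≤ c → ∀ w, F (c • w) = c * F w)
    (hFtri : ∀ w w', F (w + w') ≤ F w + F w')
    (hC2 : ContDiffOn ℝ 2 F {(0 : ↥(LinearMap.ker (Ω : E →ₗ[ℝ] ℝ)))}ᶜ)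
    (hpos : ∀ w : ↥(LinearMap.ker (Ω : E →ₗ[ℝ] ℝ)), w ≠ 0 → ∀ u : ↥(LinearMap.ker (Ω : E →ₗ[ℝ] ℝ)), u ≠ 0 →
      0 < fderiv ℝ (fderiv ℝ (fun x => (F x) ^ 2 / 2)) w u u)
    (𝒢 : E → ℝ) (h𝒢 : ∀ v : E, 𝒢 v = (Ω v) ^ 2 - (F (π v)) ^ 2) :
    ContDiffOn ℝ 2 𝒢 {v : E | v ∉ Submodule.span ℝ ({T} : Set E)} ∧
      ∀ v : E, v ∉ Submodule.span ℝ ({T} : Set E) →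
        (∃ u : E, 0 < (1 / 2) * fderiv ℝ (fderiv ℝ 𝒢) v u u) ∧
        (∃ H : Submodule ℝ E, Module.finrank ℝ ↥H + 1 = Module.finrank ℝ E ∧
          ∀ h ∈ H, h ≠ 0 → (1 / 2) * fderiv ℝ (fderiv ℝ 𝒢) v h h < 0) := by
  classical
  -- the projection as a continuous linear map
  let Pl : E →ₗ[ℝ] ↥(LinearMap.ker (Ω : E →ₗ[ℝ] ℝ)) :=
    LinearMap.codRestrict (LinearMap.ker (Ω : E →ₗ[ℝ] ℝ))
      (LinearMap.id - (Ω : E →ₗ[ℝ] ℝ).smulRight T)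
      (by intro c; simp [LinearMap.mem_ker, hT])
  let P : E →L[ℝ] ↥(LinearMap.ker (Ω : E →ₗ[ℝ] ℝ)) := LinearMap.toContinuousLinearMap Pl
  have hPcoe : ∀ v : E, (P v : E) = v - Ω v • T := fun v => rfl
  have hπP : ∀ v : E, π v = P v := by
    intro v; apply Subtype.ext; rw [hπ v, hPcoe v]
  -- f = F²/2
  set f : ↥(LinearMap.ker (Ω : E →ₗ[ℝ] ℝ)) → ℝ := fun x => (F x) ^ 2 / 2 with hf
  have h𝒢' : 𝒢 = fun v => (Ω v) ^ 2 - 2 * f (P v) := by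
    funext v
    rw [h𝒢 v, hπP v, hf]
    ring
  -- characterization of the span of T
  have hPzero : ∀ v : E, P v = 0 ↔ v ∈ Submodule.span ℝ ({T} : Set E) := by
    intro v
    rw [Submodule.mem_span_singleton]
    constructor
    · intro h
      have h' : v - Ω v • T = 0 := by
        have := congrArg (Subtype.val) h
        rwa [hPcoe v] at this
      exact ⟨Ω v, (sub_eq_zero.mp h').symm⟩
    · rintro ⟨a, rfl⟩
      apply Subtype.ext
      rw [hPcoe]
      simp [hT]
  have hSeq : {v : E | v ∉ Submodule.span ℝ ({T} : Set E)}
      = P ⁻¹' ({(0 : ↥(LinearMap.ker (Ω : E →ₗ[ℝ] ℝ)))}ᶜ) := by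
    ext v
    simp [hPzero v]
  have hUopen : IsOpen (P ⁻¹' ({(0 : ↥(LinearMap.ker (Ω : E →ₗ[ℝ] ℝ)))}ᶜ)) :=
    (isOpen_compl_singleton).preimage P.continuous
  have hOpen0 : IsOpen ({(0 : ↥(LinearMap.ker (Ω : E →ₗ[ℝ] ℝ)))}ᶜ) := isOpen_compl_singleton
  -- f is C² off 0
  have hC2f : ContDiffOn ℝ 2 f ({(0 : ↥(LinearMap.ker (Ω : E →ₗ[ℝ] ℝ)))}ᶜ) :=
    (hC2.pow 2).div_const 2
  -- 𝒢 is C² off the line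
  have hcont : ContDiffOn ℝ 2 𝒢 {v : E | v ∉ Submodule.span ℝ ({T} : Set E)} := by
    rw [h𝒢', hSeq]
    apply ContDiffOn.sub
    · exact ((Ω.contDiff.pow 2)).contDiffOn
    · have hcomp : ContDiffOn ℝ 2 (fun v => f (P v))
          (P ⁻¹' ({(0 : ↥(LinearMap.ker (Ω : E →ₗ[ℝ] ℝ)))}ᶜ)) :=
        hC2f.comp (P.contDiff.contDiffOn) (fun x hx => hx)
      exact contDiffOn_const.mul hcomp
  refine ⟨hcont, ?_⟩
  intro v hv
  have hvP : P v ≠ 0 := fun h => hv ((hPzero v).mp h)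
  -- differentiability facts for f off 0
  have hfd : ∀ w : ↥(LinearMap.ker (Ω : E →ₗ[ℝ] ℝ)), w ≠ 0 → HasFDerivAt f (fderiv ℝ f w) w := by
    intro w hw
    have := (hC2f.differentiableOn (by norm_num)).differentiableAt
      (hOpen0.mem_nhds hw)
    exact this.hasFDerivAt
  have hf'C1 : ContDiffOn ℝ 1 (fderiv ℝ f) ({(0 : ↥(LinearMap.ker (Ω : E →ₗ[ℝ] ℝ)))}ᶜ) :=
    hC2f.fderiv_of_isOpen hOpen0 (by norm_num)
  have hf'' : ∀ w : ↥(LinearMap.ker (Ω : E →ₗ[ℝ] ℝ)), w ≠ 0 →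
      HasFDerivAt (fderiv ℝ f) (fderiv ℝ (fderiv ℝ f) w) w := by
    intro w hw
    have := (hf'C1.differentiableOn (by norm_num)).differentiableAt
      (hOpen0.mem_nhds hw)
    exact this.hasFDerivAt
  -- the first-derivative formula
  set L : E →L[ℝ] (E →L[ℝ] ℝ) := Ω.smulRight ((2:ℝ) • Ω) with hL
  set Φ : E → (E →L[ℝ] ℝ) :=
    fun w => L w - (2:ℝ) • ((fderiv ℝ f (P w)).comp P) with hΦ
  have hG1 : ∀ w : E, P w ≠ 0 → HasFDerivAt 𝒢 (Φ w) w := by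
    intro w hw
    rw [h𝒢']
    have h1 : HasFDerivAt (fun v : E => (Ω v) ^ 2) (L w) w := by
      have h2 := (Ω.hasFDerivAt (x := w)).mul (Ω.hasFDerivAt (x := w))
      have : (fun v : E => (Ω v) ^ 2) = fun v : E => Ω v * Ω v := by
        funext v; ring
      rw [this]
      convert h2 using 1
      · rfl
      · rfl
      · rfl
      · ext u
        simp [hL]
        ring
    have h2 : HasFDerivAt (fun v : E => 2 * f (P v))
        ((2:ℝ) • ((fderiv ℝ f (P w)).comp P)) w := by
      have := ((hfd (P w) hw).comp w P.hasFDerivAt).const_mul (2:ℝ)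
      convert this using 1
      · rfl
      · rfl
      · rfl
    exact h1.sub h2
  -- the second-derivative formula
  set C : (↥(LinearMap.ker (Ω : E →ₗ[ℝ] ℝ)) →L[ℝ] ℝ) →L[ℝ] (E →L[ℝ] ℝ) :=
    (ContinuousLinearMap.compL ℝ E ↥(LinearMap.ker (Ω : E →ₗ[ℝ] ℝ)) ℝ).flip P with hC
  set D2 : ↥(LinearMap.ker (Ω : E →ₗ[ℝ] ℝ)) →L[ℝ] (↥(LinearMap.ker (Ω : E →ₗ[ℝ] ℝ)) →L[ℝ] ℝ) :=
    fderiv ℝ (fderiv ℝ f) (P v) with hD2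
  have hΦderiv : HasFDerivAt Φ (L - (2:ℝ) • (C.comp ((D2 : ↥(LinearMap.ker (Ω : E →ₗ[ℝ] ℝ)) →L[ℝ] _).comp P))) v := by
    have h1 : HasFDerivAt (fun w : E => L w) L v := L.hasFDerivAt
    have h2 : HasFDerivAt (fun w : E => (2:ℝ) • ((fderiv ℝ f (P w)).comp P))
        ((2:ℝ) • (C.comp (D2.comp P))) v := by
      have hinner : HasFDerivAt (fun w : E => fderiv ℝ f (P w)) (D2.comp P) v :=
        HasFDerivAt.comp (g := fderiv ℝ f) (f := P) v (hf'' (P v) hvP) P.hasFDerivAt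
      have houter := (C.hasFDerivAt (x := fderiv ℝ f (P v))).comp (f := fun w : E => fderiv ℝ f (P w)) v hinner
      have houter' : HasFDerivAt (fun w : E => (fderiv ℝ f (P w)).comp P)
          (C.comp (D2.comp P)) v := houter
      exact houter'.const_smul (2:ℝ)
    exact h1.sub h2
  have hfderiv𝒢 : fderiv ℝ 𝒢 =ᶠ[nhds v] Φ := by
    filter_upwards [hUopen.mem_nhds hvP] with w hw
    exact (hG1 w hw).fderiv
  have hsnd : fderiv ℝ (fderiv ℝ 𝒢) v
      = L - (2:ℝ) • (C.comp (D2.comp P)) := by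
    rw [hfderiv𝒢.fderiv_eq]
    exact hΦderiv.fderiv
  have heval : ∀ u : E, (1 / 2) * fderiv ℝ (fderiv ℝ 𝒢) v u u
      = (Ω u) ^ 2 - D2 (P u) (P u) := by
    intro u
    rw [hsnd]
    simp [hL, hC, ContinuousLinearMap.smulRight_apply]
    ring
  constructor
  · -- positive direction: T
    refine ⟨T, ?_⟩
    have hPT : P T = 0 := by
      apply Subtype.ext
      rw [hPcoe]
      simp [hT]
    rw [heval T, hPT, hT]
    simp
  · -- negative definite subspace: ker Ω
    refine ⟨LinearMap.ker (Ω : E →ₗ[ℝ] ℝ), ?_, ?_⟩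
    · have hsurj : Function.Surjective Ω := by
        intro r
        exact ⟨r • T, by simp [hT]⟩
      have := LinearMap.finrank_range_add_finrank_ker (Ω : E →ₗ[ℝ] ℝ)
      have hrange : LinearMap.range (Ω : E →ₗ[ℝ] ℝ) = ⊤ :=
        LinearMap.range_eq_top.mpr hsurj
      rw [hrange, finrank_top] at this
      simpa [Module.finrank_self, add_comm] using this
    · intro h hh hh0
      have hΩh : Ω h = 0 := hh
      have hPh : P h = (⟨h, hh⟩ : ↥(LinearMap.ker (Ω : E →ₗ[ℝ] ℝ))) := by
        apply Subtype.ext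
        rw [hPcoe]
        simp [hΩh]
      have hKne : (⟨h, hh⟩ : ↥(LinearMap.ker (Ω : E →ₗ[ℝ] ℝ))) ≠ 0 := by
        intro h0
        exact hh0 (by simpa using congrArg Subtype.val h0)
      have hp := hpos (P v) hvP ⟨h, hh⟩ hKne
      rw [← hD2] at hp
      rw [heval h, hPh, hΩh]
      simpa using hp
end

section
/- Let E be a finite-dimensional real normed vector space and let (Ω, T, F) be cone-triple data on E. Define 𝒢 : E → ℝ by 𝒢(v) = Ω(v)² − F(π(v))². Then for all causal vectors v, w ∈ E, i.e., vectors satisfying Ω(v) ≥ F(π(v)) and Ω(w) ≥ F(π(w)), one has the reverse triangle inequality sqrt(𝒢(v + w)) ≥ sqrt(𝒢(v)) + sqrt(𝒢(w)). -/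
lemma stmt13_aux (a b p q r : ℝ) (hp0 : 0 ≤ p) (hq0 : 0 ≤ q) (hr0 : 0 ≤ r)
    (hv : p ≤ a) (hw : q ≤ b) (hr : r ≤ p + q) :
    Real.sqrt (a ^ 2 - p ^ 2) + Real.sqrt (b ^ 2 - q ^ 2) ≤
      Real.sqrt ((a + b) ^ 2 - r ^ 2) := by
  have h𝒢v0 : 0 ≤ a ^ 2 - p ^ 2 := by nlinarith
  have h𝒢w0 : 0 ≤ b ^ 2 - q ^ 2 := by nlinarith
  have h1 : (a + b) ^ 2 - (p + q) ^ 2 ≤ (a + b) ^ 2 - r ^ 2 := by nlinarith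
  have hab : 0 ≤ a * b - p * q := by nlinarith
  have habpq : Real.sqrt (a ^ 2 - p ^ 2) * Real.sqrt (b ^ 2 - q ^ 2) ≤ a * b - p * q := by
    rw [← Real.sqrt_mul h𝒢v0]
    have hle : (a ^ 2 - p ^ 2) * (b ^ 2 - q ^ 2) ≤ (a * b - p * q) ^ 2 := by
      nlinarith [sq_nonneg (a * q - b * p)]
    calc Real.sqrt ((a ^ 2 - p ^ 2) * (b ^ 2 - q ^ 2))
        ≤ Real.sqrt ((a * b - p * q) ^ 2) := Real.sqrt_le_sqrt hle
      _ = a * b - p * q := Real.sqrt_sq hab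
  have key : Real.sqrt (a ^ 2 - p ^ 2) + Real.sqrt (b ^ 2 - q ^ 2) ≤
      Real.sqrt ((a + b) ^ 2 - (p + q) ^ 2) := by
    rw [show Real.sqrt (a ^ 2 - p ^ 2) + Real.sqrt (b ^ 2 - q ^ 2)
        = Real.sqrt ((Real.sqrt (a ^ 2 - p ^ 2) + Real.sqrt (b ^ 2 - q ^ 2)) ^ 2) from
      (Real.sqrt_sq (by positivity)).symm]
    apply Real.sqrt_le_sqrt
    have e1 := Real.sq_sqrt h𝒢v0
    have e2 := Real.sq_sqrt h𝒢w0
    nlinarith [e1, e2, habpq]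
  exact key.trans (Real.sqrt_le_sqrt h1)

/-- Given cone-triple data `(Ω, T, F)`, the function `𝒢(v) = Ω(v)² − F(π(v))²`
satisfies the reverse triangle inequality on causal vectors:
`√𝒢(v+w) ≥ √𝒢(v) + √𝒢(w)` whenever `Ω(v) ≥ F(π(v))` and `Ω(w) ≥ F(π(w))`. -/
theorem stmt13 {E : Type*} [NormedAddCommGroup E] [NormedSpace ℝ E] [FiniteDimensional ℝ E]
    (Ω : E →L[ℝ] ℝ) (hΩ : Ω ≠ 0) (T : E) (hT : Ω T = 1)
    (π : E → ↥(LinearMap.ker (Ω : E →ₗ[ℝ] ℝ))) (hπ : ∀ v : E, (π v : E) = v - Ω v • T)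
    (F : ↥(LinearMap.ker (Ω : E →ₗ[ℝ] ℝ)) → ℝ)
    (hF0 : ∀ w, 0 ≤ F w) (hFeq : ∀ w, F w = 0 ↔ w = 0)
    (hFhom : ∀ c : ℝ, 0 ≤ c → ∀ w, F (c • w) = c * F w)
    (hFtri : ∀ w w', F (w + w') ≤ F w + F w')
    (𝒢 : E → ℝ) (h𝒢 : ∀ v : E, 𝒢 v = (Ω v) ^ 2 - (F (π v)) ^ 2) :
    ∀ v w : E, F (π v) ≤ Ω v → F (π w) ≤ Ω w →
      Real.sqrt (𝒢 v) + Real.sqrt (𝒢 w) ≤ Real.sqrt (𝒢 (v + w)) := by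
  intro v w hv hw
  have hπadd : π (v + w) = π v + π w := by
    apply Subtype.ext
    push_cast [hπ]
    rw [map_add]
    module
  have hr : F (π (v + w)) ≤ F (π v) + F (π w) := by rw [hπadd]; exact hFtri _ _
  rw [h𝒢 v, h𝒢 w, h𝒢 (v + w), map_add]
  exact stmt13_aux (Ω v) (Ω w) (F (π v)) (F (π w)) (F (π (v + w)))
    (hF0 _) (hF0 _) (hF0 _) hv hw hr
end

section
/- Let E be a finite-dimensional real normed vector space, let A ⊆ E be an open convex salient cone, and let L be a Lorentz–Minkowski norm on A. Then the reverse triangle inequality holds for causal vectors: for all v, w ∈ closure(A) ∖ {0}, one has L(v + w) ≥ (sqrt(L(v)) + sqrt(L(w)))². Moreover, if v, w ∈ A are timelike and w is not a positive scalar multiple of v, the inequality is strict. -/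
open Filter Topology Module

section Aux

variable {E : Type*} [NormedAddCommGroup E] [NormedSpace ℝ E]
  {L : E → ℝ} {U A : Set E}

lemma lorentz_cs {E : Type*} [NormedAddCommGroup E] [NormedSpace ℝ E] [FiniteDimensional ℝ E]
    (B : E →L[ℝ] E →L[ℝ] ℝ) (hsymm : ∀ x y, B x y = B y x)
    (H : Submodule ℝ E) (hH : finrank ℝ H + 1 = finrank ℝ E)
    (hneg : ∀ h ∈ H, h ≠ 0 → B h h < 0)
    {v w : E} (hv : 0 < B v v) (hw : ∀ c : ℝ, w ≠ c • v) :
    B v v * B w w < (B v w)^2 := by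
  have hv0 : v ≠ 0 := by rintro rfl; simp at hv
  have hli : LinearIndependent ℝ ![v, w] := by
    rw [LinearIndependent.pair_iff]
    intro s t hst
    by_contra hc
    rcases eq_or_ne t 0 with rfl | ht
    · rcases eq_or_ne s 0 with rfl | hs
      · exact hc ⟨rfl, rfl⟩
      · apply hv0
        have := hst
        simp only [zero_smul, add_zero] at this
        simpa [smul_eq_zero, hs] using this
    · apply hw (-s/t)
      have h2 : t • w = (-s) • v := by
        rw [neg_smul]
        exact eq_neg_of_add_eq_zero_right hst
      have h3 : w = (t⁻¹ * (-s)) • v := by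
        rw [← smul_smul, ← h2, smul_smul, inv_mul_cancel₀ ht, one_smul]
      rw [h3, div_eq_mul_inv, mul_comm]
  set S : Submodule ℝ E := Submodule.span ℝ {v, w} with hS
  have hSrank : finrank ℝ S = 2 := by
    have h1 : Set.range ![v, w] = {v, w} := by
      simp [Matrix.range_cons, Matrix.range_empty, Set.pair_comm]
    have := finrank_span_eq_card hli
    rw [h1] at this
    rw [hS, this]
    simp [Fintype.card_fin]
  have hle : finrank ℝ ↥(S ⊔ H) ≤ finrank ℝ E := Submodule.finrank_le _
  have hsum := Submodule.finrank_sup_add_finrank_inf_eq S H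
  have hinf : 0 < finrank ℝ ↥(S ⊓ H) := by omega
  have hnb : S ⊓ H ≠ ⊥ := by
    intro hbot
    rw [hbot] at hinf
    simp at hinf
  obtain ⟨h, hhSH, hh0⟩ := Submodule.exists_mem_ne_zero_of_ne_bot hnb
  have hhS : h ∈ S := hhSH.1
  have hhH : h ∈ H := hhSH.2
  obtain ⟨α, β, hab⟩ := Submodule.mem_span_pair.mp hhS
  have hBh : B h h < 0 := hneg h hhH hh0
  have hβ : β ≠ 0 := by
    rintro rfl
    have hα : α ≠ 0 := by rintro rfl; simp at hab; exact hh0 hab.symm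
    have : B h h = α^2 * B v v := by
      rw [← hab]
      simp [map_add, map_smul, zero_smul, add_zero]
      ring
    nlinarith [sq_nonneg α, mul_pos (mul_pos hv hv) hv]
  have hexp : B h h = α^2 * B v v + 2*α*β * B v w + β^2 * B w w := by
    rw [← hab]
    simp [map_add, map_smul]
    rw [hsymm w v]
    ring
  nlinarith [sq_nonneg (α * B v v + β * B v w), sq_nonneg β, mul_pos hv hv, sq_pos_of_ne_zero hβ]

lemma diffAt (hUo : IsOpen U) (hC2 : ContDiffOn ℝ 2 L U) {x : E} (hx : x ∈ U) :
    DifferentiableAt ℝ L x :=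
  ((hC2.contDiffAt (hUo.mem_nhds hx)).differentiableAt two_ne_zero)

lemma diffAt2 (hUo : IsOpen U) (hC2 : ContDiffOn ℝ 2 L U) {x : E} (hx : x ∈ U) :
    DifferentiableAt ℝ (fderiv ℝ L) x := by
  have h := (hC2.contDiffAt (hUo.mem_nhds hx)).fderiv_right (m := 1) (by norm_num)
  exact h.differentiableAt one_ne_zero

lemma euler1 (hUo : IsOpen U) (hC2 : ContDiffOn ℝ 2 L U)
    (hhom : ∀ v ∈ U, ∀ c : ℝ, 0 < c → L (c • v) = c ^ 2 * L v)
    {v : E} (hv : v ∈ U) : fderiv ℝ L v v = 2 * L v := by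
  have hγ : HasDerivAt (fun c : ℝ => c • v) v 1 := by
    simpa using (hasDerivAt_id (1:ℝ)).smul_const v
  have h1 : HasDerivAt (fun c : ℝ => L (c • v)) (fderiv ℝ L v v) 1 := by
    have hF : HasFDerivAt L (fderiv ℝ L v) ((1:ℝ) • v) := by
      rw [one_smul]; exact (diffAt hUo hC2 hv).hasFDerivAt
    have := hF.comp_hasDerivAt (x := (1:ℝ)) hγ
    simpa [Function.comp_def] using this
  have heq : (fun c : ℝ => L (c • v)) =ᶠ[𝓝 (1:ℝ)] fun c => c ^ 2 * L v := by
    filter_upwards [eventually_gt_nhds zero_lt_one] with c hc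
    exact hhom v hv c hc
  have h2 : HasDerivAt (fun c : ℝ => c ^ 2 * L v) (fderiv ℝ L v v) 1 :=
    h1.congr_of_eventuallyEq heq.symm
  have h3 : HasDerivAt (fun c : ℝ => c ^ 2 * L v) (2 * L v) 1 := by
    simpa using (hasDerivAt_pow 2 (1:ℝ)).mul_const (L v)
  exact h2.unique h3


lemma homD (hUo : IsOpen U) (hC2 : ContDiffOn ℝ 2 L U)
    (hhom : ∀ v ∈ U, ∀ c : ℝ, 0 < c → L (c • v) = c ^ 2 * L v)
    {v : E} (hv : v ∈ U) {c : ℝ} (hc : 0 < c) (hcv : c • v ∈ U) :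
    fderiv ℝ L (c • v) = c • fderiv ℝ L v := by
  have hsm : HasFDerivAt (fun x : E => c • x) (c • ContinuousLinearMap.id ℝ E) v := by
    exact ((hasFDerivAt_id v).const_smul c)
  have h1 : HasFDerivAt (fun x : E => L (c • x))
      ((fderiv ℝ L (c • v)).comp (c • ContinuousLinearMap.id ℝ E)) v :=
    ((diffAt hUo hC2 hcv).hasFDerivAt).comp v hsm
  have heq : (fun x : E => L (c • x)) =ᶠ[𝓝 v] fun x => c ^ 2 * L x := by
    filter_upwards [hUo.mem_nhds hv] with x hx
    exact hhom x hx c hc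
  have h2 : HasFDerivAt (fun x : E => c ^ 2 * L x)
      ((fderiv ℝ L (c • v)).comp (c • ContinuousLinearMap.id ℝ E)) v :=
    h1.congr_of_eventuallyEq heq.symm
  have h3 : HasFDerivAt (fun x : E => c ^ 2 * L x) ((c ^ 2) • fderiv ℝ L v) v :=
    (diffAt hUo hC2 hv).hasFDerivAt.const_smul (c ^ 2)
  have h4 := h2.unique h3
  ext w
  have := congrArg (fun (T : E →L[ℝ] ℝ) => T w) h4
  simp only [ContinuousLinearMap.coe_comp', Function.comp_apply,
    ContinuousLinearMap.smul_apply, ContinuousLinearMap.coe_id',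
    ContinuousLinearMap.coe_smul'] at this ⊢
  have hc0 : c ≠ 0 := ne_of_gt hc
  simp only [Pi.smul_apply, id_eq, map_smul, smul_eq_mul] at this ⊢
  apply mul_left_cancel₀ hc0
  rw [this]; ring

lemma euler2 (hUo : IsOpen U) (hC2 : ContDiffOn ℝ 2 L U)
    (hhom : ∀ v ∈ U, ∀ c : ℝ, 0 < c → L (c • v) = c ^ 2 * L v)
    {v : E} (hv : v ∈ U) : fderiv ℝ (fderiv ℝ L) v v = fderiv ℝ L v := by
  have hγ : HasDerivAt (fun c : ℝ => c • v) v 1 := by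
    simpa using (hasDerivAt_id (1:ℝ)).smul_const v
  have h1 : HasDerivAt (fun c : ℝ => fderiv ℝ L (c • v)) (fderiv ℝ (fderiv ℝ L) v v) 1 := by
    have hF : HasFDerivAt (fderiv ℝ L) (fderiv ℝ (fderiv ℝ L) v) ((1:ℝ) • v) := by
      rw [one_smul]; exact (diffAt2 hUo hC2 hv).hasFDerivAt
    have := hF.comp_hasDerivAt (x := (1:ℝ)) hγ
    simpa [Function.comp_def] using this
  have heq : (fun c : ℝ => fderiv ℝ L (c • v)) =ᶠ[𝓝 (1:ℝ)] fun c => c • fderiv ℝ L v := by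
    have hmem : ∀ᶠ c : ℝ in 𝓝 1, c • v ∈ U := by
      have hcont : Continuous (fun c : ℝ => c • v) := by continuity
      have : (fun c : ℝ => c • v) ⁻¹' U ∈ 𝓝 (1:ℝ) :=
        hcont.continuousAt.preimage_mem_nhds (by rw [one_smul]; exact hUo.mem_nhds hv)
      exact this
    filter_upwards [eventually_gt_nhds zero_lt_one, hmem] with c hc hcv
    exact homD hUo hC2 hhom hv hc hcv
  have h2 : HasDerivAt (fun c : ℝ => c • fderiv ℝ L v) (fderiv ℝ (fderiv ℝ L) v v) 1 :=
    h1.congr_of_eventuallyEq heq.symm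
  have h3 : HasDerivAt (fun c : ℝ => c • fderiv ℝ L v) (fderiv ℝ L v) 1 := by
    simpa using (hasDerivAt_id (1:ℝ)).smul_const (fderiv ℝ L v)
  exact h2.unique h3
lemma line1 (hUo : IsOpen U) (hC2 : ContDiffOn ℝ 2 L U) {x d : E} {t : ℝ}
    (hx : x + t • d ∈ U) :
    HasDerivAt (fun s : ℝ => L (x + s • d)) (fderiv ℝ L (x + t • d) d) t := by
  have hγ : HasDerivAt (fun s : ℝ => x + s • d) d t := by
    simpa using ((hasDerivAt_id t).smul_const d).const_add x
  have hF : HasFDerivAt L (fderiv ℝ L (x + t • d)) (x + t • d) :=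
    (diffAt hUo hC2 hx).hasFDerivAt
  simpa [Function.comp_def] using hF.comp_hasDerivAt t hγ

lemma line2 (hUo : IsOpen U) (hC2 : ContDiffOn ℝ 2 L U) {x d : E} {t : ℝ}
    (hx : x + t • d ∈ U) :
    HasDerivAt (fun s : ℝ => fderiv ℝ L (x + s • d) d)
      (fderiv ℝ (fderiv ℝ L) (x + t • d) d d) t := by
  have hγ : HasDerivAt (fun s : ℝ => x + s • d) d t := by
    simpa using ((hasDerivAt_id t).smul_const d).const_add x
  have hF : HasFDerivAt (fderiv ℝ L) (fderiv ℝ (fderiv ℝ L) (x + t • d)) (x + t • d) :=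
    (diffAt2 hUo hC2 hx).hasFDerivAt
  have h1 : HasDerivAt (fun s : ℝ => fderiv ℝ L (x + s • d))
      (fderiv ℝ (fderiv ℝ L) (x + t • d) d) t := by
    simpa [Function.comp_def] using hF.comp_hasDerivAt t hγ
  simpa using h1.clm_apply (hasDerivAt_const t d)
variable [FiniteDimensional ℝ E]

lemma pointwise (hUo : IsOpen U) (hC2 : ContDiffOn ℝ 2 L U)
    (hhom : ∀ v ∈ U, ∀ c : ℝ, 0 < c → L (c • v) = c ^ 2 * L v)
    (hpos : ∀ v ∈ A, 0 < L v)
    (hLor : ∀ v ∈ closure A, v ≠ 0 →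
      (∃ u : E, 0 < (1 / 2) * fderiv ℝ (fderiv ℝ L) v u u) ∧
      (∃ H : Submodule ℝ E, Module.finrank ℝ ↥H + 1 = Module.finrank ℝ E ∧
        ∀ h ∈ H, h ≠ 0 → (1 / 2) * fderiv ℝ (fderiv ℝ L) v h h < 0))
    (h0 : (0:E) ∉ A) (hAU : A ⊆ U)
    {u : E} (huA : u ∈ A) (d : E) :
    2 * L u * fderiv ℝ (fderiv ℝ L) u d d ≤ (fderiv ℝ L u d) ^ 2 ∧
    ((∀ c : ℝ, d ≠ c • u) →
      2 * L u * fderiv ℝ (fderiv ℝ L) u d d < (fderiv ℝ L u d) ^ 2) := by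
  have huU : u ∈ U := hAU huA
  have hu0 : u ≠ 0 := fun h => h0 (h ▸ huA)
  have hsymm : ∀ x y, fderiv ℝ (fderiv ℝ L) u x y = fderiv ℝ (fderiv ℝ L) u y x := by
    intro x y
    exact (hC2.contDiffAt (hUo.mem_nhds huU)).isSymmSndFDerivAt (by simp [minSmoothness]) x y
  have hBuu : fderiv ℝ (fderiv ℝ L) u u u = 2 * L u := by
    rw [euler2 hUo hC2 hhom huU, euler1 hUo hC2 hhom huU]
  have hBud : fderiv ℝ (fderiv ℝ L) u u d = fderiv ℝ L u d := by
    rw [euler2 hUo hC2 hhom huU]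
  have hBuupos : 0 < fderiv ℝ (fderiv ℝ L) u u u := by
    rw [hBuu]; have := hpos u huA; linarith
  obtain ⟨-, H, hH, hneg⟩ := hLor u (subset_closure huA) hu0
  have hneg' : ∀ h ∈ H, h ≠ 0 → fderiv ℝ (fderiv ℝ L) u h h < 0 := by
    intro h hh h0'
    have := hneg h hh h0'
    linarith
  have hstrict : (∀ c : ℝ, d ≠ c • u) →
      2 * L u * fderiv ℝ (fderiv ℝ L) u d d < (fderiv ℝ L u d) ^ 2 := by
    intro hprop
    have := lorentz_cs (fderiv ℝ (fderiv ℝ L) u) hsymm H hH hneg' hBuupos hprop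
    rw [hBuu, hBud] at this
    nlinarith [this]
  refine ⟨?_, hstrict⟩
  by_cases hprop : ∃ c : ℝ, d = c • u
  · obtain ⟨c, hc⟩ := hprop
    have h1 : fderiv ℝ (fderiv ℝ L) u u d = c * fderiv ℝ (fderiv ℝ L) u u u := by
      rw [hc, map_smul, smul_eq_mul]
    have h2 : fderiv ℝ (fderiv ℝ L) u d d = c ^ 2 * fderiv ℝ (fderiv ℝ L) u u u := by
      calc fderiv ℝ (fderiv ℝ L) u d d
          = c * fderiv ℝ (fderiv ℝ L) u u d := by
            nth_rewrite 1 [hc]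
            rw [map_smul, ContinuousLinearMap.smul_apply, smul_eq_mul]
      _ = c ^ 2 * fderiv ℝ (fderiv ℝ L) u u u := by rw [h1]; ring
    rw [h2, ← hBud, h1, ← hBuu]
    nlinarith [hBuupos]
  · push_neg at hprop
    exact le_of_lt (hstrict hprop)

lemma key (hAo : IsOpen A) (hAc : Convex ℝ A)
    (hcone : ∀ v ∈ A, ∀ c : ℝ, 0 < c → c • v ∈ A)
    (hUo : IsOpen U) (hUA : closure A \ {0} ⊆ U)
    (hC2 : ContDiffOn ℝ 2 L U)
    (hhom : ∀ v ∈ U, ∀ c : ℝ, 0 < c → L (c • v) = c ^ 2 * L v)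
    (hpos : ∀ v ∈ A, 0 < L v)
    (hLor : ∀ v ∈ closure A, v ≠ 0 →
      (∃ u : E, 0 < (1 / 2) * fderiv ℝ (fderiv ℝ L) v u u) ∧
      (∃ H : Submodule ℝ E, Module.finrank ℝ ↥H + 1 = Module.finrank ℝ E ∧
        ∀ h ∈ H, h ≠ 0 → (1 / 2) * fderiv ℝ (fderiv ℝ L) v h h < 0))
    (h0 : (0:E) ∉ A)
    {v w : E} (hv : v ∈ A) (hw : w ∈ A) :
    Real.sqrt (L v) + Real.sqrt (L w) ≤ Real.sqrt (L (v + w)) ∧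
      ((∀ c : ℝ, w ≠ c • v) → Real.sqrt (L v) + Real.sqrt (L w) < Real.sqrt (L (v + w))) := by
  have hAU : A ⊆ U := by
    intro x hx
    exact hUA ⟨subset_closure hx, by simp; rintro rfl; exact h0 hx⟩
  set d : E := w - v with hd
  set I : Set ℝ := {t : ℝ | v + t • d ∈ A} with hI
  have hIo : IsOpen I := hAo.preimage (by continuity)
  have hIc : Convex ℝ I := by
    intro x hx y hy a b ha hb hab
    have h1 : a • (v + x • d) + b • (v + y • d) = v + (a * x + b * y) • d := by
      have h2 : a • (v + x • d) + b • (v + y • d)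
          = (a + b) • v + (a * x + b * y) • d := by module
      rw [h2, hab, one_smul]
    show v + (a * x + b * y) • d ∈ A
    rw [← h1]
    exact hAc hx hy ha hb hab
  have h0I : (0:ℝ) ∈ I := by simp [hI]; exact hv
  have h1I : (1:ℝ) ∈ I := by simp [hI, hd]; exact hw
  have hmemA : ∀ t ∈ I, v + t • d ∈ A := fun t ht => ht
  have hmemU : ∀ t ∈ I, v + t • d ∈ U := fun t ht => hAU (hmemA t ht)
  have hlpos : ∀ t ∈ I, 0 < L (v + t • d) := fun t ht => hpos _ (hmemA t ht)
  -- key second-order inequality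
  have hkey : ∀ t ∈ I,
      2 * L (v + t • d) * fderiv ℝ (fderiv ℝ L) (v + t • d) d d
        ≤ (fderiv ℝ L (v + t • d) d) ^ 2 ∧
      ((∀ c : ℝ, w ≠ c • v) →
        2 * L (v + t • d) * fderiv ℝ (fderiv ℝ L) (v + t • d) d d
          < (fderiv ℝ L (v + t • d) d) ^ 2) := by
    intro t ht
    obtain ⟨hle, hst⟩ := pointwise hUo hC2 hhom hpos hLor h0 hAU (hmemA t ht) d
    refine ⟨hle, fun hwv => hst ?_⟩
    intro c hc
    have hc0 : c ≠ 0 := by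
      rintro rfl
      rw [zero_smul] at hc
      apply hwv 1
      rw [one_smul]
      have h5 : w - v = 0 := hc
      linear_combination (norm := module) h5
    have hexp : (1 - c * t) • d = c • v := by
      have h5 : d = c • v + (c * t) • d := by
        nth_rewrite 1 [hc]
        rw [smul_add, smul_smul]
      rw [sub_smul, one_smul]
      linear_combination (norm := module) h5
    by_cases hct : 1 - c * t = 0
    · have hveq : c • v = 0 := by rw [← hexp, hct, zero_smul]
      rcases smul_eq_zero.mp hveq with h | h
      · exact hc0 h
      · exact h0 (h ▸ hv)
    · apply hwv ((1 - c * t + c) / (1 - c * t))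
      have h3 : (1 - c * t) • w = (1 - c * t + c) • v := by
        rw [hd, smul_sub] at hexp
        rw [add_smul]
        linear_combination (norm := module) hexp
      rw [div_eq_mul_inv, mul_comm, ← smul_smul, ← h3, smul_smul,
        inv_mul_cancel₀ hct, one_smul]
  -- derivatives of φ = sqrt ∘ ℓ
  set φ : ℝ → ℝ := fun t => Real.sqrt (L (v + t • d)) with hφdef
  set ψ : ℝ → ℝ := fun t => fderiv ℝ L (v + t • d) d / (2 * Real.sqrt (L (v + t • d))) with hψdef
  set Df : ℝ → ℝ := fun t =>
    (fderiv ℝ (fderiv ℝ L) (v + t • d) d d * (2 * Real.sqrt (L (v + t • d)))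
      - fderiv ℝ L (v + t • d) d * (2 * ψ t)) / (2 * Real.sqrt (L (v + t • d))) ^ 2 with hDdef
  have hφ' : ∀ t ∈ I, HasDerivAt φ (ψ t) t := by
    intro t ht
    exact (line1 hUo hC2 (hmemU t ht)).sqrt (ne_of_gt (hlpos t ht))
  have hden : ∀ t ∈ I, HasDerivAt (fun s => 2 * Real.sqrt (L (v + s • d))) (2 * ψ t) t := by
    intro t ht
    exact (hφ' t ht).const_mul 2
  have hψ' : ∀ t ∈ I, HasDerivAt ψ (Df t) t := by
    intro t ht
    have hdenne : 2 * Real.sqrt (L (v + t • d)) ≠ 0 := by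
      have := Real.sqrt_pos.mpr (hlpos t ht)
      positivity
    exact (line2 hUo hC2 (hmemU t ht)).div (hden t ht) hdenne
  have hsqrtpos : ∀ t ∈ I, 0 < Real.sqrt (L (v + t • d)) :=
    fun t ht => Real.sqrt_pos.mpr (hlpos t ht)
  have hsq : ∀ t ∈ I, (Real.sqrt (L (v + t • d))) ^ 2 = L (v + t • d) :=
    fun t ht => Real.sq_sqrt (le_of_lt (hlpos t ht))
  have hDle : ∀ t ∈ I, Df t ≤ 0 := by
    intro t ht
    have hs := hsqrtpos t ht
    have hs2 := hsq t ht
    have hk := (hkey t ht).1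
    rw [hDdef]
    apply div_nonpos_of_nonpos_of_nonneg _ (sq_nonneg _)
    have hψval : ψ t = fderiv ℝ L (v + t • d) d / (2 * Real.sqrt (L (v + t • d))) := rfl
    rw [hψval]
    set a := fderiv ℝ (fderiv ℝ L) (v + t • d) d d
    set b := fderiv ℝ L (v + t • d) d
    set s := Real.sqrt (L (v + t • d))
    have hb : b * (2 * (b / (2 * s))) = b ^ 2 / s := by
      field_simp
    rw [hb, sub_nonpos, le_div_iff₀ hs]
    have heq : a * (2 * s) * s = 2 * L (v + t • d) * a := by rw [← hs2]; ring
    rw [heq]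
    exact hk
  have hDlt : (∀ c : ℝ, w ≠ c • v) → ∀ t ∈ I, Df t < 0 := by
    intro hwv t ht
    have hs := hsqrtpos t ht
    have hs2 := hsq t ht
    have hk := (hkey t ht).2 hwv
    rw [hDdef]
    apply div_neg_of_neg_of_pos _ (by positivity)
    have hψval : ψ t = fderiv ℝ L (v + t • d) d / (2 * Real.sqrt (L (v + t • d))) := rfl
    rw [hψval]
    set a := fderiv ℝ (fderiv ℝ L) (v + t • d) d d
    set b := fderiv ℝ L (v + t • d) d
    set s := Real.sqrt (L (v + t • d))
    have hb : b * (2 * (b / (2 * s))) = b ^ 2 / s := by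
      field_simp
    rw [hb, sub_neg, lt_div_iff₀ hs]
    have heq : a * (2 * s) * s = 2 * L (v + t • d) * a := by rw [← hs2]; ring
    rw [heq]
    exact hk
  have hcont : ContinuousOn φ I := fun t ht => (hφ' t ht).continuousAt.continuousWithinAt
  -- special values
  have hvw : v + w ∈ A := by
    have h1 : (2⁻¹:ℝ) • v + (2⁻¹:ℝ) • w ∈ A := hAc hv hw (by norm_num) (by norm_num) (by norm_num)
    have h2 := hcone _ h1 2 (by norm_num)
    have h3 : (2:ℝ) • ((2⁻¹:ℝ) • v + (2⁻¹:ℝ) • w) = v + w := by module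
    rwa [h3] at h2
  have hmid : v + (2⁻¹:ℝ) • d = (2⁻¹:ℝ) • (v + w) := by rw [hd]; module
  have hhalfI : (2⁻¹:ℝ) ∈ I := by
    show v + (2⁻¹:ℝ) • d ∈ A
    rw [hmid]
    exact hcone _ hvw 2⁻¹ (by norm_num)
  have hφ0 : φ 0 = Real.sqrt (L v) := by rw [hφdef]; simp
  have hφ1 : φ 1 = Real.sqrt (L w) := by
    have h9 : v + (1:ℝ) • d = w := by rw [hd]; module
    rw [hφdef]
    show Real.sqrt (L (v + (1:ℝ) • d)) = Real.sqrt (L w)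
    rw [h9]
  have hφhalf : φ 2⁻¹ = 2⁻¹ * Real.sqrt (L (v + w)) := by
    rw [hφdef]
    show Real.sqrt (L (v + (2⁻¹:ℝ) • d)) = 2⁻¹ * Real.sqrt (L (v + w))
    rw [hmid, hhom _ (hAU hvw) 2⁻¹ (by norm_num)]
    rw [Real.sqrt_mul (by positivity), Real.sqrt_sq (by norm_num : (0:ℝ) ≤ 2⁻¹)]
  constructor
  · -- weak inequality
    have hconc : ConcaveOn ℝ I φ := by
      apply concaveOn_of_hasDerivWithinAt2_nonpos hIc hcont (f' := ψ) (f'' := Df)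
      · intro x hx
        rw [hIo.interior_eq] at hx
        exact (hφ' x hx).hasDerivWithinAt
      · intro x hx
        rw [hIo.interior_eq] at hx
        exact (hψ' x hx).hasDerivWithinAt
      · intro x hx
        rw [hIo.interior_eq] at hx
        exact hDle x hx
    have := hconc.2 h0I h1I (by norm_num : (0:ℝ) ≤ 2⁻¹) (by norm_num : (0:ℝ) ≤ 2⁻¹) (by norm_num)
    have harg : (2⁻¹:ℝ) • (0:ℝ) + (2⁻¹:ℝ) • (1:ℝ) = 2⁻¹ := by norm_num
    rw [harg, hφ0, hφ1, hφhalf] at this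
    simp only [smul_eq_mul] at this
    linarith
  · -- strict inequality
    intro hwv
    have hsconc : StrictConcaveOn ℝ I φ := by
      apply strictConcaveOn_of_deriv2_neg hIc hcont
      intro x hx
      rw [hIo.interior_eq] at hx
      have hEq : deriv φ =ᶠ[𝓝 x] ψ := by
        filter_upwards [hIo.mem_nhds hx] with s hs
        exact (hφ' s hs).deriv
      have h2 : deriv (deriv φ) x = deriv ψ x := hEq.deriv_eq
      have h3 : deriv ψ x = Df x := (hψ' x hx).deriv
      show deriv (deriv φ) x < 0
      rw [h2, h3]
      exact hDlt hwv x hx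
    have := hsconc.2 h0I h1I (by norm_num : (0:ℝ) ≠ 1)
      (by norm_num : (0:ℝ) < 2⁻¹) (by norm_num : (0:ℝ) < 2⁻¹) (by norm_num)
    have harg : (2⁻¹:ℝ) • (0:ℝ) + (2⁻¹:ℝ) • (1:ℝ) = 2⁻¹ := by norm_num
    rw [harg, hφ0, hφ1, hφhalf] at this
    simp only [smul_eq_mul] at this
    linarith

end Aux

/-- A Lorentz–Minkowski norm `L` on an open convex salient cone `A` satisfies the
reverse triangle inequality `L(v+w) ≥ (√L(v) + √L(w))²` for causal vectors
`v, w ∈ closure A ∖ {0}`, with strict inequality when `v, w` are timelike and `w` is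
not a positive scalar multiple of `v`. -/
theorem stmt14 {E : Type*} [NormedAddCommGroup E] [NormedSpace ℝ E] [FiniteDimensional ℝ E]
    (A : Set E) (hne : A.Nonempty) (hAo : IsOpen A) (hAc : Convex ℝ A)
    (hcone : ∀ v ∈ A, ∀ c : ℝ, 0 < c → c • v ∈ A)
    (hsal : closure A ∩ (-(closure A)) ⊆ {0})
    (L : E → ℝ) (U : Set E) (hUo : IsOpen U) (hUA : closure A \ {0} ⊆ U)
    (hC2 : ContDiffOn ℝ 2 L U)
    (hhom : ∀ v ∈ U, ∀ c : ℝ, 0 < c → L (c • v) = c ^ 2 * L v)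
    (hpos : ∀ v ∈ A, 0 < L v)
    (hnull : ∀ v ∈ frontier A, v ≠ 0 → L v = 0)
    (hLor : ∀ v ∈ closure A, v ≠ 0 →
      (∃ u : E, 0 < (1 / 2) * fderiv ℝ (fderiv ℝ L) v u u) ∧
      (∃ H : Submodule ℝ E, Module.finrank ℝ ↥H + 1 = Module.finrank ℝ E ∧
        ∀ h ∈ H, h ≠ 0 → (1 / 2) * fderiv ℝ (fderiv ℝ L) v h h < 0)) :
    (∀ v ∈ closure A, ∀ w ∈ closure A, v ≠ 0 → w ≠ 0 →
        (Real.sqrt (L v) + Real.sqrt (L w)) ^ 2 ≤ L (v + w)) ∧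
      (∀ v ∈ A, ∀ w ∈ A, (∀ c : ℝ, 0 < c → w ≠ c • v) →
        (Real.sqrt (L v) + Real.sqrt (L w)) ^ 2 < L (v + w)) := by
  by_cases h0 : (0:E) ∈ A
  · -- degenerate case: E is a subsingleton
    have hsub : ∀ x : E, x = 0 := by
      intro x
      by_contra hx
      obtain ⟨ε, hε, hball⟩ := Metric.isOpen_iff.mp hAo 0 h0
      have hxn : 0 < ‖x‖ := norm_pos_iff.mpr hx
      set y : E := (ε / (2 * ‖x‖)) • x with hy
      have hcoef : 0 < ε / (2 * ‖x‖) := by positivity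
      have hynorm : ‖y‖ < ε := by
        rw [hy, norm_smul]
        rw [Real.norm_eq_abs, abs_of_pos hcoef]
        rw [div_mul_eq_mul_div, mul_comm]
        rw [div_lt_iff₀ (by positivity)]
        nlinarith [hxn, hε]
      have hyA : y ∈ A := hball (by simpa [Metric.mem_ball, dist_zero_right] using hynorm)
      have hnyA : -y ∈ A := hball (by simpa [Metric.mem_ball, dist_zero_right] using hynorm)
      have hy0 : y ∈ ({0} : Set E) :=
        hsal ⟨subset_closure hyA, by rw [Set.mem_neg]; exact subset_closure hnyA⟩
      have : y = 0 := hy0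
      rw [hy, smul_eq_zero] at this
      rcases this with h | h
      · exact absurd h (ne_of_gt hcoef)
      · exact hx h
    constructor
    · intro v hv w hw hv0 _
      exact absurd (hsub v) hv0
    · intro v hv w hw hcw
      exact absurd (by rw [hsub w, hsub v, smul_zero]) (hcw 1 one_pos)
  · -- main case
    have hAU : A ⊆ U := fun x hx =>
      hUA ⟨subset_closure hx, fun h => h0 ((Set.mem_singleton_iff.mp h) ▸ hx)⟩
    have hAA : ∀ p ∈ A, ∀ q ∈ A, p + q ∈ A := by
      intro p hp q hq
      have h1 : (2⁻¹:ℝ) • p + (2⁻¹:ℝ) • q ∈ A :=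
        hAc hp hq (by norm_num) (by norm_num) (by norm_num)
      have h2 := hcone _ h1 2 (by norm_num)
      have h3 : (2:ℝ) • ((2⁻¹:ℝ) • p + (2⁻¹:ℝ) • q) = p + q := by module
      rwa [h3] at h2
    have hclA : ∀ x ∈ closure A, ∀ y ∈ A, x + y ∈ A := by
      intro x hx y hy
      obtain ⟨ε, hε, hball⟩ := Metric.isOpen_iff.mp hAo y hy
      obtain ⟨p, hp, hdist⟩ := Metric.mem_closure_iff.mp hx ε hε
      have hq : y + (x - p) ∈ A := by
        apply hball
        have h6 : dist (y + (x - p)) y = dist x p := by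
          rw [dist_eq_norm, dist_eq_norm]
          congr 1
          abel
        rw [Metric.mem_ball, h6]
        exact hdist
      have h5 : p + (y + (x - p)) = x + y := by module
      rw [← h5]
      exact hAA p hp _ hq
    have hscl : ∀ c : ℝ, 0 < c → ∀ x ∈ closure A, c • x ∈ closure A := by
      intro c hc x hx
      have hcont : Continuous (fun y : E => c • y) := continuous_const_smul c
      have h1 : c • x ∈ (fun y : E => c • y) '' closure A := ⟨x, hx, rfl⟩
      have h2 := image_closure_subset_closure_image hcont h1
      refine closure_mono ?_ h2
      rintro z ⟨y, hy, rfl⟩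
      exact hcone y hy c hc
    have hLnn : ∀ x ∈ closure A, x ≠ 0 → 0 ≤ L x := by
      intro x hx hx0
      by_cases hxA : x ∈ A
      · exact (hpos x hxA).le
      · have hfr : x ∈ frontier A := by
          rw [frontier, hAo.interior_eq]
          exact ⟨hx, hxA⟩
        exact (hnull x hfr hx0).ge
    constructor
    · -- weak inequality for causal vectors
      intro v hv w hw hv0 hw0
      obtain ⟨a, ha⟩ := hne
      have hvU : v ∈ U := hUA ⟨hv, hv0⟩
      have hwU : w ∈ U := hUA ⟨hw, hw0⟩
      have hvw0 : v + w ≠ 0 := by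
        intro h
        apply hv0
        have hwv : w = -v := eq_neg_of_add_eq_zero_right h
        exact hsal ⟨hv, by rw [Set.mem_neg]; rw [hwv] at hw; exact hw⟩
      have hvwcl : v + w ∈ closure A := by
        have h1 : (2⁻¹:ℝ) • v + (2⁻¹:ℝ) • w ∈ closure A :=
          hAc.closure hv hw (by norm_num) (by norm_num) (by norm_num)
        have h2 := hscl 2 (by norm_num) _ h1
        have h3 : (2:ℝ) • ((2⁻¹:ℝ) • v + (2⁻¹:ℝ) • w) = v + w := by module
        rwa [h3] at h2
      have hvwU : v + w ∈ U := hUA ⟨hvwcl, hvw0⟩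
      have hLc : ∀ x : E, x ∈ U → ∀ b : E,
          Filter.Tendsto (fun ε : ℝ => Real.sqrt (L (x + ε • b))) (nhds 0)
            (nhds (Real.sqrt (L x))) := by
        intro x hx b
        have hin : ContinuousAt (fun ε : ℝ => x + ε • b) 0 :=
          (continuous_const.add (continuous_id.smul continuous_const)).continuousAt
        have hLx : ContinuousAt L x := hC2.continuousOn.continuousAt (hUo.mem_nhds hx)
        have h1 : ContinuousAt (fun ε : ℝ => L (x + ε • b)) 0 :=
          ContinuousAt.comp (by simpa using hLx) hin
        have h2 : ContinuousAt (fun ε : ℝ => Real.sqrt (L (x + ε • b))) 0 :=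
          Real.continuous_sqrt.continuousAt.comp h1
        have h3 := h2.tendsto
        simp only [zero_smul, add_zero] at h3
        exact h3
      have hineq : ∀ ε ∈ Set.Ioi (0:ℝ),
          Real.sqrt (L (v + ε • a)) + Real.sqrt (L (w + ε • a))
            ≤ Real.sqrt (L (v + w + ε • (a + a))) := by
        intro ε hε
        have hεa : ε • a ∈ A := hcone a ha ε hε
        have hva : v + ε • a ∈ A := hclA v hv _ hεa
        have hwa : w + ε • a ∈ A := hclA w hw _ hεa
        have h1 := (key hAo hAc hcone hUo hUA hC2 hhom hpos hLor h0 hva hwa).1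
        have harg : (v + ε • a) + (w + ε • a) = v + w + ε • (a + a) := by module
        rwa [harg] at h1
      have hT1 : Filter.Tendsto
          (fun ε : ℝ => Real.sqrt (L (v + ε • a)) + Real.sqrt (L (w + ε • a)))
          (nhdsWithin 0 (Set.Ioi 0)) (nhds (Real.sqrt (L v) + Real.sqrt (L w))) :=
        ((hLc v hvU a).add (hLc w hwU a)).mono_left nhdsWithin_le_nhds
      have hT2 : Filter.Tendsto (fun ε : ℝ => Real.sqrt (L (v + w + ε • (a + a))))
          (nhdsWithin 0 (Set.Ioi 0)) (nhds (Real.sqrt (L (v + w)))) :=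
        (hLc (v + w) hvwU (a + a)).mono_left nhdsWithin_le_nhds
      have hle : Real.sqrt (L v) + Real.sqrt (L w) ≤ Real.sqrt (L (v + w)) :=
        le_of_tendsto_of_tendsto hT1 hT2 (eventually_nhdsWithin_of_forall hineq)
      calc (Real.sqrt (L v) + Real.sqrt (L w)) ^ 2
          ≤ (Real.sqrt (L (v + w))) ^ 2 := by
            apply pow_le_pow_left₀ (by positivity) hle
      _ = L (v + w) := Real.sq_sqrt (hLnn _ hvwcl hvw0)
    · -- strict inequality for timelike vectors
      intro v hv w hw hcw
      have hwv : ∀ c : ℝ, w ≠ c • v := by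
        intro c hc
        rcases lt_trichotomy c 0 with hlt | heq | hgt
        · have hnegw : -w ∈ A := by
            rw [hc, ← neg_smul]
            exact hcone v hv (-c) (by linarith)
          have hw0 : w ∈ ({0} : Set E) := hsal ⟨subset_closure hw,
            by rw [Set.mem_neg]; exact subset_closure hnegw⟩
          exact h0 ((Set.mem_singleton_iff.mp hw0) ▸ hw)
        · rw [heq, zero_smul] at hc
          exact h0 (hc ▸ hw)
        · exact hcw c hgt hc
      have hkey := (key hAo hAc hcone hUo hUA hC2 hhom hpos hLor h0 hv hw).2 hwv
      have hposvw : 0 < L (v + w) := hpos _ (hAA v hv w hw)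
      calc (Real.sqrt (L v) + Real.sqrt (L w)) ^ 2
          < (Real.sqrt (L (v + w))) ^ 2 := by
            apply pow_lt_pow_left₀ hkey (by positivity) (by norm_num)
      _ = L (v + w) := Real.sq_sqrt hposvw.le
end

section
/- Let (E₀, ⟪·,·⟫) be a finite-dimensional real inner product space, ω a continuous linear functional on E₀, and Λ > 0 a real number. Then the Fermat metric F(v) = (1/Λ) ω(v) + sqrt((1/Λ²) ω(v)² + (1/Λ) ⟪v,v⟫) is a non-symmetric norm on E₀: F(v) > 0 for every v ≠ 0, F(c • v) = c · F(v) for all c ≥ 0, and F(v + w) ≤ F(v) + F(w) for all v, w ∈ E₀. -/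
lemma stmt15_aux (a b c p q : ℝ) (hp : 0 ≤ p) (hq : 0 ≤ q) (hc : c ^ 2 ≤ p * q) :
    (a * b + c) ^ 2 ≤ (a ^ 2 + p) * (b ^ 2 + q) := by
  rcases eq_or_lt_of_le hq with h | h
  · have hc0 : c = 0 := by nlinarith [sq_nonneg c]
    subst hc0
    nlinarith [mul_nonneg hp (sq_nonneg b), mul_nonneg hp hq, sq_nonneg (a*b)]
  · nlinarith [sq_nonneg (a * q - b * c), mul_nonneg h.le (sub_nonneg.mpr hc),
      mul_nonneg (sq_nonneg b) (sub_nonneg.mpr hc), h]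

lemma stmt15_key (a b c p q : ℝ) (hp : 0 ≤ p) (hq : 0 ≤ q) (hc : c ^ 2 ≤ p * q) :
    a * b + c ≤ Real.sqrt (a ^ 2 + p) * Real.sqrt (b ^ 2 + q) := by
  have h1 : a * b + c ≤ |a * b + c| := le_abs_self _
  have h2 : |a * b + c| = Real.sqrt ((a * b + c) ^ 2) := (Real.sqrt_sq_eq_abs _).symm
  rw [← Real.sqrt_mul (by positivity)]
  calc a * b + c ≤ Real.sqrt ((a * b + c) ^ 2) := h2 ▸ h1
    _ ≤ Real.sqrt ((a ^ 2 + p) * (b ^ 2 + q)) :=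
      Real.sqrt_le_sqrt (stmt15_aux a b c p q hp hq hc)

/-- The Fermat (Randers) metric
`F(v) = (1/Λ) ω(v) + √((1/Λ²) ω(v)² + (1/Λ) ⟪v,v⟫)` associated with a continuous
linear functional `ω` and a constant `Λ > 0` on a finite-dimensional real inner
product space is a non-symmetric norm. -/
theorem stmt15 {E₀ : Type*} [NormedAddCommGroup E₀] [InnerProductSpace ℝ E₀]
    [FiniteDimensional ℝ E₀]
    (ω : E₀ →L[ℝ] ℝ) (Λ : ℝ) (hΛ : 0 < Λ)
    (F : E₀ → ℝ)
    (hF : ∀ v : E₀, F v = (1 / Λ) * ω v +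
      Real.sqrt ((1 / Λ ^ 2) * (ω v) ^ 2 + (1 / Λ) * (inner ℝ v v : ℝ))) :
    (∀ v : E₀, v ≠ 0 → 0 < F v) ∧
      (∀ c : ℝ, 0 ≤ c → ∀ v : E₀, F (c • v) = c * F v) ∧
      (∀ v w : E₀, F (v + w) ≤ F v + F w) := by
  have hinv : (0:ℝ) < 1 / Λ := by positivity
  refine ⟨?_, ?_, ?_⟩
  · intro v hv
    have hp : (0:ℝ) < inner ℝ v v := by
      rw [real_inner_self_eq_norm_sq]
      exact pow_pos (norm_pos_iff.mpr hv) 2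
    rw [hF v]
    set t : ℝ := (1 / Λ) * ω v with ht
    have heq : (1 / Λ ^ 2) * (ω v) ^ 2 = t ^ 2 := by rw [ht]; ring
    rw [heq]
    have hlt : |t| < Real.sqrt (t ^ 2 + (1 / Λ) * inner ℝ v v) := by
      rw [Real.lt_sqrt (abs_nonneg t), sq_abs]
      nlinarith
    have := neg_abs_le t
    linarith
  · intro c hc v
    rw [hF (c • v), hF v, map_smul, real_inner_smul_left, real_inner_smul_right]
    have heq : (1 / Λ ^ 2) * (c • ω v) ^ 2 + (1 / Λ) * (c * (c * inner ℝ v v))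
        = c ^ 2 * ((1 / Λ ^ 2) * (ω v) ^ 2 + (1 / Λ) * inner ℝ v v) := by
      simp [smul_eq_mul]; try ring
    rw [heq, Real.sqrt_mul (sq_nonneg c), Real.sqrt_sq hc]
    simp [smul_eq_mul]; try ring
  · intro v w
    rw [hF (v + w), hF v, hF w, map_add]
    set a : ℝ := (1 / Λ) * ω v with ha
    set b : ℝ := (1 / Λ) * ω w with hb
    have hpv : (0:ℝ) ≤ inner ℝ v v := real_inner_self_nonneg
    have hpw : (0:ℝ) ≤ inner ℝ w w := real_inner_self_nonneg
    set p : ℝ := (1 / Λ) * inner ℝ v v with hp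
    set q : ℝ := (1 / Λ) * inner ℝ w w with hq
    have hp0 : 0 ≤ p := by positivity
    have hq0 : 0 ≤ q := by positivity
    set c : ℝ := (1 / Λ) * inner ℝ v w with hcdef
    have hcs : (inner ℝ v w : ℝ) * inner ℝ v w ≤ inner ℝ v v * inner ℝ w w :=
      real_inner_mul_inner_self_le v w
    have hc2 : c ^ 2 ≤ p * q := by
      rw [hcdef, hp, hq]; nlinarith [sq_nonneg (1 / Λ)]
    have heqv : (1 / Λ ^ 2) * (ω v) ^ 2 = a ^ 2 := by rw [ha]; ring
    have heqw : (1 / Λ ^ 2) * (ω w) ^ 2 = b ^ 2 := by rw [hb]; ring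
    have hvw : (inner ℝ (v + w) (v + w) : ℝ) = inner ℝ v v + 2 * inner ℝ v w + inner ℝ w w := by
      rw [real_inner_add_add_self]; try ring
    have heqvw : (1 / Λ ^ 2) * (ω v + ω w) ^ 2 + (1 / Λ) * (inner ℝ (v + w) (v + w) : ℝ)
        = (a + b) ^ 2 + (p + q + 2 * c) := by
      rw [hvw, ha, hb, hp, hq, hcdef]; try ring
    rw [heqv, heqw, heqvw]
    have hkey : a * b + c ≤ Real.sqrt (a ^ 2 + p) * Real.sqrt (b ^ 2 + q) :=
      stmt15_key a b c p q hp0 hq0 hc2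
    have hsum : (a + b) ^ 2 + (p + q + 2 * c)
        ≤ (Real.sqrt (a ^ 2 + p) + Real.sqrt (b ^ 2 + q)) ^ 2 := by
      have h1 : Real.sqrt (a ^ 2 + p) ^ 2 = a ^ 2 + p := Real.sq_sqrt (by positivity)
      have h2 : Real.sqrt (b ^ 2 + q) ^ 2 = b ^ 2 + q := Real.sq_sqrt (by positivity)
      nlinarith
    have hfin : Real.sqrt ((a + b) ^ 2 + (p + q + 2 * c))
        ≤ Real.sqrt (a ^ 2 + p) + Real.sqrt (b ^ 2 + q) := by
      calc Real.sqrt ((a + b) ^ 2 + (p + q + 2 * c))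
          ≤ Real.sqrt ((Real.sqrt (a ^ 2 + p) + Real.sqrt (b ^ 2 + q)) ^ 2) :=
            Real.sqrt_le_sqrt hsum
        _ = Real.sqrt (a ^ 2 + p) + Real.sqrt (b ^ 2 + q) := by
            rw [Real.sqrt_sq (by positivity)]
    linarith [hfin]
end

section
/- Let (E₀, ⟪·,·⟫) be a finite-dimensional real inner product space, ω a continuous linear functional on E₀, and Λ > 0 a real number, and let F be the Fermat metric F(v) = (1/Λ) ω(v) + sqrt((1/Λ²) ω(v)² + (1/Λ) ⟪v,v⟫). Then F is C² on E₀ ∖ {0} and, for every v ≠ 0, the fundamental tensor g_v (the second Fréchet derivative of F²/2 at v) is positive definite; that is, the Fermat metric is a Minkowski (Randers) norm. -/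
open Real

section FermatAux

variable {E₀ : Type*} [NormedAddCommGroup E₀] [InnerProductSpace ℝ E₀]

noncomputable def innerL : E₀ →L[ℝ] E₀ →L[ℝ] ℝ := innerSL ℝ

@[simp] lemma innerL_apply (x u : E₀) : innerL x u = (inner ℝ x u : ℝ) := rfl

/-- The bilinear form `L x u = (1/Λ²) ω x ω u + (1/Λ) ⟪x,u⟫` as a CLM. -/
noncomputable def fermatL (ω : E₀ →L[ℝ] ℝ) (Λ : ℝ) : E₀ →L[ℝ] E₀ →L[ℝ] ℝ :=
  (1 / Λ ^ 2) • (ω.smulRight ω) + (1 / Λ) • innerL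

lemma fermatL_apply (ω : E₀ →L[ℝ] ℝ) (Λ : ℝ) (x u : E₀) :
    fermatL ω Λ x u = (1 / Λ ^ 2) * (ω x * ω u) + (1 / Λ) * (inner ℝ x u : ℝ) := by
  simp [fermatL]

lemma fermatL_symm (ω : E₀ →L[ℝ] ℝ) (Λ : ℝ) (x u : E₀) :
    fermatL ω Λ x u = fermatL ω Λ u x := by
  simp only [fermatL_apply, real_inner_comm]
  ring

lemma fermatL_self (ω : E₀ →L[ℝ] ℝ) (Λ : ℝ) (x : E₀) :
    fermatL ω Λ x x = (1 / Λ ^ 2) * (ω x) ^ 2 + (1 / Λ) * (inner ℝ x x : ℝ) := by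
  rw [fermatL_apply]; ring

lemma fermatL_self_nonneg (ω : E₀ →L[ℝ] ℝ) {Λ : ℝ} (hΛ : 0 < Λ) (x : E₀) :
    0 ≤ fermatL ω Λ x x := by
  rw [fermatL_self]
  have h1 : 0 ≤ (1 / Λ ^ 2) * (ω x) ^ 2 := by positivity
  have h2 : 0 ≤ (1 / Λ) * (inner ℝ x x : ℝ) := by
    have := real_inner_self_nonneg (x := x)
    positivity
  linarith

lemma fermatL_self_pos (ω : E₀ →L[ℝ] ℝ) {Λ : ℝ} (hΛ : 0 < Λ) {x : E₀} (hx : x ≠ 0) :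
    0 < fermatL ω Λ x x := by
  rw [fermatL_self]
  have h1 : 0 ≤ (1 / Λ ^ 2) * (ω x) ^ 2 := by positivity
  have h2 : 0 < (inner ℝ x x : ℝ) := by
    rw [real_inner_self_eq_norm_sq]
    have hn : 0 < ‖x‖ := norm_pos_iff.2 hx
    positivity
  have : 0 < (1 / Λ) * (inner ℝ x x : ℝ) := by positivity
  linarith

/-- `s x = √(L x x)`. -/
noncomputable def fermatS (ω : E₀ →L[ℝ] ℝ) (Λ : ℝ) (x : E₀) : ℝ :=
  Real.sqrt (fermatL ω Λ x x)

lemma fermatS_pos (ω : E₀ →L[ℝ] ℝ) {Λ : ℝ} (hΛ : 0 < Λ) {x : E₀} (hx : x ≠ 0) :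
    0 < fermatS ω Λ x :=
  Real.sqrt_pos.2 (fermatL_self_pos ω hΛ hx)

lemma fermatS_sq (ω : E₀ →L[ℝ] ℝ) {Λ : ℝ} (hΛ : 0 < Λ) (x : E₀) :
    (fermatS ω Λ x) ^ 2 = fermatL ω Λ x x :=
  Real.sq_sqrt (fermatL_self_nonneg ω hΛ x)

/-- `e x = (1/Λ) ω x + s x`, i.e. the Fermat metric itself. -/
noncomputable def fermatE (ω : E₀ →L[ℝ] ℝ) (Λ : ℝ) (x : E₀) : ℝ :=
  (1 / Λ) * ω x + fermatS ω Λ x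

lemma fermatE_pos (ω : E₀ →L[ℝ] ℝ) {Λ : ℝ} (hΛ : 0 < Λ) {x : E₀} (hx : x ≠ 0) :
    0 < fermatE ω Λ x := by
  have hs := fermatS_pos ω hΛ hx
  have hsq := fermatS_sq ω hΛ x
  rw [fermatL_self] at hsq
  have h2 : 0 < (inner ℝ x x : ℝ) := by
    rw [real_inner_self_eq_norm_sq]
    have hn : 0 < ‖x‖ := norm_pos_iff.2 hx
    positivity
  have h3 : ((1 / Λ) * ω x) ^ 2 < (fermatS ω Λ x) ^ 2 := by
    rw [hsq]
    have h4 : 0 < (1 / Λ) * (inner ℝ x x : ℝ) := by positivity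
    have hid : ((1 / Λ) * ω x) ^ 2 = 1 / Λ ^ 2 * ω x ^ 2 := by ring
    linarith
  rw [fermatE]
  nlinarith [sq_nonneg ((1 / Λ) * ω x + fermatS ω Λ x)]

/-- `A x = (1/Λ) ω + s(x)⁻¹ L x` — the derivative of `e` at `x`. -/
noncomputable def fermatA (ω : E₀ →L[ℝ] ℝ) (Λ : ℝ) (x : E₀) : E₀ →L[ℝ] ℝ :=
  (1 / Λ) • ω + (fermatS ω Λ x)⁻¹ • fermatL ω Λ x

/-- `D x = e x • A x` — the derivative of `e²/2` at `x`. -/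
noncomputable def fermatD (ω : E₀ →L[ℝ] ℝ) (Λ : ℝ) (x : E₀) : E₀ →L[ℝ] ℝ :=
  fermatE ω Λ x • fermatA ω Λ x

/-- The second derivative of `e²/2` at `v`. -/
noncomputable def fermatH (ω : E₀ →L[ℝ] ℝ) (Λ : ℝ) (v : E₀) : E₀ →L[ℝ] E₀ →L[ℝ] ℝ :=
  fermatE ω Λ v • ((fermatS ω Λ v)⁻¹ • fermatL ω Λ +
      ((-(fermatS ω Λ v ^ 2)⁻¹) • ((fermatS ω Λ v)⁻¹ • fermatL ω Λ v)).smulRight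
        (fermatL ω Λ v)) +
    (fermatA ω Λ v).smulRight (fermatA ω Λ v)

lemma hasFDerivAt_fermatQ (ω : E₀ →L[ℝ] ℝ) (Λ : ℝ) (x : E₀) :
    HasFDerivAt (fun y : E₀ => fermatL ω Λ y y) ((2 : ℝ) • fermatL ω Λ x) x := by
  have hfun : (fun y : E₀ => fermatL ω Λ y y)
      = fun y => (1 / Λ ^ 2) * (ω y * ω y) + (1 / Λ) * (inner ℝ y y : ℝ) := by
    funext y; rw [fermatL_apply]
  rw [hfun]
  have h1 : HasFDerivAt (fun y : E₀ => (1 / Λ ^ 2) * (ω y * ω y))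
      ((1 / Λ ^ 2) • (ω x • ω + ω x • ω)) x :=
    (ω.hasFDerivAt.mul ω.hasFDerivAt).const_mul _
  have h2 : HasFDerivAt (fun y : E₀ => (1 / Λ) * (inner ℝ y y : ℝ))
      ((1 / Λ) • ((fderivInnerCLM ℝ (x, x)).comp ((ContinuousLinearMap.id ℝ E₀).prod
        (ContinuousLinearMap.id ℝ E₀)))) x := by
    have := ((hasFDerivAt_id x).inner ℝ (hasFDerivAt_id x)).const_mul (1 / Λ)
    simpa using this
  have := h1.add h2
  refine this.congr_fderiv ?_
  ext u
  simp [fermatL_apply, fderivInnerCLM_apply, real_inner_comm]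
  ring

lemma hasFDerivAt_fermatS (ω : E₀ →L[ℝ] ℝ) {Λ : ℝ} (hΛ : 0 < Λ) {x : E₀} (hx : x ≠ 0) :
    HasFDerivAt (fermatS ω Λ) ((fermatS ω Λ x)⁻¹ • fermatL ω Λ x) x := by
  have hQpos := fermatL_self_pos ω hΛ hx
  have hs := fermatS_pos ω hΛ hx
  have h : HasFDerivAt (fun y : E₀ => Real.sqrt (fermatL ω Λ y y))
      ((1 / (2 * Real.sqrt (fermatL ω Λ x x))) • ((2 : ℝ) • fermatL ω Λ x)) x :=
    HasDerivAt.comp_hasFDerivAt (f := fun y : E₀ => fermatL ω Λ y y) x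
      (Real.hasStrictDerivAt_sqrt hQpos.ne').hasDerivAt (hasFDerivAt_fermatQ ω Λ x)
  have heq : (1 / (2 * Real.sqrt (fermatL ω Λ x x))) • ((2 : ℝ) • fermatL ω Λ x)
      = (fermatS ω Λ x)⁻¹ • fermatL ω Λ x := by
    rw [smul_smul]
    congr 1
    have : Real.sqrt (fermatL ω Λ x x) = fermatS ω Λ x := rfl
    rw [this]
    field_simp
  rw [heq] at h
  exact h

lemma hasFDerivAt_fermatE (ω : E₀ →L[ℝ] ℝ) {Λ : ℝ} (hΛ : 0 < Λ) {x : E₀} (hx : x ≠ 0) :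
    HasFDerivAt (fermatE ω Λ) (fermatA ω Λ x) x :=
  (ω.hasFDerivAt.const_mul (1 / Λ)).add (hasFDerivAt_fermatS ω hΛ hx)

lemma hasFDerivAt_fermatG (ω : E₀ →L[ℝ] ℝ) {Λ : ℝ} (hΛ : 0 < Λ) {x : E₀} (hx : x ≠ 0) :
    HasFDerivAt (fun y => fermatE ω Λ y ^ 2 / 2) (fermatD ω Λ x) x := by
  have hfun : (fun y => fermatE ω Λ y ^ 2 / 2)
      = fun y => (1 / 2 : ℝ) * (fermatE ω Λ y * fermatE ω Λ y) := by
    funext y; ring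
  rw [hfun]
  have h := ((hasFDerivAt_fermatE ω hΛ hx).mul (hasFDerivAt_fermatE ω hΛ hx)).const_mul
    (1 / 2 : ℝ)
  have heq : (1 / 2 : ℝ) • (fermatE ω Λ x • fermatA ω Λ x + fermatE ω Λ x • fermatA ω Λ x)
      = fermatD ω Λ x := by
    rw [fermatD]
    ext u
    simp
    ring
  rw [heq] at h
  exact h

lemma hasFDerivAt_fermatD (ω : E₀ →L[ℝ] ℝ) {Λ : ℝ} (hΛ : 0 < Λ) {v : E₀} (hv : v ≠ 0) :
    HasFDerivAt (fermatD ω Λ) (fermatH ω Λ v) v := by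
  have hs := fermatS_pos ω hΛ hv
  have hsinv : HasFDerivAt (fun y => (fermatS ω Λ y)⁻¹)
      ((-(fermatS ω Λ v ^ 2)⁻¹) • ((fermatS ω Λ v)⁻¹ • fermatL ω Λ v)) v :=
    HasDerivAt.comp_hasFDerivAt (f := fermatS ω Λ) v
      (hasDerivAt_inv hs.ne') (hasFDerivAt_fermatS ω hΛ hv)
  have hL : HasFDerivAt (fun y => fermatL ω Λ y) (fermatL ω Λ) v :=
    (fermatL ω Λ).hasFDerivAt
  have hsmul := hsinv.smul hL
  have hA' := hsmul.const_add ((1 / Λ) • ω)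
  have hD := (hasFDerivAt_fermatE ω hΛ hv).smul hA'
  exact hD

lemma fermatH_apply (ω : E₀ →L[ℝ] ℝ) {Λ : ℝ} (hΛ : 0 < Λ) {v : E₀} (hv : v ≠ 0) (u : E₀) :
    fermatH ω Λ v u u =
      (fermatE ω Λ v / fermatS ω Λ v) *
          (fermatL ω Λ u u - (fermatL ω Λ v u) ^ 2 / (fermatS ω Λ v) ^ 2) +
        ((1 / Λ) * ω u + fermatL ω Λ v u / fermatS ω Λ v) ^ 2 := by
  have hs := fermatS_pos ω hΛ hv
  simp only [fermatH, fermatA, fermatE, ContinuousLinearMap.add_apply,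
    ContinuousLinearMap.smul_apply, ContinuousLinearMap.smulRight_apply, smul_eq_mul,
    ContinuousLinearMap.coe_smul', Pi.smul_apply, one_div]
  field_simp
  ring

lemma fermatH_pos (ω : E₀ →L[ℝ] ℝ) {Λ : ℝ} (hΛ : 0 < Λ) {v u : E₀} (hv : v ≠ 0)
    (hu : u ≠ 0) : 0 < fermatH ω Λ v u u := by
  have hs := fermatS_pos ω hΛ hv
  have he := fermatE_pos ω hΛ hv
  rw [fermatH_apply ω hΛ hv u]
  set s := fermatS ω Λ v with hsdef
  set lvu := fermatL ω Λ v u with hlvudef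
  set luu := fermatL ω Λ u u with hluudef
  set w := u - (lvu / s ^ 2) • v with hwdef
  have hsv : s ^ 2 = fermatL ω Λ v v := fermatS_sq ω hΛ v
  have hLw : fermatL ω Λ w w = luu - lvu ^ 2 / s ^ 2 := by
    rw [hwdef]
    simp only [map_sub, map_smul, ContinuousLinearMap.sub_apply, smul_eq_mul,
      ContinuousLinearMap.smul_apply, ContinuousLinearMap.coe_sub', Pi.sub_apply,
      ContinuousLinearMap.coe_smul', Pi.smul_apply]
    rw [fermatL_symm ω Λ u v, ← hlvudef, ← hluudef, ← hsv]
    field_simp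
    ring
  rcases eq_or_ne w 0 with h0 | h0
  · have hc : u = (lvu / s ^ 2) • v := by
      have := sub_eq_zero.1 (hwdef ▸ h0 : u - (lvu / s ^ 2) • v = 0)
      exact this
    have hcne : lvu / s ^ 2 ≠ 0 := by
      intro h
      exact hu (by rw [hc, h, zero_smul])
    have hzero : luu - lvu ^ 2 / s ^ 2 = 0 := by
      rw [← hLw, h0]
      simp
    have hωu : ω u = (lvu / s ^ 2) * ω v := by rw [hc]; simp
    have hlvuc : lvu = (lvu / s ^ 2) * fermatL ω Λ v v := by
      conv_lhs => rw [hlvudef, hc]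
      simp
    have hterm : (1 / Λ) * ω u + lvu / s =
        (lvu / s ^ 2) * ((1 / Λ) * ω v + s) := by
      rw [hωu]
      conv_lhs => rw [hlvuc, ← hsv]
      field_simp
    rw [hzero, hterm]
    have hE : (0 : ℝ) < (1 / Λ) * ω v + s := he
    have : (lvu / s ^ 2) * ((1 / Λ) * ω v + s) ≠ 0 := mul_ne_zero hcne hE.ne'
    have hsq : 0 < ((lvu / s ^ 2) * ((1 / Λ) * ω v + s)) ^ 2 := by positivity
    linarith [mul_nonneg (div_pos he hs).le (le_of_eq rfl : (0:ℝ) ≤ 0)]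
  · have hw0 : 0 < fermatL ω Λ w w := fermatL_self_pos ω hΛ h0
    have h1 : 0 < (fermatE ω Λ v / s) * (luu - lvu ^ 2 / s ^ 2) := by
      rw [← hLw]
      exact mul_pos (div_pos he hs) hw0
    nlinarith [sq_nonneg ((1 / Λ) * ω u + lvu / s)]

end FermatAux

/-- The Fermat (Randers) metric
`F(v) = (1/Λ) ω(v) + √((1/Λ²) ω(v)² + (1/Λ) ⟪v,v⟫)` is `C²` away from `0`, and for
every `v ≠ 0` its fundamental tensor (the second Fréchet derivative of `F²/2` at `v`)
is positive definite; i.e. `F` is a Minkowski norm. -/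
theorem stmt16 {E₀ : Type*} [NormedAddCommGroup E₀] [InnerProductSpace ℝ E₀]
    [FiniteDimensional ℝ E₀]
    (ω : E₀ →L[ℝ] ℝ) (Λ : ℝ) (hΛ : 0 < Λ)
    (F : E₀ → ℝ)
    (hF : ∀ v : E₀, F v = (1 / Λ) * ω v +
      Real.sqrt ((1 / Λ ^ 2) * (ω v) ^ 2 + (1 / Λ) * (inner ℝ v v : ℝ))) :
    ContDiffOn ℝ 2 F {(0 : E₀)}ᶜ ∧
      ∀ v : E₀, v ≠ 0 → ∀ u : E₀, u ≠ 0 →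
        0 < fderiv ℝ (fderiv ℝ (fun x => (F x) ^ 2 / 2)) v u u := by
  have hFE : F = fermatE ω Λ := by
    funext x
    rw [hF x, fermatE, fermatS, fermatL_self]
  constructor
  · intro x hx
    have hxne : x ≠ 0 := by simpa using hx
    apply ContDiffAt.contDiffWithinAt
    rw [hFE]
    have h1 : ContDiff ℝ 2 (fun y : E₀ => (1 / Λ) * ω y) := contDiff_const.mul ω.contDiff
    have hQ : ContDiff ℝ 2 (fun y : E₀ => fermatL ω Λ y y) := by
      have : (fun y : E₀ => fermatL ω Λ y y)
          = fun y => (1 / Λ ^ 2) * (ω y * ω y) + (1 / Λ) * (inner ℝ y y : ℝ) := by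
        funext y; rw [fermatL_apply]
      rw [this]
      exact (contDiff_const.mul (ω.contDiff.mul ω.contDiff)).add
        (contDiff_const.mul (contDiff_id.inner ℝ contDiff_id))
    have h2 : ContDiffAt ℝ 2 (fermatS ω Λ) x := by
      have hQx : fermatL ω Λ x x ≠ 0 := (fermatL_self_pos ω hΛ hxne).ne'
      exact ContDiffAt.comp (f := fun y : E₀ => fermatL ω Λ y y) x (Real.contDiffAt_sqrt hQx) hQ.contDiffAt
    exact (h1.contDiffAt.add h2)
  · intro v hv u hu
    have hGfun : (fun x => (F x) ^ 2 / 2) = fun y => fermatE ω Λ y ^ 2 / 2 := by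
      rw [hFE]
    have hev : fderiv ℝ (fun x => (F x) ^ 2 / 2) =ᶠ[nhds v] fermatD ω Λ := by
      filter_upwards [isOpen_compl_singleton.mem_nhds
        (by simpa using hv : v ∈ ({(0 : E₀)}ᶜ : Set E₀))] with x hx
      have hxne : x ≠ 0 := by simpa using hx
      rw [hGfun]
      exact (hasFDerivAt_fermatG ω hΛ hxne).fderiv
    have hkey : fderiv ℝ (fderiv ℝ (fun x => (F x) ^ 2 / 2)) v = fermatH ω Λ v := by
      rw [hev.fderiv_eq]
      exact (hasFDerivAt_fermatD ω hΛ hv).fderiv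
    rw [hkey]
    exact fermatH_pos ω hΛ hv hu
end

section
/- Let (E₀, ⟪·,·⟫) be a finite-dimensional real inner product space, ω a continuous linear functional on E₀, and Λ > 0 a real number. Let F be the Fermat metric F(v) = (1/Λ) ω(v) + sqrt((1/Λ²) ω(v)² + (1/Λ) ⟪v,v⟫), and let W ∈ E₀ be the vector with ⟪W, x⟫ = −ω(x) for all x. Then the Zermelo navigation description holds: for every v ∈ E₀, F(v) = 1 if and only if ⟪v − W, v − W⟫ = Λ + ⟪W, W⟫; equivalently, the indicatrix {F = 1} is the unit sphere of the rescaled inner product g_R = ⟪·,·⟫ / (Λ + ⟪W, W⟫) translated by the wind vector W. -/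
/-- Zermelo navigation description of the Fermat (Randers) metric: with `W` the
vector representing `−ω`, one has `F(v) = 1` if and only if
`⟪v − W, v − W⟫ = Λ + ⟪W, W⟫`; i.e. the indicatrix `{F = 1}` is the unit sphere of
the rescaled inner product `⟪·,·⟫/(Λ + ⟪W,W⟫)` translated by the wind vector `W`. -/
theorem stmt17 {E₀ : Type*} [NormedAddCommGroup E₀] [InnerProductSpace ℝ E₀]
    [FiniteDimensional ℝ E₀]
    (ω : E₀ →L[ℝ] ℝ) (Λ : ℝ) (hΛ : 0 < Λ)
    (F : E₀ → ℝ)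
    (hF : ∀ v : E₀, F v = (1 / Λ) * ω v +
      Real.sqrt ((1 / Λ ^ 2) * (ω v) ^ 2 + (1 / Λ) * (inner ℝ v v : ℝ)))
    (W : E₀) (hW : ∀ x : E₀, (inner ℝ W x : ℝ) = -ω x) :
    ∀ v : E₀, F v = 1 ↔ (inner ℝ (v - W) (v - W) : ℝ) = Λ + (inner ℝ W W : ℝ) := by
  intro v
  set a := (ω v : ℝ) with ha
  set t := (inner ℝ v v : ℝ) with htd
  have ht : (0:ℝ) ≤ t := real_inner_self_nonneg
  have h1 : (inner ℝ v W : ℝ) = -a := by rw [real_inner_comm]; exact hW v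
  have hexp : (inner ℝ (v - W) (v - W) : ℝ) = t + 2 * a + (inner ℝ W W : ℝ) := by
    rw [real_inner_sub_sub_self, h1]; ring
  have harg : (0:ℝ) ≤ (1 / Λ ^ 2) * a ^ 2 + (1 / Λ) * t := by positivity
  rw [hF v, hexp, ← ha, ← htd]
  constructor
  · intro h
    have hs : Real.sqrt ((1 / Λ ^ 2) * a ^ 2 + (1 / Λ) * t) = 1 - (1 / Λ) * a := by
      linarith
    have hs2 : (1 / Λ ^ 2) * a ^ 2 + (1 / Λ) * t = (1 - (1 / Λ) * a) ^ 2 := by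
      rw [← hs, Real.sq_sqrt harg]
    have hΛ0 : Λ ≠ 0 := ne_of_gt hΛ
    have key : t * Λ ^ 4 = (Λ - 2 * a) * Λ ^ 4 := by
      field_simp at hs2
      linear_combination Λ ^ 3 * hs2
    have : t = Λ - 2 * a := mul_right_cancel₀ (pow_ne_zero 4 hΛ0) key
    linarith
  · intro h
    have hta : t + 2 * a = Λ := by linarith
    have hnn : 0 ≤ 1 - (1 / Λ) * a := by
      have : a ≤ Λ / 2 := by linarith
      rw [sub_nonneg]
      rw [div_mul_eq_mul_div, div_le_one hΛ]
      linarith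
    have hs2 : (1 / Λ ^ 2) * a ^ 2 + (1 / Λ) * t = (1 - (1 / Λ) * a) ^ 2 := by
      have hΛ0 : Λ ≠ 0 := ne_of_gt hΛ
      field_simp
      linear_combination Λ * hta
    rw [hs2, Real.sqrt_sq hnn]
    ring
end
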